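/- arXiv:math/0210282 — 10 statements merged into one kernel-verified Lean document; each statement's English description precedes it below -/
import Mathlib

section
/- Let α ≥ 1 be a real number and let S be a set of positive integers of polynomial density α. Then the series ∑_{p ∈ P(S)} p^{-1/α} diverges; that is, the partial sums N ↦ ∑_{p ∈ P(S), p ≤ N} p^{-1/α} tend to infinity as N → ∞. -/
/-- The set of prime factors of elements of `S`. -/
def PrimeFactors (S : Set ℕ) : Set ℕ :=
  {p | p.Prime ∧ ∃ s ∈ S, p ∣ s}

/-- `S` is a set of positive integers of polynomial density `α`:
`0 ∉ S` and there is `K > 0` with `card {s ∈ S : s ≤ n} ≥ K * n^(1/α)` for all `n ≥ 1`. -/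
def HasPolyDensity (S : Set ℕ) (α : ℝ) : Prop :=
  0 ∉ S ∧ ∃ K : ℝ, 0 < K ∧ ∀ n : ℕ, 0 < n →
    K * (n : ℝ) ^ (1 / α) ≤ ({s ∈ S | s ≤ n}).ncard

/-!
Write `β = 1 / α`. If `∑_{p ∈ P(S)} p^{-β}` converged, so would the Euler product
`∏_{p ∈ P(S)} (1 - p^{-β})⁻¹`, because `(1 - x)⁻¹ ≤ exp (x / (1 - 2^{-β}))` for `0 ≤ x ≤ 2^{-β}`.
That product dominates `∑ m^{-β}` over all `m` with prime factors in `P(S)`, in particular over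
`S`. But once `∑_{s ∈ S} s^{-β}` converges, `#{s ∈ S : s ≤ n} = o(n^β)`: outside a finite set
the terms have sum below `ε`, while each `s ≤ n` contributes at least `n^{-β}`. This contradicts
the density bound `#{s ∈ S : s ≤ n} ≥ K n^β`.
-/

open Filter Finset Asymptotics

noncomputable def natRpowHom (r : ℝ) : ℕ →* ℝ where
  toFun m := (m : ℝ) ^ r
  map_one' := by simp
  map_mul' m n := by
    push_cast
    exact Real.mul_rpow m.cast_nonneg n.cast_nonneg

lemma natRpowHom_prime_le {r : ℝ} (hr : r ≤ 0) {p : ℕ} (hp : p.Prime) :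
    natRpowHom r p ≤ 2 ^ r :=
  Real.rpow_le_rpow_of_nonpos two_pos (by exact_mod_cast hp.two_le) hr

lemma inv_one_sub_le_exp {x c : ℝ} (hx : 0 ≤ x) (hxc : x ≤ c) (hc : c < 1) :
    (1 - x)⁻¹ ≤ Real.exp (x / (1 - c)) := by
  have h1x : 0 < 1 - x := by linarith
  calc (1 - x)⁻¹ = x / (1 - x) + 1 := by field_simp; ring
    _ ≤ x / (1 - c) + 1 := by gcongr
    _ ≤ Real.exp (x / (1 - c)) := Real.add_one_le_exp _

section CompletelyMultiplicative

variable {f : ℕ →* ℝ} {c : ℝ}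

lemma sum_le_prod_inv_one_sub_of_subset_factoredNumbers (hf : ∀ n, 0 ≤ f n)
    (hf1 : ∀ p, p.Prime → f p < 1) {F v : Finset ℕ} (hv : ↑v ⊆ Nat.factoredNumbers F) :
    ∑ m ∈ v, f m ≤ ∏ p ∈ F with p.Prime, (1 - f p)⁻¹ := by
  have hEuler :
      HasSum ((Nat.factoredNumbers F).indicator f) (∏ p ∈ F with p.Prime, (1 - f p)⁻¹) :=
    hasSum_subtype_iff_indicator.1
      (EulerProduct.summable_and_hasSum_factoredNumbers_prod_filter_prime_geometric
        (fun hp => (Real.norm_of_nonneg (hf _)).trans_lt (hf1 _ hp)) F).2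
  calc ∑ m ∈ v, f m = ∑ m ∈ v, (Nat.factoredNumbers F).indicator f m :=
        sum_congr rfl fun m hm => (Set.indicator_of_mem (hv hm) f).symm
    _ ≤ _ := sum_le_hasSum v (fun m _ => Set.indicator_nonneg (fun n _ => hf n) m) hEuler

lemma prod_inv_one_sub_le_exp_sum (hf : ∀ n, 0 ≤ f n) (hc : c < 1)
    (hfc : ∀ p, p.Prime → f p ≤ c) (F : Finset ℕ) :
    ∏ p ∈ F with p.Prime, (1 - f p)⁻¹ ≤ Real.exp ((∑ p ∈ F with p.Prime, f p) / (1 - c)) := by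
  rw [sum_div, Real.exp_sum]
  refine prod_le_prod (fun p hp => ?_) fun p hp => ?_
  · have := hfc p (mem_filter.1 hp).2
    exact inv_nonneg.2 (by linarith)
  · exact inv_one_sub_le_exp (hf p) (hfc p (mem_filter.1 hp).2) hc

theorem summable_indicator_primeFactors_subset (hf : ∀ n, 0 ≤ f n) (hc : c < 1)
    (hfc : ∀ p, p.Prime → f p ≤ c) {P : Set ℕ} (hP : Summable (P.indicator f)) :
    Summable ({m | m ≠ 0 ∧ ↑m.primeFactors ⊆ P}.indicator f) := by
  classical
  set Q : Set ℕ := {m | m ≠ 0 ∧ ↑m.primeFactors ⊆ P}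
  have hPf : ∀ n, 0 ≤ P.indicator f n := Set.indicator_nonneg fun n _ => hf n
  refine summable_of_sum_le (c := Real.exp ((∑' p, P.indicator f p) / (1 - c)))
    (Set.indicator_nonneg fun n _ => hf n) fun u => ?_
  set v := u.filter (· ∈ Q)
  set F := v.biUnion Nat.primeFactors
  have hvF : ↑v ⊆ Nat.factoredNumbers F := by
    intro m hm
    refine Nat.mem_factoredNumbers.2 ⟨(mem_filter.1 hm).2.1, fun p hp => ?_⟩
    exact mem_biUnion.2 ⟨m, hm, Nat.mem_primeFactors_iff_mem_primeFactorsList.2 hp⟩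
  have hFP : ∀ p ∈ F, p ∈ P := by
    intro p hp
    obtain ⟨m, hm, hpm⟩ := mem_biUnion.1 hp
    exact (mem_filter.1 hm).2.2 hpm
  calc ∑ m ∈ u, Q.indicator f m = ∑ m ∈ v, f m := sum_indicator_eq_sum_filter ..
    _ ≤ ∏ p ∈ F with p.Prime, (1 - f p)⁻¹ :=
        sum_le_prod_inv_one_sub_of_subset_factoredNumbers hf
          (fun p hp => (hfc p hp).trans_lt hc) hvF
    _ ≤ Real.exp ((∑ p ∈ F with p.Prime, f p) / (1 - c)) :=
        prod_inv_one_sub_le_exp_sum hf hc hfc F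
    _ ≤ Real.exp ((∑' p, P.indicator f p) / (1 - c)) := by
        refine Real.exp_le_exp.2 (div_le_div_of_nonneg_right ?_ (by linarith))
        calc ∑ p ∈ F with p.Prime, f p ≤ ∑ p ∈ F, f p :=
              sum_le_sum_of_subset_of_nonneg (filter_subset _ _) fun n _ _ => hf n
          _ = ∑ p ∈ F, P.indicator f p :=
              sum_congr rfl fun p hp => (Set.indicator_of_mem (hFP p hp) f).symm
          _ ≤ ∑' p, P.indicator f p := hP.sum_le_tsum F fun n _ => hPf n

end CompletelyMultiplicative

theorem isLittleO_ncard_of_summable_rpow {S : Set ℕ} {β : ℝ} (hβ : 0 < β)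
    (hS : Summable (S.indicator fun s : ℕ => (s : ℝ) ^ (-β))) :
    (fun n : ℕ => ({s ∈ S | s ≤ n}.ncard : ℝ)) =o[atTop] fun n => (n : ℝ) ^ β := by
  classical
  refine isLittleO_iff.2 fun ε hε => ?_
  obtain ⟨s₀, hs₀⟩ := hS.vanishing (Iio_mem_nhds (half_pos hε))
  -- `0` joins the exceptional set because the junk value `0 ^ (-β) = 0` gives it no weight.
  set s₁ := insert 0 s₀
  have htend : Tendsto (fun n : ℕ => (n : ℝ) ^ β) atTop atTop :=
    (tendsto_rpow_atTop hβ).comp tendsto_natCast_atTop_atTop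
  filter_upwards [htend.eventually_ge_atTop (2 * #s₁ / ε), eventually_gt_atTop 0]
    with n hn hn0
  set A := (Iic n).filter (· ∈ S)
  set t := A.filter (· ∉ s₁)
  have hA : {s ∈ S | s ≤ n}.ncard = #A := by
    rw [← Set.ncard_coe_finset]
    congr 1
    ext s
    simp [A, and_comm]
  have hpow : 0 < (n : ℝ) ^ β := by positivity
  have ht : (#t : ℝ) ≤ ε / 2 * (n : ℝ) ^ β := by
    have hsum : ∑ s ∈ t, S.indicator (fun s : ℕ => (s : ℝ) ^ (-β)) s < ε / 2 :=
      hs₀ t <| disjoint_left.2 fun s hs h => (mem_filter.1 hs).2 (mem_insert_of_mem h)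
    have hlow :
        #t • (n : ℝ) ^ (-β) ≤ ∑ s ∈ t, S.indicator (fun s : ℕ => (s : ℝ) ^ (-β)) s := by
      refine card_nsmul_le_sum _ _ _ fun s hs => ?_
      simp only [t, A, s₁, mem_filter, mem_Iic, mem_insert, not_or] at hs
      rw [Set.indicator_of_mem hs.1.2]
      exact Real.rpow_le_rpow_of_nonpos (Nat.cast_pos.2 (Nat.pos_of_ne_zero hs.2.1))
        (by exact_mod_cast hs.1.1) (by linarith)
    rw [nsmul_eq_mul, Real.rpow_neg (Nat.cast_nonneg n)] at hlow
    calc (#t : ℝ) = #t * ((n : ℝ) ^ β)⁻¹ * (n : ℝ) ^ β := by field_simp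
      _ ≤ ε / 2 * (n : ℝ) ^ β := by gcongr; linarith
  have hsplit : #A ≤ #s₁ + #t := by
    rw [← card_filter_add_card_filter_not (s := A) (· ∈ s₁)]
    gcongr
    exact fun s hs => (mem_filter.1 hs).2
  have hsplit' : (#A : ℝ) ≤ #s₁ + #t := by exact_mod_cast hsplit
  rw [div_le_iff₀ hε] at hn
  rw [hA, Real.norm_of_nonneg (by positivity), Real.norm_of_nonneg hpow.le]
  linarith

theorem HasPolyDensity.not_summable_rpow {S : Set ℕ} {α : ℝ} (hS : HasPolyDensity S α)
    (hα : 0 < α) : ¬ Summable (S.indicator fun s : ℕ => (s : ℝ) ^ (-(1 / α))) := by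
  intro hsum
  obtain ⟨-, K, hK, hcard⟩ := hS
  obtain ⟨n, hsmall, hn⟩ := (((isLittleO_ncard_of_summable_rpow (by positivity) hsum).def
    (half_pos hK)).and (eventually_gt_atTop 0)).exists
  have hpow : 0 < (n : ℝ) ^ (1 / α) := by positivity
  rw [Real.norm_of_nonneg (by positivity), Real.norm_of_nonneg hpow.le] at hsmall
  nlinarith [hcard n hn]

theorem sum_primeFactors_rpow_diverges (α : ℝ) (hα : 1 ≤ α) (S : Set ℕ)
    (hS : HasPolyDensity S α) :
    Filter.Tendsto
      (fun N : ℕ => ∑ p ∈ Finset.range (N + 1),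
        Set.indicator (PrimeFactors S) (fun p : ℕ => (p : ℝ) ^ (-(1 / α))) p)
      Filter.atTop Filter.atTop := by
  have hα₀ : 0 < α := by linarith
  set f := natRpowHom (-(1 / α))
  have hf : ∀ n, 0 ≤ f n := fun n => Real.rpow_nonneg n.cast_nonneg _
  refine ((not_summable_iff_tendsto_nat_atTop_of_nonneg
    (Set.indicator_nonneg fun n _ => hf n)).1 fun hP => ?_).comp (tendsto_add_atTop_nat 1)
  have hSQ : S ⊆ {m | m ≠ 0 ∧ ↑m.primeFactors ⊆ PrimeFactors S} := fun s hs =>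
    ⟨fun h => hS.1 (h ▸ hs), fun p hp =>
      ⟨Nat.prime_of_mem_primeFactors hp, s, hs, Nat.dvd_of_mem_primeFactors hp⟩⟩
  have hQ := summable_indicator_primeFactors_subset hf
    (Real.rpow_lt_one_of_one_lt_of_neg one_lt_two (by simp; positivity))
    (fun p hp => natRpowHom_prime_le (by simp; positivity) hp) hP
  exact hS.not_summable_rpow hα₀ <| hQ.of_nonneg_of_le (Set.indicator_nonneg fun n _ => hf n)
    (Set.indicator_le_indicator_of_subset hSQ fun n => hf n)
end

section
/- Let α ≥ 1 be a real number and let S be a set of positive integers of polynomial density α. Then the series ∑_{n=1}^∞ π_S(n)/n^{1+1/α} diverges to infinity. -/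
/-- `π_S(n)`: the number of elements of `PrimeFactors S` that are `≤ n`. -/
noncomputable def primesCount (S : Set ℕ) (n : ℕ) : ℕ :=
  ({p ∈ PrimeFactors S | p ≤ n}).ncard

open Finset Filter

open Classical in
/-- The primes in `PrimeFactors S` up to `N`, as a `Finset`. -/
noncomputable def auxQ (S : Set ℕ) (N : ℕ) : Finset ℕ :=
  (Finset.Icc 1 N).filter fun p => p ∈ PrimeFactors S

open Classical in
/-- The elements of `S` up to `N`, as a `Finset`. -/
noncomputable def auxS (S : Set ℕ) (N : ℕ) : Finset ℕ :=
  (Finset.Icc 1 N).filter fun s => s ∈ S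

/-- `∑_{p ∈ P(S), p ≤ N} p^{-β}`. -/
noncomputable def auxF (S : Set ℕ) (β : ℝ) (N : ℕ) : ℝ :=
  ∑ p ∈ auxQ S N, (p : ℝ) ^ (-β)

/-- `∑_{s ∈ S, s ≤ N} s^{-β}`. -/
noncomputable def auxG (S : Set ℕ) (β : ℝ) (N : ℕ) : ℝ :=
  ∑ s ∈ auxS S N, (s : ℝ) ^ (-β)

lemma mem_auxQ {S : Set ℕ} {N p : ℕ} :
    p ∈ auxQ S N ↔ (1 ≤ p ∧ p ≤ N) ∧ p ∈ PrimeFactors S := by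
  simp [auxQ]

lemma mem_auxS {S : Set ℕ} {N s : ℕ} :
    s ∈ auxS S N ↔ (1 ≤ s ∧ s ≤ N) ∧ s ∈ S := by
  simp [auxS]

lemma auxQ_mono {S : Set ℕ} {M N : ℕ} (h : M ≤ N) : auxQ S M ⊆ auxQ S N := by
  intro p hp
  rw [mem_auxQ] at hp ⊢
  exact ⟨⟨hp.1.1, hp.1.2.trans h⟩, hp.2⟩

lemma auxS_mono {S : Set ℕ} {M N : ℕ} (h : M ≤ N) : auxS S M ⊆ auxS S N := by
  intro p hp
  rw [mem_auxS] at hp ⊢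
  exact ⟨⟨hp.1.1, hp.1.2.trans h⟩, hp.2⟩

lemma primesCount_eq (S : Set ℕ) (n : ℕ) : primesCount S n = (auxQ S n).card := by
  have : {p ∈ PrimeFactors S | p ≤ n} = ↑(auxQ S n) := by
    ext p
    simp only [Set.mem_setOf_eq, Finset.mem_coe, mem_auxQ]
    constructor
    · rintro ⟨hp, hpn⟩
      exact ⟨⟨hp.1.one_lt.le, hpn⟩, hp⟩
    · rintro ⟨⟨_, hpn⟩, hp⟩
      exact ⟨hp, hpn⟩
  rw [primesCount, this, Set.ncard_coe_finset]

lemma card_auxS_eq {S : Set ℕ} (hS0 : 0 ∉ S) (n : ℕ) :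
    ({s ∈ S | s ≤ n}).ncard = (auxS S n).card := by
  have : {s ∈ S | s ≤ n} = ↑(auxS S n) := by
    ext s
    simp only [Set.mem_setOf_eq, Finset.mem_coe, mem_auxS]
    constructor
    · rintro ⟨hs, hsn⟩
      have : s ≠ 0 := fun h => hS0 (h ▸ hs)
      exact ⟨⟨Nat.one_le_iff_ne_zero.2 this, hsn⟩, hs⟩
    · rintro ⟨⟨_, hsn⟩, hs⟩
      exact ⟨hs, hsn⟩
  rw [this, Set.ncard_coe_finset]

/-- Euler-product style bound: `∑_{s ∈ S, s ≤ N} s^{-β} ≤ ∏_{p ∈ P(S), p ≤ N} (1-p^{-β})⁻¹`. -/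
lemma auxG_le_prod {S : Set ℕ} {β : ℝ} (hβ : 0 < β) (N : ℕ) :
    auxG S β N ≤ ∏ p ∈ auxQ S N, (1 - (p : ℝ) ^ (-β))⁻¹ := by
  classical
  set Q := auxQ S N with hQ
  have hsupp : ∀ s ∈ auxS S N, s.factorization.support ⊆ Q := by
    intro s hs p hp
    rw [mem_auxS] at hs
    rw [Nat.support_factorization] at hp
    have hps : p ∣ s := Nat.dvd_of_mem_primeFactors hp
    have hpp : p.Prime := Nat.prime_of_mem_primeFactors hp
    rw [hQ, mem_auxQ]
    exact ⟨⟨hpp.one_lt.le, (Nat.le_of_dvd (by omega) hps).trans hs.1.2⟩,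
      ⟨hpp, s, hs.2, hps⟩⟩
  set φ : ℕ → (∀ a ∈ Q, ℕ) := fun s => fun p _ => s.factorization p with hφ
  set F : (∀ a ∈ Q, ℕ) → ℝ := fun g => ∏ x ∈ Q.attach, (((x : ℕ) : ℝ) ^ (-β)) ^ (g x.1 x.2)
    with hF
  have hkey : ∀ s ∈ auxS S N, (s : ℝ) ^ (-β) = F (φ s) := by
    intro s hs
    have hs1 : 1 ≤ s := (mem_auxS.1 hs).1.1
    have hs0 : s ≠ 0 := by omega
    have hfact : ∏ p ∈ Q, p ^ (s.factorization p) = s := by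
      conv_rhs => rw [← Nat.factorization_prod_pow_eq_self hs0]
      rw [Finsupp.prod]
      exact (Finset.prod_subset (hsupp s hs) (fun p _ hnp => by
        rw [Finsupp.notMem_support_iff.1 hnp, pow_zero])).symm
    rw [hF]
    simp only [hφ]
    rw [Finset.prod_attach Q (fun p => (((p : ℕ) : ℝ) ^ (-β)) ^ (s.factorization p))]
    have hterm : ∀ p ∈ Q, ((p : ℝ) ^ (-β)) ^ (s.factorization p)
        = (((p : ℝ)) ^ (s.factorization p : ℕ)) ^ (-β) := by
      intro p hp
      have hp0 : (0:ℝ) ≤ p := Nat.cast_nonneg p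
      rw [← Real.rpow_natCast ((p:ℝ) ^ (-β)) _, ← Real.rpow_mul hp0, mul_comm,
        Real.rpow_mul hp0, Real.rpow_natCast]
    rw [Finset.prod_congr rfl hterm,
      Real.finset_prod_rpow _ _ (fun i _ => by positivity) _]
    congr 1
    exact_mod_cast hfact.symm
  have hmem : ∀ s ∈ auxS S N, φ s ∈ Q.pi (fun _ => Finset.range (N + 1)) := by
    intro s hs
    rw [Finset.mem_pi]
    intro p hp
    have hs1 : 1 ≤ s := (mem_auxS.1 hs).1.1
    have hsN : s ≤ N := (mem_auxS.1 hs).1.2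
    have := Nat.factorization_lt p (show s ≠ 0 by omega)
    simp only [hφ, Finset.mem_range]
    omega
  have hinj : Set.InjOn φ ↑(auxS S N) := by
    intro s hs t ht h
    simp only [Finset.mem_coe] at hs ht
    have hs0 : s ≠ 0 := by have := (mem_auxS.1 hs).1.1; omega
    have ht0 : t ≠ 0 := by have := (mem_auxS.1 ht).1.1; omega
    refine Nat.factorization_inj hs0 ht0 (Finsupp.ext fun p => ?_)
    by_cases hp : p ∈ Q
    · exact congrFun (congrFun h p) hp
    · rw [Finsupp.notMem_support_iff.1 (fun hmem => hp (hsupp s hs hmem)),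
        Finsupp.notMem_support_iff.1 (fun hmem => hp (hsupp t ht hmem))]
  calc auxG S β N = ∑ s ∈ auxS S N, F (φ s) := Finset.sum_congr rfl hkey
    _ = ∑ g ∈ (auxS S N).image φ, F g :=
        (Finset.sum_image (fun s hs t ht h =>
          hinj (Finset.mem_coe.2 hs) (Finset.mem_coe.2 ht) h)).symm
    _ ≤ ∑ g ∈ Q.pi (fun _ => Finset.range (N + 1)), F g := by
        apply Finset.sum_le_sum_of_subset_of_nonneg
        · intro g hg
          obtain ⟨s, hs, rfl⟩ := Finset.mem_image.1 hg
          exact hmem s hs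
        · intro g _ _
          apply Finset.prod_nonneg
          intro x _
          positivity
    _ = ∏ p ∈ Q, ∑ k ∈ Finset.range (N + 1), ((p : ℝ) ^ (-β)) ^ k :=
        (Finset.prod_sum Q (fun _ => Finset.range (N + 1))
          (fun p k => ((p:ℝ) ^ (-β)) ^ k)).symm
    _ ≤ ∏ p ∈ Q, (1 - (p : ℝ) ^ (-β))⁻¹ := by
        apply Finset.prod_le_prod
        · intro p hp
          apply Finset.sum_nonneg
          intro k _
          positivity
        · intro p hp
          have hp2 : 2 ≤ p := (mem_auxQ.1 hp).2.1.two_le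
          have hp1 : (1:ℝ) < p := by exact_mod_cast hp2.trans_lt' one_lt_two
          have hx0 : (0:ℝ) ≤ (p:ℝ) ^ (-β) := by positivity
          have hx1 : (p:ℝ) ^ (-β) < 1 :=
            Real.rpow_lt_one_of_one_lt_of_neg hp1 (by linarith)
          calc ∑ k ∈ Finset.range (N + 1), ((p : ℝ) ^ (-β)) ^ k
              ≤ ∑' k : ℕ, ((p : ℝ) ^ (-β)) ^ k :=
                Summable.sum_le_tsum _ (fun k _ => by positivity)
                  (summable_geometric_of_lt_one hx0 hx1)
            _ = (1 - (p : ℝ) ^ (-β))⁻¹ := tsum_geometric_of_lt_one hx0 hx1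

lemma factor_le_exp {β : ℝ} (hβ : 0 < β) {p : ℕ} (hp : 2 ≤ p) :
    (1 - (p : ℝ) ^ (-β))⁻¹ ≤ Real.exp ((1 - (2:ℝ) ^ (-β))⁻¹ * (p:ℝ) ^ (-β)) := by
  set x : ℝ := (p : ℝ) ^ (-β) with hx
  set δ : ℝ := 1 - (2:ℝ) ^ (-β) with hδ
  have hp0 : (0:ℝ) < p := by positivity
  have hx0 : 0 < x := Real.rpow_pos_of_pos hp0 _
  have hxle : x ≤ (2:ℝ) ^ (-β) := by
    rw [hx, Real.rpow_neg (by norm_num : (0:ℝ) ≤ 2), Real.rpow_neg hp0.le]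
    apply inv_anti₀ (Real.rpow_pos_of_pos (by norm_num) _)
    exact Real.rpow_le_rpow (by norm_num) (by exact_mod_cast hp) hβ.le
  have h2 : (2:ℝ) ^ (-β) < 1 :=
    Real.rpow_lt_one_of_one_lt_of_neg (by norm_num) (by linarith)
  have hδ0 : 0 < δ := by rw [hδ]; linarith
  have hx1 : 0 < 1 - x := by linarith
  have step1 : (1 - x)⁻¹ ≤ 1 + x / δ := by
    rw [inv_le_iff_one_le_mul₀ hx1]
    have : 0 ≤ (x / δ) * ((1 - δ) - x) := by
      apply mul_nonneg (by positivity)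
      have : x ≤ 1 - δ := by rw [hδ]; linarith
      linarith
    have hδδ : δ * (x / δ) = x := by field_simp
    nlinarith [hδδ]
  have step2 : 1 + x / δ ≤ Real.exp (δ⁻¹ * x) := by
    have h1 : x / δ = δ⁻¹ * x := by rw [div_eq_mul_inv, mul_comm]
    linarith [Real.add_one_le_exp (δ⁻¹ * x)]
  exact step1.trans step2

lemma prod_le_exp {S : Set ℕ} {β : ℝ} (hβ : 0 < β) (N : ℕ) :
    ∏ p ∈ auxQ S N, (1 - (p : ℝ) ^ (-β))⁻¹ ≤
      Real.exp ((1 - (2:ℝ) ^ (-β))⁻¹ * auxF S β N) := by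
  have hprime : ∀ p ∈ auxQ S N, 2 ≤ p := fun p hp => (mem_auxQ.1 hp).2.1.two_le
  calc ∏ p ∈ auxQ S N, (1 - (p : ℝ) ^ (-β))⁻¹
      ≤ ∏ p ∈ auxQ S N, Real.exp ((1 - (2:ℝ) ^ (-β))⁻¹ * (p:ℝ) ^ (-β)) := by
        apply Finset.prod_le_prod
        · intro p hp
          have hp2 : 2 ≤ p := hprime p hp
          have hp0 : (0:ℝ) < p := by positivity
          have hx : (p:ℝ) ^ (-β) < 1 :=
            Real.rpow_lt_one_of_one_lt_of_neg
              (by exact_mod_cast hp2.trans_lt' one_lt_two) (by linarith)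
          exact inv_nonneg.2 (by linarith)
        · intro p hp; exact factor_le_exp hβ (hprime p hp)
    _ = Real.exp ((1 - (2:ℝ) ^ (-β))⁻¹ * auxF S β N) := by
        rw [← Real.exp_sum, auxF, Finset.mul_sum]

lemma auxG_unbounded {S : Set ℕ} {α : ℝ} (hα : 1 ≤ α) (hS : HasPolyDensity S α) :
    ∀ C : ℝ, ∃ N : ℕ, C ≤ auxG S (1/α) N := by
  obtain ⟨hS0, K, hK, hcount⟩ := hS
  have hα0 : 0 < α := lt_of_lt_of_le one_pos hα
  set β := 1/α with hβdef
  have hβ : 0 < β := by positivity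
  have hcount' : ∀ n : ℕ, 0 < n → K * (n:ℝ) ^ β ≤ ((auxS S n).card : ℝ) := by
    intro n hn
    have := hcount n hn
    rwa [card_auxS_eq hS0] at this
  have block : ∀ M : ℕ, ∃ N : ℕ, M < N ∧ auxG S β M + K/2 ≤ auxG S β N := by
    intro M
    have htend : Tendsto (fun n : ℕ => K * (n:ℝ) ^ β) atTop atTop := by
      apply Tendsto.const_mul_atTop hK
      exact (tendsto_rpow_atTop hβ).comp tendsto_natCast_atTop_atTop
    obtain ⟨N, hN1, hN2⟩ :=
      ((htend.eventually_ge_atTop (2 * (M:ℝ))).and (eventually_gt_atTop M)).exists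
    refine ⟨N, hN2, ?_⟩
    have hNpos : 0 < N := lt_of_le_of_lt (Nat.zero_le M) hN2
    have hNr : (0:ℝ) < N := by exact_mod_cast hNpos
    have hsub : auxS S M ⊆ auxS S N := auxS_mono hN2.le
    have hsplit : auxG S β N = auxG S β M + ∑ s ∈ auxS S N \ auxS S M, (s:ℝ)^(-β) := by
      rw [auxG, auxG, ← Finset.sum_sdiff hsub]; ring
    have hterm : ∀ s ∈ auxS S N \ auxS S M, ((N:ℝ))^(-β) ≤ (s:ℝ)^(-β) := by
      intro s hsd
      have hs := (Finset.mem_sdiff.1 hsd).1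
      have hs1 : 1 ≤ s := (mem_auxS.1 hs).1.1
      have hsN : s ≤ N := (mem_auxS.1 hs).1.2
      have hs0 : (0:ℝ) < s := by exact_mod_cast hs1
      rw [Real.rpow_neg hs0.le, Real.rpow_neg hNr.le]
      exact inv_anti₀ (Real.rpow_pos_of_pos hs0 _)
        (Real.rpow_le_rpow hs0.le (by exact_mod_cast hsN) hβ.le)
    have hcard : K * (N:ℝ)^β - M ≤ ((auxS S N \ auxS S M).card : ℝ) := by
      rw [Finset.card_sdiff_of_subset hsub]
      have h1 : K * (N:ℝ)^β ≤ ((auxS S N).card : ℝ) := hcount' N hNpos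
      have h2 : (auxS S M).card ≤ M := by
        calc (auxS S M).card ≤ (Finset.Icc 1 M).card :=
              Finset.card_le_card (fun x hx => Finset.mem_Icc.2 (mem_auxS.1 hx).1)
          _ = M := by rw [Nat.card_Icc]; omega
      have h3 : (auxS S M).card ≤ (auxS S N).card := Finset.card_le_card hsub
      rw [Nat.cast_sub h3]
      have h2' : ((auxS S M).card : ℝ) ≤ M := by exact_mod_cast h2
      linarith
    have hsum : ((auxS S N \ auxS S M).card : ℝ) * (N:ℝ)^(-β)
        ≤ ∑ s ∈ auxS S N \ auxS S M, (s:ℝ)^(-β) := by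
      calc ((auxS S N \ auxS S M).card : ℝ) * (N:ℝ)^(-β)
          = ∑ _s ∈ auxS S N \ auxS S M, (N:ℝ)^(-β) := by
            rw [Finset.sum_const, nsmul_eq_mul]
        _ ≤ ∑ s ∈ auxS S N \ auxS S M, (s:ℝ)^(-β) := Finset.sum_le_sum hterm
    have hrpow : (N:ℝ)^β * (N:ℝ)^(-β) = 1 := by
      rw [← Real.rpow_add hNr]; simp
    have hNβ0 : 0 < (N:ℝ)^(-β) := Real.rpow_pos_of_pos hNr _
    have hlast : K/2 ≤ ((auxS S N \ auxS S M).card : ℝ) * (N:ℝ)^(-β) := by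
      have h4 : (K * (N:ℝ)^β - M) * (N:ℝ)^(-β)
          ≤ ((auxS S N \ auxS S M).card : ℝ) * (N:ℝ)^(-β) :=
        mul_le_mul_of_nonneg_right hcard hNβ0.le
      have h5 : (K * (N:ℝ)^β - M) * (N:ℝ)^(-β) = K - M * (N:ℝ)^(-β) := by
        rw [sub_mul, mul_assoc, hrpow]; ring
      have h6 : (M:ℝ) * (N:ℝ)^(-β) ≤ K/2 := by
        nlinarith [hrpow, hNβ0, hN1]
      linarith
    linarith
  have iter : ∀ j : ℕ, ∃ N : ℕ, (j : ℝ) * (K/2) ≤ auxG S β N := by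
    intro j
    induction j with
    | zero =>
      refine ⟨0, ?_⟩
      have h0 : auxS S 0 = ∅ :=
        Finset.eq_empty_iff_forall_notMem.2 (fun s hs => by
          have := (mem_auxS.1 hs).1; omega)
      simp [auxG, h0]
    | succ j ih =>
      obtain ⟨N, hN⟩ := ih
      obtain ⟨N', hlt, hN'⟩ := block N
      exact ⟨N', by push_cast; linarith⟩
  intro C
  obtain ⟨j, hj⟩ := exists_nat_ge (C / (K/2))
  obtain ⟨N, hN⟩ := iter j
  refine ⟨N, ?_⟩
  have : C ≤ (j:ℝ) * (K/2) := by
    rw [div_le_iff₀ (by linarith)] at hj; linarith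
  linarith

lemma auxF_tendsto {S : Set ℕ} {α : ℝ} (hα : 1 ≤ α) (hS : HasPolyDensity S α) :
    Tendsto (auxF S (1/α)) atTop atTop := by
  have hα0 : 0 < α := lt_of_lt_of_le one_pos hα
  set β := 1/α with hβdef
  have hβ : 0 < β := by positivity
  have hmono : Monotone (auxF S β) := fun M N h =>
    Finset.sum_le_sum_of_subset_of_nonneg (auxQ_mono h) (fun p _ _ => by positivity)
  apply tendsto_atTop_atTop_of_monotone hmono
  intro B
  set δ : ℝ := 1 - (2:ℝ)^(-β) with hδ
  have h2 : (2:ℝ) ^ (-β) < 1 :=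
    Real.rpow_lt_one_of_one_lt_of_neg (by norm_num) (by linarith)
  have hδ0 : 0 < δ := by rw [hδ]; linarith
  obtain ⟨N, hN⟩ := auxG_unbounded hα hS (Real.exp (δ⁻¹ * B) + 1)
  refine ⟨N, ?_⟩
  by_contra h
  push_neg at h
  have h1 : auxG S β N ≤ Real.exp (δ⁻¹ * auxF S β N) :=
    (auxG_le_prod hβ N).trans (prod_le_exp hβ N)
  have h2' : Real.exp (δ⁻¹ * auxF S β N) ≤ Real.exp (δ⁻¹ * B) :=
    Real.exp_le_exp.2 (mul_le_mul_of_nonneg_left h.le (inv_nonneg.2 hδ0.le))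
  linarith

theorem sum_primesCount_div_rpow_diverges (α : ℝ) (hα : 1 ≤ α) (S : Set ℕ)
    (hS : HasPolyDensity S α) :
    Filter.Tendsto
      (fun N : ℕ => ∑ n ∈ Finset.Icc 1 N,
        (primesCount S n : ℝ) / (n : ℝ) ^ (1 + 1 / α))
      Filter.atTop Filter.atTop := by
  classical
  have hα0 : 0 < α := lt_of_lt_of_le one_pos hα
  set β := 1/α with hβdef
  have hβ0 : 0 < β := by positivity
  have hβ1 : β ≤ 1 := by rw [hβdef, div_le_one hα0]; exact hα
  have key : ∀ N : ℕ, (1/4) * auxF S β (N/2) ≤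
      ∑ n ∈ Finset.Icc 1 N, (primesCount S n : ℝ) / (n:ℝ)^(1+β) := by
    intro N
    have step1 : ∀ n ∈ Finset.Icc 1 N, (primesCount S n : ℝ) / (n:ℝ)^(1+β)
        = ∑ p ∈ auxQ S N, (if p ≤ n then ((n:ℝ)^(1+β))⁻¹ else 0) := by
      intro n hn
      rw [Finset.mem_Icc] at hn
      have hQn : auxQ S n = (auxQ S N).filter (fun p => p ≤ n) := by
        ext p
        simp only [mem_auxQ, Finset.mem_filter]
        constructor
        · rintro ⟨⟨h1, h2⟩, h3⟩; exact ⟨⟨⟨h1, h2.trans hn.2⟩, h3⟩, h2⟩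
        · rintro ⟨⟨⟨h1, _⟩, h3⟩, h2⟩; exact ⟨⟨h1, h2⟩, h3⟩
      rw [primesCount_eq, hQn, ← Finset.sum_filter, Finset.sum_const, nsmul_eq_mul,
        div_eq_mul_inv]
    rw [Finset.sum_congr rfl step1, Finset.sum_comm]
    have inner_bd : ∀ p ∈ auxQ S (N/2),
        (1/4) * (p:ℝ)^(-β) ≤ ∑ n ∈ Finset.Icc 1 N, (if p ≤ n then ((n:ℝ)^(1+β))⁻¹ else 0) := by
      intro p hp
      obtain ⟨⟨hp1, hpN2⟩, hpPF⟩ := mem_auxQ.1 hp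
      have hp0 : (0:ℝ) < p := by exact_mod_cast hp1
      have h2p : 2 * p ≤ N := by
        have := Nat.div_mul_le_self N 2
        omega
      have hsub2 : Finset.Icc p (2*p) ⊆ (Finset.Icc 1 N).filter (fun n => p ≤ n) := by
        intro n hn
        rw [Finset.mem_Icc] at hn
        rw [Finset.mem_filter, Finset.mem_Icc]
        omega
      have e0 : ∑ n ∈ Finset.Icc 1 N, (if p ≤ n then ((n:ℝ)^(1+β))⁻¹ else 0)
          = ∑ n ∈ (Finset.Icc 1 N).filter (fun n => p ≤ n), ((n:ℝ)^(1+β))⁻¹ :=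
        (Finset.sum_filter _ _).symm
      have e1 : ∑ n ∈ Finset.Icc p (2*p), ((n:ℝ)^(1+β))⁻¹
          ≤ ∑ n ∈ (Finset.Icc 1 N).filter (fun n => p ≤ n), ((n:ℝ)^(1+β))⁻¹ := by
        apply Finset.sum_le_sum_of_subset_of_nonneg hsub2
        intro n hn _
        positivity
      have hcard : (Finset.Icc p (2*p)).card = p + 1 := by
        rw [Nat.card_Icc]; omega
      have e2 : ((p:ℝ) + 1) * (((2*p:ℕ):ℝ)^(1+β))⁻¹ ≤
          ∑ n ∈ Finset.Icc p (2*p), ((n:ℝ)^(1+β))⁻¹ := by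
        have hterm : ∀ n ∈ Finset.Icc p (2*p), (((2*p:ℕ):ℝ)^(1+β))⁻¹ ≤ ((n:ℝ)^(1+β))⁻¹ := by
          intro n hn
          rw [Finset.mem_Icc] at hn
          have hn0 : (0:ℝ) < n := by
            have : 1 ≤ n := le_trans hp1 hn.1
            exact_mod_cast this
          apply inv_anti₀ (Real.rpow_pos_of_pos hn0 _)
          exact Real.rpow_le_rpow hn0.le (by exact_mod_cast hn.2) (by linarith)
        calc ((p:ℝ) + 1) * (((2*p:ℕ):ℝ)^(1+β))⁻¹
            = ∑ _n ∈ Finset.Icc p (2*p), (((2*p:ℕ):ℝ)^(1+β))⁻¹ := by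
              rw [Finset.sum_const, hcard, nsmul_eq_mul]; push_cast; ring
          _ ≤ ∑ n ∈ Finset.Icc p (2*p), ((n:ℝ)^(1+β))⁻¹ := Finset.sum_le_sum hterm
      have hpβ : (0:ℝ) < (p:ℝ)^β := Real.rpow_pos_of_pos hp0 _
      have h2pr : (0:ℝ) < ((2*p:ℕ):ℝ) := by push_cast; linarith
      have hbig : (0:ℝ) < ((2*p:ℕ):ℝ)^(1+β) := Real.rpow_pos_of_pos h2pr _
      have eb : ((2*p:ℕ):ℝ)^(1+β) ≤ 4 * ((p:ℝ) * (p:ℝ)^β) := by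
        push_cast
        rw [Real.mul_rpow (by norm_num) hp0.le, Real.rpow_add hp0, Real.rpow_one]
        have h4 : (2:ℝ)^(1+β) ≤ 4 := by
          calc (2:ℝ)^(1+β) ≤ (2:ℝ)^((2:ℕ):ℝ) :=
                Real.rpow_le_rpow_of_exponent_le (by norm_num) (by push_cast; linarith)
            _ = 4 := by rw [Real.rpow_natCast]; norm_num
        nlinarith [mul_pos hp0 hpβ]
      have e3 : (1/4) * (p:ℝ)^(-β) ≤ ((p:ℝ) + 1) * (((2*p:ℕ):ℝ)^(1+β))⁻¹ := by
        rw [Real.rpow_neg hp0.le]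
        have hkey : (1/4) * ((p:ℝ)^β)⁻¹ * ((2*p:ℕ):ℝ)^(1+β) ≤ (p:ℝ) + 1 := by
          calc (1/4) * ((p:ℝ)^β)⁻¹ * ((2*p:ℕ):ℝ)^(1+β)
              ≤ (1/4) * ((p:ℝ)^β)⁻¹ * (4 * ((p:ℝ) * (p:ℝ)^β)) := by
                apply mul_le_mul_of_nonneg_left eb (by positivity)
            _ = (p:ℝ) := by field_simp
            _ ≤ (p:ℝ) + 1 := by linarith
        calc (1/4) * ((p:ℝ)^β)⁻¹
            = ((1/4) * ((p:ℝ)^β)⁻¹ * ((2*p:ℕ):ℝ)^(1+β)) * (((2*p:ℕ):ℝ)^(1+β))⁻¹ := by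
              field_simp
          _ ≤ ((p:ℝ) + 1) * (((2*p:ℕ):ℝ)^(1+β))⁻¹ :=
              mul_le_mul_of_nonneg_right hkey (inv_nonneg.2 hbig.le)
      rw [e0]
      linarith
    calc (1/4) * auxF S β (N/2) = ∑ p ∈ auxQ S (N/2), (1/4) * (p:ℝ)^(-β) := by
          rw [auxF, Finset.mul_sum]
      _ ≤ ∑ p ∈ auxQ S (N/2),
            ∑ n ∈ Finset.Icc 1 N, (if p ≤ n then ((n:ℝ)^(1+β))⁻¹ else 0) :=
          Finset.sum_le_sum inner_bd
      _ ≤ ∑ p ∈ auxQ S N,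
            ∑ n ∈ Finset.Icc 1 N, (if p ≤ n then ((n:ℝ)^(1+β))⁻¹ else 0) := by
          apply Finset.sum_le_sum_of_subset_of_nonneg (auxQ_mono (Nat.div_le_self N 2))
          intro p _ _
          apply Finset.sum_nonneg
          intro n _
          split
          · positivity
          · exact le_rfl
  have hdiv : Tendsto (fun N : ℕ => N / 2) atTop atTop :=
    tendsto_atTop_atTop_of_monotone (fun a b h => Nat.div_le_div_right h)
      (fun b => ⟨2 * b, by omega⟩)
  have hF : Tendsto (fun N : ℕ => (1/4 : ℝ) * auxF S β (N/2)) atTop atTop :=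
    Tendsto.const_mul_atTop (by norm_num) ((auxF_tendsto hα hS).comp hdiv)
  exact tendsto_atTop_mono key hF
end

section
/- Let α ≥ 1 be a real number, let S be a set of positive integers of polynomial density α, and let (a_n)_{n≥1} be a sequence of positive real numbers with ∑_{n=1}^∞ a_n < ∞. Then π_S(n)/n^{1+1/α} ≥ a_n for infinitely many positive integers n. -/
open Finset



lemma geom_tail {x : ℝ} (h0 : 0 ≤ x) (h1 : x < 1) (n : ℕ) :
    ∑ e ∈ Finset.range n, x ^ e ≤ (1 - x)⁻¹ := by
  calc ∑ e ∈ Finset.range n, x ^ e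
      ≤ ∑' e : ℕ, x ^ e :=
        Summable.sum_le_tsum _ (fun i _ => pow_nonneg h0 i) (summable_geometric_of_lt_one h0 h1)
    _ = (1 - x)⁻¹ := tsum_geometric_of_lt_one h0 h1

lemma smooth_sum_le (β : ℝ) (hβ : 0 < β) (n : ℕ) (G : Finset ℕ) (hG : ∀ p ∈ G, p.Prime) :
    ∑ s ∈ (Finset.range (n+1)).filter (fun s => s ≠ 0 ∧ s.primeFactors ⊆ G), ((s:ℝ))^(-β)
      ≤ ∏ p ∈ G, (1 - (p:ℝ)^(-β))⁻¹ := by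
  induction G using Finset.induction_on with
  | empty =>
    simp only [Finset.prod_empty]
    have hsub : (Finset.range (n+1)).filter
        (fun s => s ≠ 0 ∧ s.primeFactors ⊆ (∅ : Finset ℕ)) ⊆ {1} := by
      intro s hs
      simp only [Finset.mem_filter, Finset.subset_empty, Nat.primeFactors_eq_empty] at hs
      rcases hs.2.2 with h | h
      · exact absurd h hs.2.1
      · simp [h]
    calc ∑ s ∈ (Finset.range (n+1)).filter
            (fun s => s ≠ 0 ∧ s.primeFactors ⊆ (∅ : Finset ℕ)), ((s:ℝ))^(-β)
        ≤ ∑ s ∈ ({1} : Finset ℕ), ((s:ℝ))^(-β) :=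
          Finset.sum_le_sum_of_subset_of_nonneg hsub
            (fun i _ _ => Real.rpow_nonneg (Nat.cast_nonneg i) _)
      _ = 1 := by simp
  | @insert p G hpG ih =>
    have hp : p.Prime := hG p (Finset.mem_insert_self p G)
    have hG' : ∀ q ∈ G, q.Prime := fun q hq => hG q (Finset.mem_insert_of_mem hq)
    have hp0 : (0:ℝ) < (p:ℝ) := by exact_mod_cast hp.pos
    set x : ℝ := (p:ℝ)^(-β) with hxdef
    have hx0 : 0 ≤ x := Real.rpow_nonneg hp0.le _
    have hx1 : x < 1 := Real.rpow_lt_one_of_one_lt_of_neg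
      (by exact_mod_cast hp.one_lt) (neg_neg_of_pos hβ)
    set A := (Finset.range (n+1)).filter
      (fun s => s ≠ 0 ∧ s.primeFactors ⊆ insert p G) with hAdef
    set A' := (Finset.range (n+1)).filter
      (fun s => s ≠ 0 ∧ s.primeFactors ⊆ G) with hA'def
    set P' := (Finset.range (n+1)).image (p ^ ·) with hP'def
    have hmemA : ∀ s ∈ A, s ≠ 0 ∧ s ≤ n ∧ s.primeFactors ⊆ insert p G := by
      intro s hs
      simp only [hAdef, Finset.mem_filter, Finset.mem_range] at hs
      exact ⟨hs.2.1, Nat.lt_succ_iff.mp hs.1, hs.2.2⟩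
    have himg : ∀ s ∈ A, (ordProj[p] s, ordCompl[p] s) ∈ P' ×ˢ A' := by
      intro s hs
      obtain ⟨hs0, hsn, hsub⟩ := hmemA s hs
      have hproj_le : ordProj[p] s ≤ s := Nat.ordProj_le p hs0
      have he : s.factorization p ≤ n := by
        have h1 : s.factorization p < 2 ^ (s.factorization p) := Nat.lt_two_pow_self
        have h2 : 2 ^ (s.factorization p) ≤ p ^ (s.factorization p) :=
          Nat.pow_le_pow_left hp.two_le _
        omega
      refine Finset.mem_product.mpr ⟨?_, ?_⟩
      · exact Finset.mem_image.mpr ⟨s.factorization p,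
          Finset.mem_range.mpr (Nat.lt_succ_of_le he), rfl⟩
      · have hc0 : ordCompl[p] s ≠ 0 := (Nat.ordCompl_pos p hs0).ne'
        have hcle : ordCompl[p] s ≤ n :=
          le_trans (Nat.le_of_dvd (Nat.pos_of_ne_zero hs0) (Nat.ordCompl_dvd s p)) hsn
        refine Finset.mem_filter.mpr ⟨Finset.mem_range.mpr (Nat.lt_succ_of_le hcle),
          hc0, ?_⟩
        intro q hq
        have hq' := Nat.mem_primeFactors.mp hq
        have hqs : q ∈ s.primeFactors := Nat.mem_primeFactors.mpr
          ⟨hq'.1, hq'.2.1.trans (Nat.ordCompl_dvd s p), hs0⟩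
        have hqp : q ≠ p := by
          rintro rfl
          exact Nat.not_dvd_ordCompl hp hs0 hq'.2.1
        rcases Finset.mem_insert.mp (hsub hqs) with h | h
        · exact absurd h hqp
        · exact h
    have hinj : ∀ s ∈ A, ∀ t ∈ A,
        (ordProj[p] s, ordCompl[p] s) = (ordProj[p] t, ordCompl[p] t) → s = t := by
      intro s hs t ht h
      have h1 := congrArg Prod.fst h
      have h2 := congrArg Prod.snd h
      simp only at h1 h2
      calc s = ordProj[p] s * ordCompl[p] s := (Nat.ordProj_mul_ordCompl_eq_self s p).symm
        _ = ordProj[p] t * ordCompl[p] t := by rw [h2, h1]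
        _ = t := Nat.ordProj_mul_ordCompl_eq_self t p
    have hterm : ∀ s ∈ A, ((s:ℝ))^(-β)
        = ((ordProj[p] s : ℕ):ℝ)^(-β) * ((ordCompl[p] s : ℕ):ℝ)^(-β) := by
      intro s hs
      rw [← Real.mul_rpow (Nat.cast_nonneg _) (Nat.cast_nonneg _), ← Nat.cast_mul,
        Nat.ordProj_mul_ordCompl_eq_self]
    have key : ∑ s ∈ A, ((s:ℝ))^(-β)
        ≤ (∑ u ∈ P', ((u:ℝ))^(-β)) * (∑ v ∈ A', ((v:ℝ))^(-β)) := by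
      calc ∑ s ∈ A, ((s:ℝ))^(-β)
          = ∑ s ∈ A, ((ordProj[p] s : ℕ):ℝ)^(-β) * ((ordCompl[p] s : ℕ):ℝ)^(-β) :=
            Finset.sum_congr rfl hterm
        _ = ∑ uv ∈ A.image (fun s => (ordProj[p] s, ordCompl[p] s)),
              ((uv.1:ℝ))^(-β) * ((uv.2:ℝ))^(-β) := by rw [Finset.sum_image hinj]
        _ ≤ ∑ uv ∈ P' ×ˢ A', ((uv.1:ℝ))^(-β) * ((uv.2:ℝ))^(-β) :=
            Finset.sum_le_sum_of_subset_of_nonneg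
              (Finset.image_subset_iff.mpr himg)
              (fun i _ _ => mul_nonneg (Real.rpow_nonneg (Nat.cast_nonneg _) _)
                (Real.rpow_nonneg (Nat.cast_nonneg _) _))
        _ = (∑ u ∈ P', ((u:ℝ))^(-β)) * (∑ v ∈ A', ((v:ℝ))^(-β)) := by
            rw [Finset.sum_mul_sum]
            rw [Finset.sum_product]
    have hgeom : ∑ u ∈ P', ((u:ℝ))^(-β) ≤ (1-x)⁻¹ := by
      have himg2 : ∑ u ∈ P', ((u:ℝ))^(-β) = ∑ e ∈ Finset.range (n+1), x ^ e := by
        rw [hP'def, Finset.sum_image (fun a _ b _ h =>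
          Nat.pow_right_injective hp.two_le h)]
        refine Finset.sum_congr rfl (fun e _ => ?_)
        rw [hxdef, Nat.cast_pow, ← Real.rpow_natCast ((p:ℝ)) e,
          ← Real.rpow_natCast ((p:ℝ)^(-β)) e, ← Real.rpow_mul hp0.le,
          ← Real.rpow_mul hp0.le, mul_comm]
      rw [himg2]
      exact geom_tail hx0 hx1 (n+1)
    have hA'nonneg : (0:ℝ) ≤ ∑ v ∈ A', ((v:ℝ))^(-β) :=
      Finset.sum_nonneg (fun v _ => Real.rpow_nonneg (Nat.cast_nonneg v) _)
    calc ∑ s ∈ A, ((s:ℝ))^(-β)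
        ≤ (∑ u ∈ P', ((u:ℝ))^(-β)) * (∑ v ∈ A', ((v:ℝ))^(-β)) := key
      _ ≤ (1-x)⁻¹ * ∏ q ∈ G, (1 - (q:ℝ)^(-β))⁻¹ := by
          apply mul_le_mul hgeom (ih hG') hA'nonneg
          rw [inv_nonneg]
          linarith
      _ = ∏ q ∈ insert p G, (1 - (q:ℝ)^(-β))⁻¹ := by rw [Finset.prod_insert hpG]


lemma my_one_le_prod {s : Finset ℕ} {g : ℕ → ℝ} (h : ∀ i ∈ s, 1 ≤ g i) :
    1 ≤ ∏ i ∈ s, g i := by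
  induction s using Finset.induction_on with
  | empty => simp
  | @insert a s ha ih =>
    rw [Finset.prod_insert ha]
    have h1 := h a (Finset.mem_insert_self a s)
    have h2 : 1 ≤ ∏ i ∈ s, g i := ih (fun i hi => h i (Finset.mem_insert_of_mem hi))
    nlinarith

lemma my_prod_le_prod_subset {s t : Finset ℕ} {g : ℕ → ℝ} (hst : s ⊆ t)
    (h : ∀ i ∈ t, 1 ≤ g i) : ∏ i ∈ s, g i ≤ ∏ i ∈ t, g i := by
  rw [← Finset.prod_sdiff hst]
  have h1 : 1 ≤ ∏ i ∈ t \ s, g i :=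
    my_one_le_prod (fun i hi => h i (Finset.mem_sdiff.mp hi).1)
  have h2 : 0 ≤ ∏ i ∈ s, g i :=
    le_trans zero_le_one (my_one_le_prod (fun i hi => h i (hst hi)))
  nlinarith



theorem primesCount_ge_frequently (α : ℝ) (hα : 1 ≤ α) (S : Set ℕ)
    (hS : HasPolyDensity S α) (a : ℕ → ℝ) (ha : ∀ n : ℕ, 0 < n → 0 < a n)
    (hsum : Summable a) :
    {n : ℕ | 0 < n ∧ a n ≤ (primesCount S n : ℝ) / (n : ℝ) ^ (1 + 1 / α)}.Infinite := by
  classical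
  by_contra hcon
  rw [Set.not_infinite] at hcon
  obtain ⟨N, hN⟩ := hcon.bddAbove
  obtain ⟨hS0, K, hK, hKd⟩ := hS
  set β : ℝ := 1/α with hβdef
  have hα0 : (0:ℝ) < α := lt_of_lt_of_le one_pos hα
  have hβ : 0 < β := by rw [hβdef]; positivity
  have hβ1 : β ≤ 1 := by rw [hβdef, div_le_one hα0]; exact hα
  have hlt : ∀ n : ℕ, N < n → (primesCount S n : ℝ) * (n:ℝ)^(-(1+β)) < a n := by
    intro n hn
    have hn0 : 0 < n := lt_of_le_of_lt (Nat.zero_le N) hn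
    by_contra hcon2
    push_neg at hcon2
    have hmem : n ∈ {n : ℕ | 0 < n ∧ a n ≤ (primesCount S n : ℝ) / (n : ℝ) ^ (1 + β)} := by
      refine ⟨hn0, ?_⟩
      rwa [div_eq_mul_inv, ← Real.rpow_neg (Nat.cast_nonneg n)]
    exact absurd (hN hmem) (not_le.mpr hn)
  have hπcard : ∀ n : ℕ,
      primesCount S n = ((Finset.range (n+1)).filter (fun p => p ∈ PrimeFactors S)).card := by
    intro n
    rw [primesCount, ← Set.ncard_coe_finset]
    congr 1
    ext p
    simp [Nat.lt_succ_iff, and_comm]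
  have hScard : ∀ n : ℕ,
      ({s ∈ S | s ≤ n}).ncard = ((Finset.range (n+1)).filter (fun s => s ∈ S)).card := by
    intro n
    rw [← Set.ncard_coe_finset]
    congr 1
    ext s
    simp [Nat.lt_succ_iff, and_comm]
  have hPprime : ∀ p ∈ PrimeFactors S, p.Prime := fun p hp => hp.1
  set f : ℕ → ℝ := fun p => if p ∈ PrimeFactors S then (p:ℝ)^(-β) else 0 with hfdef
  have hf0 : ∀ p, 0 ≤ f p := by
    intro p
    rw [hfdef]
    dsimp only
    split
    · exact Real.rpow_nonneg (Nat.cast_nonneg p) _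
    · exact le_refl 0
  -- Step A : f is summable
  have hfa : Summable f := by
    apply summable_of_sum_le (c := ((N:ℝ)+1) + 4 * ∑' n, |a n|) (fun p => hf0 p)
    intro u
    have hsplit := Finset.sum_filter_add_sum_filter_not u (fun p => p ∈ PrimeFactors S) f
    have hzero : ∑ p ∈ u.filter (fun p => ¬ p ∈ PrimeFactors S), f p = 0 := by
      apply Finset.sum_eq_zero
      intro p hp
      rw [hfdef]
      dsimp only
      rw [if_neg (Finset.mem_filter.mp hp).2]
    set w := u.filter (fun p => p ∈ PrimeFactors S) with hwdef
    have hsplit2 := Finset.sum_filter_add_sum_filter_not w (fun p => p ≤ N) f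
    have hf1 : ∀ p, f p ≤ 1 := by
      intro p
      rw [hfdef]
      dsimp only
      split
      · apply Real.rpow_le_one_of_one_le_of_nonpos
        · exact_mod_cast (hPprime p (by assumption)).one_lt.le
        · linarith
      · norm_num
    have hpart1 : ∑ p ∈ w.filter (fun p => p ≤ N), f p ≤ (N:ℝ)+1 := by
      have hsub : w.filter (fun p => p ≤ N) ⊆ Finset.range (N+1) := by
        intro p hp
        exact Finset.mem_range.mpr (Nat.lt_succ_of_le (Finset.mem_filter.mp hp).2)
      calc ∑ p ∈ w.filter (fun p => p ≤ N), f p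
          ≤ ∑ p ∈ Finset.range (N+1), f p :=
            Finset.sum_le_sum_of_subset_of_nonneg hsub (fun i _ _ => hf0 i)
        _ ≤ ∑ _p ∈ Finset.range (N+1), (1:ℝ) := Finset.sum_le_sum (fun i _ => hf1 i)
        _ = (N:ℝ)+1 := by simp
    set w' := w.filter (fun p => ¬ p ≤ N) with hw'def
    set M := 2 * u.sup id + 1 with hMdef
    set h : ℕ → ℝ := fun n => (n:ℝ)^(-(1+β)) with hhdef
    have hh0 : ∀ n, 0 ≤ h n := fun n => Real.rpow_nonneg (Nat.cast_nonneg n) _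
    have hw'mem : ∀ p ∈ w', p ∈ PrimeFactors S ∧ N < p ∧ p ∈ u := by
      intro p hp
      obtain ⟨hpw, hpN⟩ := Finset.mem_filter.mp hp
      obtain ⟨hpu, hpP⟩ := Finset.mem_filter.mp hpw
      exact ⟨hpP, Nat.lt_of_not_le hpN, hpu⟩
    have hkey : ∀ p ∈ w', f p ≤ 4 * ∑ n ∈ Finset.Ico p (2*p), h n := by
      intro p hp
      obtain ⟨hpPS, hpN, hpu⟩ := hw'mem p hp
      have hpprime := hPprime p hpPS
      have hp0 : (0:ℝ) < p := by exact_mod_cast hpprime.pos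
      have hfp : f p = (p:ℝ)^(-β) := by rw [hfdef]; dsimp only; rw [if_pos hpPS]
      have hlow : ∀ n ∈ Finset.Ico p (2*p), ((2*p:ℕ):ℝ)^(-(1+β)) ≤ h n := by
        intro n hn
        obtain ⟨h1, h2⟩ := Finset.mem_Ico.mp hn
        have hn0 : (0:ℝ) < n := by exact_mod_cast lt_of_lt_of_le hpprime.pos h1
        exact Real.rpow_le_rpow_of_nonpos hn0 (by exact_mod_cast h2.le) (by linarith)
      have hcard : (Finset.Ico p (2*p)).card = p := by rw [Nat.card_Ico]; omega
      have hsum_ge : (p:ℝ) * ((2*p:ℕ):ℝ)^(-(1+β)) ≤ ∑ n ∈ Finset.Ico p (2*p), h n := by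
        have h' := Finset.card_nsmul_le_sum (Finset.Ico p (2*p)) h _ hlow
        rwa [hcard, nsmul_eq_mul] at h'
      have hpp : (p:ℝ)^(1:ℝ) * (p:ℝ)^(-(1+β)) = (p:ℝ)^(-β) := by
        rw [← Real.rpow_add hp0]
        norm_num
      have hid : (p:ℝ) * ((2*p:ℕ):ℝ)^(-(1+β)) = (2:ℝ)^(-(1+β)) * (p:ℝ)^(-β) := by
        push_cast
        rw [Real.mul_rpow (by norm_num : (0:ℝ) ≤ 2) hp0.le, ← hpp, Real.rpow_one]
        ring
      have h2b : (2:ℝ)^(1+β) ≤ 4 := by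
        have hb2 : (2:ℝ)^β ≤ 2 := by
          have := Real.rpow_le_rpow_of_exponent_le (by norm_num : (1:ℝ) ≤ 2) hβ1
          rwa [Real.rpow_one] at this
        rw [Real.rpow_add (by norm_num : (0:ℝ) < 2), Real.rpow_one]
        nlinarith [Real.rpow_pos_of_pos (by norm_num : (0:ℝ) < 2) β]
      have h4 : (1:ℝ) ≤ 4 * (2:ℝ)^(-(1+β)) := by
        have hpos : (0:ℝ) < (2:ℝ)^(1+β) := Real.rpow_pos_of_pos (by norm_num) _
        rw [Real.rpow_neg (by norm_num : (0:ℝ) ≤ 2), ← div_eq_mul_inv, le_div_iff₀ hpos]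
        linarith
      calc f p = 1 * (p:ℝ)^(-β) := by rw [hfp, one_mul]
        _ ≤ (4 * (2:ℝ)^(-(1+β))) * (p:ℝ)^(-β) :=
            mul_le_mul_of_nonneg_right h4 (Real.rpow_nonneg hp0.le _)
        _ = 4 * ((2:ℝ)^(-(1+β)) * (p:ℝ)^(-β)) := by ring
        _ = 4 * ((p:ℝ) * ((2*p:ℕ):ℝ)^(-(1+β))) := by rw [hid]
        _ ≤ 4 * ∑ n ∈ Finset.Ico p (2*p), h n := by linarith
    have hswap : ∑ p ∈ w', ∑ n ∈ Finset.Ico p (2*p), h n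
        = ∑ n ∈ Finset.Ico (N+1) M, ∑ _p ∈ w'.filter (fun p => p ≤ n ∧ n < 2*p), h n := by
      apply Finset.sum_comm'
      intro p n
      constructor
      · rintro ⟨hp, hn⟩
        obtain ⟨h1, h2⟩ := Finset.mem_Ico.mp hn
        obtain ⟨_, hpN, hpu⟩ := hw'mem p hp
        have hsup : p ≤ u.sup id := Finset.le_sup (f := id) hpu
        refine ⟨Finset.mem_filter.mpr ⟨hp, h1, h2⟩,
          Finset.mem_Ico.mpr ⟨by omega, by rw [hMdef]; omega⟩⟩
      · rintro ⟨hp, _⟩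
        obtain ⟨hpw', h1, h2⟩ := Finset.mem_filter.mp hp
        exact ⟨hpw', Finset.mem_Ico.mpr ⟨h1, h2⟩⟩
    have hinner : ∀ n ∈ Finset.Ico (N+1) M,
        ∑ _p ∈ w'.filter (fun p => p ≤ n ∧ n < 2*p), h n ≤ |a n| := by
      intro n hn
      obtain ⟨hn1, _⟩ := Finset.mem_Ico.mp hn
      have hNn : N < n := by omega
      have hsub : w'.filter (fun p => p ≤ n ∧ n < 2*p)
          ⊆ (Finset.range (n+1)).filter (fun p => p ∈ PrimeFactors S) := by
        intro p hp
        obtain ⟨hpw', hpn, _⟩ := Finset.mem_filter.mp hp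
        refine Finset.mem_filter.mpr ⟨Finset.mem_range.mpr (Nat.lt_succ_of_le hpn), ?_⟩
        exact (hw'mem p hpw').1
      have hcard : ((w'.filter (fun p => p ≤ n ∧ n < 2*p)).card : ℝ) ≤ (primesCount S n : ℝ) := by
        have := Finset.card_le_card hsub
        rw [hπcard n]
        exact_mod_cast this
      rw [Finset.sum_const, nsmul_eq_mul]
      have hl := hlt n hNn
      have hcalc : ((w'.filter (fun p => p ≤ n ∧ n < 2*p)).card : ℝ) * h n
          ≤ (primesCount S n : ℝ) * h n := mul_le_mul_of_nonneg_right hcard (hh0 n)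
      have : (primesCount S n : ℝ) * h n < a n := hl
      have := le_abs_self (a n)
      linarith
    have hpart2 : ∑ p ∈ w', f p ≤ 4 * ∑' n, |a n| := by
      calc ∑ p ∈ w', f p
          ≤ ∑ p ∈ w', 4 * ∑ n ∈ Finset.Ico p (2*p), h n := Finset.sum_le_sum hkey
        _ = 4 * ∑ p ∈ w', ∑ n ∈ Finset.Ico p (2*p), h n := by rw [Finset.mul_sum]
        _ = 4 * ∑ n ∈ Finset.Ico (N+1) M,
              ∑ _p ∈ w'.filter (fun p => p ≤ n ∧ n < 2*p), h n := by rw [hswap]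
        _ ≤ 4 * ∑ n ∈ Finset.Ico (N+1) M, |a n| := by
            have := Finset.sum_le_sum hinner
            linarith
        _ ≤ 4 * ∑' n, |a n| := by
            have := Summable.sum_le_tsum (Finset.Ico (N+1) M) (fun i _ => abs_nonneg (a i)) hsum.abs
            linarith
    linarith
  -- Step B : tail and bad-prime control
  set T := ∑' p, f p with hTdef
  have hTsum : ∀ G : Finset ℕ, ∑ p ∈ G, f p ≤ T :=
    fun G => Summable.sum_le_tsum G (fun i _ => hf0 i) hfa
  have hev : ∀ᶠ p in Filter.cofinite, f p < 1/2 :=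
    hfa.tendsto_cofinite_zero.eventually_lt_const (by norm_num)
  have hfin : {p : ℕ | ¬ f p < 1/2}.Finite := Filter.eventually_cofinite.mp hev
  set F₀ := hfin.toFinset with hF₀def
  have hF₀mem : ∀ p, p ∈ F₀ ↔ ¬ f p < 1/2 := fun p => hfin.mem_toFinset
  have hF₀PS : ∀ p ∈ F₀, p ∈ PrimeFactors S := by
    intro p hp
    by_contra hc
    have hfz : f p = 0 := by rw [hfdef]; dsimp only; rw [if_neg hc]
    rw [hF₀mem, hfz] at hp
    norm_num at hp
  have hx1' : ∀ p ∈ PrimeFactors S, (p:ℝ)^(-β) < 1 := fun p hp =>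
    Real.rpow_lt_one_of_one_lt_of_neg (by exact_mod_cast (hPprime p hp).one_lt)
      (neg_neg_of_pos hβ)
  have hone_le_inv : ∀ p ∈ PrimeFactors S, 1 ≤ (1 - (p:ℝ)^(-β))⁻¹ := by
    intro p hp
    have h1 : 0 < 1 - (p:ℝ)^(-β) := by linarith [hx1' p hp]
    have h2 : 1 - (p:ℝ)^(-β) ≤ 1 := by
      have := Real.rpow_nonneg (Nat.cast_nonneg p) (-β)
      linarith
    have := inv_anti₀ h1 h2
    simpa using this
  set C₀ := ∏ p ∈ F₀, (1 - (p:ℝ)^(-β))⁻¹ with hC₀def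
  have hC₀1 : 1 ≤ C₀ := by
    rw [hC₀def]
    exact my_one_le_prod (fun p hp => hone_le_inv p (hF₀PS p hp))
  have hprodBound : ∀ G : Finset ℕ, (∀ p ∈ G, p ∈ PrimeFactors S) →
      ∏ p ∈ G, (1 - (p:ℝ)^(-β))⁻¹ ≤ C₀ * Real.exp (2*T) := by
    intro G hG
    rw [← Finset.prod_filter_mul_prod_filter_not G (fun p => p ∈ F₀)]
    have hb1 : ∏ p ∈ G.filter (fun p => p ∈ F₀), (1 - (p:ℝ)^(-β))⁻¹ ≤ C₀ := by
      rw [hC₀def]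
      apply my_prod_le_prod_subset
      · intro p hp
        exact (Finset.mem_filter.mp hp).2
      · intro p hp
        exact hone_le_inv p (hF₀PS p hp)
    have hb2 : ∏ p ∈ G.filter (fun p => ¬ p ∈ F₀), (1 - (p:ℝ)^(-β))⁻¹
        ≤ Real.exp (2*T) := by
      have hterm : ∀ p ∈ G.filter (fun p => ¬ p ∈ F₀),
          (1 - (p:ℝ)^(-β))⁻¹ ≤ Real.exp (2 * f p) := by
        intro p hp
        obtain ⟨hpG', hpF⟩ := Finset.mem_filter.mp hp
        have hpPS := hG p hpG'
        have hfp : f p = (p:ℝ)^(-β) := by rw [hfdef]; dsimp only; rw [if_pos hpPS]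
        have hxlt : f p < 1/2 := by
          by_contra hc
          exact hpF ((hF₀mem p).mpr hc)
        have hx0 : 0 ≤ (p:ℝ)^(-β) := Real.rpow_nonneg (Nat.cast_nonneg p) _
        have hx12 : (p:ℝ)^(-β) < 1/2 := by rw [← hfp]; exact hxlt
        have h1x : 0 < 1 - (p:ℝ)^(-β) := by linarith
        have hstep1 : (1 - (p:ℝ)^(-β))⁻¹ ≤ 1 + 2*(p:ℝ)^(-β) := by
          rw [inv_eq_one_div, div_le_iff₀ h1x]
          nlinarith
        have hstep2 : (1:ℝ) + 2*(p:ℝ)^(-β) ≤ Real.exp (2*(p:ℝ)^(-β)) := by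
          have := Real.add_one_le_exp (2*(p:ℝ)^(-β))
          linarith
        calc (1 - (p:ℝ)^(-β))⁻¹ ≤ 1 + 2*(p:ℝ)^(-β) := hstep1
          _ ≤ Real.exp (2*(p:ℝ)^(-β)) := hstep2
          _ = Real.exp (2 * f p) := by rw [hfp]
      calc ∏ p ∈ G.filter (fun p => ¬ p ∈ F₀), (1 - (p:ℝ)^(-β))⁻¹
          ≤ ∏ p ∈ G.filter (fun p => ¬ p ∈ F₀), Real.exp (2 * f p) := by
            apply Finset.prod_le_prod
            · intro p hp
              have hpPS := hG p (Finset.mem_filter.mp hp).1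
              have := hx1' p hpPS
              exact inv_nonneg.mpr (by linarith)
            · exact hterm
        _ = Real.exp (∑ p ∈ G.filter (fun p => ¬ p ∈ F₀), 2 * f p) :=
            (Real.exp_sum _ _).symm
        _ ≤ Real.exp (2*T) := by
            apply Real.exp_le_exp.mpr
            rw [← Finset.mul_sum]
            have := hTsum (G.filter (fun p => ¬ p ∈ F₀))
            linarith
    have hb2nn : (0:ℝ) ≤ ∏ p ∈ G.filter (fun p => ¬ p ∈ F₀), (1 - (p:ℝ)^(-β))⁻¹ := by
      apply Finset.prod_nonneg
      intro p hp
      have := hx1' p (hG p (Finset.mem_filter.mp hp).1)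
      exact inv_nonneg.mpr (by linarith)
    exact mul_le_mul hb1 hb2 hb2nn (by linarith)
  -- Step C : uniform bound on the S-partial sums
  have hRle : ∀ m : ℕ, ∑ s ∈ (Finset.range (m+1)).filter (fun s => s ∈ S), ((s:ℝ))^(-β)
      ≤ C₀ * Real.exp (2*T) := by
    intro m
    set G := (Finset.range (m+1)).filter (fun p => p ∈ PrimeFactors S) with hGdef
    have hGPS : ∀ p ∈ G, p ∈ PrimeFactors S := fun p hp => (Finset.mem_filter.mp hp).2
    have hGprime : ∀ p ∈ G, p.Prime := fun p hp => hPprime p (hGPS p hp)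
    have hsub : (Finset.range (m+1)).filter (fun s => s ∈ S)
        ⊆ (Finset.range (m+1)).filter (fun s => s ≠ 0 ∧ s.primeFactors ⊆ G) := by
      intro s hs
      obtain ⟨hsr, hsS⟩ := Finset.mem_filter.mp hs
      have hs0 : s ≠ 0 := fun h => hS0 (h ▸ hsS)
      refine Finset.mem_filter.mpr ⟨hsr, hs0, ?_⟩
      intro q hq
      obtain ⟨hqprime, hqdvd, _⟩ := Nat.mem_primeFactors.mp hq
      have hqPS : q ∈ PrimeFactors S := ⟨hqprime, s, hsS, hqdvd⟩
      have hqle : q ≤ s := Nat.le_of_dvd (Nat.pos_of_ne_zero hs0) hqdvd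
      have hsm : s < m + 1 := Finset.mem_range.mp hsr
      exact Finset.mem_filter.mpr ⟨Finset.mem_range.mpr (by omega), hqPS⟩
    calc ∑ s ∈ (Finset.range (m+1)).filter (fun s => s ∈ S), ((s:ℝ))^(-β)
        ≤ ∑ s ∈ (Finset.range (m+1)).filter (fun s => s ≠ 0 ∧ s.primeFactors ⊆ G),
            ((s:ℝ))^(-β) :=
          Finset.sum_le_sum_of_subset_of_nonneg hsub
            (fun i _ _ => Real.rpow_nonneg (Nat.cast_nonneg i) _)
      _ ≤ ∏ p ∈ G, (1 - (p:ℝ)^(-β))⁻¹ := smooth_sum_le β hβ m G hGprime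
      _ ≤ C₀ * Real.exp (2*T) := hprodBound G hGPS
  -- Step D : the S-partial sums are unbounded
  have hstep : ∀ n : ℕ, ∃ m : ℕ,
      (∑ s ∈ (Finset.range (n+1)).filter (fun s => s ∈ S), ((s:ℝ))^(-β)) + K/2
        ≤ ∑ s ∈ (Finset.range (m+1)).filter (fun s => s ∈ S), ((s:ℝ))^(-β) := by
    intro n
    set c := ((((Finset.range (n+1)).filter (fun s => s ∈ S)).card : ℝ)) with hcdef
    have hc0 : (0:ℝ) ≤ c := Nat.cast_nonneg _
    have htend : Filter.Tendsto (fun m : ℕ => ((m:ℝ))^β) Filter.atTop Filter.atTop :=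
      (tendsto_rpow_atTop hβ).comp tendsto_natCast_atTop_atTop
    obtain ⟨m, hm1, hm2⟩ := ((htend.eventually_ge_atTop (2*c/K)).and
      (Filter.eventually_ge_atTop (n+1))).exists
    refine ⟨m, ?_⟩
    have hm0 : 0 < m := by omega
    have hmR : (0:ℝ) < m := by exact_mod_cast hm0
    set y := ((m:ℝ))^β with hydef
    have hy : 0 < y := Real.rpow_pos_of_pos hmR β
    set Bn := (Finset.range (n+1)).filter (fun s => s ∈ S) with hBndef
    set Im := (Finset.Ico (n+1) (m+1)).filter (fun s => s ∈ S) with hImdef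
    have hdisj : Disjoint Bn Im := by
      apply Finset.disjoint_filter_filter
      rw [Finset.range_eq_Ico]
      exact Finset.Ico_disjoint_Ico_consecutive 0 (n+1) (m+1)
    have hunion : (Finset.range (m+1)).filter (fun s => s ∈ S) = Bn ∪ Im := by
      rw [hBndef, hImdef, ← Finset.filter_union]
      congr 1
      rw [Finset.range_eq_Ico, Finset.range_eq_Ico]
      rw [Finset.Ico_union_Ico_eq_Ico (by omega) (by omega)]
    have hcards : (((Finset.range (m+1)).filter (fun s => s ∈ S)).card : ℝ)
        = c + (Im.card : ℝ) := by
      rw [hunion, Finset.card_union_of_disjoint hdisj]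
      push_cast
      rfl
    have hdens : K * y ≤ (((Finset.range (m+1)).filter (fun s => s ∈ S)).card : ℝ) := by
      have := hKd m hm0
      rwa [hScard m] at this
    have hImcard : K * y - c ≤ (Im.card : ℝ) := by
      rw [hcards] at hdens
      linarith
    have hterm : ∀ s ∈ Im, y⁻¹ ≤ ((s:ℝ))^(-β) := by
      intro s hs
      obtain ⟨hsI, _⟩ := Finset.mem_filter.mp hs
      obtain ⟨h1, h2⟩ := Finset.mem_Ico.mp hsI
      have hs0 : (0:ℝ) < s := by
        have : 0 < s := by omega
        exact_mod_cast this
      have hsm : (s:ℝ) ≤ (m:ℝ) := by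
        have : s ≤ m := by omega
        exact_mod_cast this
      have := Real.rpow_le_rpow_of_nonpos hs0 hsm (by linarith : -β ≤ 0)
      rwa [Real.rpow_neg hmR.le] at this
    have hImsum : (Im.card : ℝ) * y⁻¹ ≤ ∑ s ∈ Im, ((s:ℝ))^(-β) := by
      have h' := Finset.card_nsmul_le_sum Im (fun s => ((s:ℝ))^(-β)) _ hterm
      rwa [nsmul_eq_mul] at h'
    have hcy : c * y⁻¹ ≤ K/2 := by
      rw [← div_eq_mul_inv, div_le_iff₀ hy]
      have := (div_le_iff₀ hK).mp hm1
      linarith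
    have hKIm : K/2 ≤ ∑ s ∈ Im, ((s:ℝ))^(-β) := by
      have h1 : (K * y - c) * y⁻¹ ≤ (Im.card : ℝ) * y⁻¹ :=
        mul_le_mul_of_nonneg_right hImcard (inv_nonneg.mpr hy.le)
      have h2 : (K * y - c) * y⁻¹ = K - c * y⁻¹ := by
        field_simp
      rw [h2] at h1
      linarith
    rw [hunion, Finset.sum_union hdisj]
    have : (0:ℝ) ≤ ∑ s ∈ Bn, ((s:ℝ))^(-β) :=
      Finset.sum_nonneg (fun s _ => Real.rpow_nonneg (Nat.cast_nonneg s) _)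
    linarith
  have hiter : ∀ j : ℕ, ∃ m : ℕ, (j:ℝ) * (K/2)
      ≤ ∑ s ∈ (Finset.range (m+1)).filter (fun s => s ∈ S), ((s:ℝ))^(-β) := by
    intro j
    induction j with
    | zero =>
      refine ⟨0, ?_⟩
      have : (0:ℝ) ≤ ∑ s ∈ (Finset.range 1).filter (fun s => s ∈ S), ((s:ℝ))^(-β) :=
        Finset.sum_nonneg (fun s _ => Real.rpow_nonneg (Nat.cast_nonneg s) _)
      push_cast
      linarith
    | succ j ih =>
      obtain ⟨m, hm⟩ := ih
      obtain ⟨m', hm'⟩ := hstep m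
      refine ⟨m', ?_⟩
      push_cast
      linarith
  obtain ⟨j, hj⟩ := exists_nat_gt ((C₀ * Real.exp (2*T)) / (K/2))
  obtain ⟨m, hm⟩ := hiter j
  have h1 := hRle m
  have h2 : C₀ * Real.exp (2*T) < (j:ℝ) * (K/2) := by
    rw [div_lt_iff₀ (by linarith : (0:ℝ) < K/2)] at hj
    exact hj
  linarith
end

section
/- Let α ≥ 1 be a real number and let S be a set of positive integers of polynomial density α. Then the set P(S) of prime factors of elements of S is infinite. -/
lemma card_bound_aux (S : Set ℕ) (hS0 : 0 ∉ S) (F : Finset ℕ)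
    (hF : ∀ p s, p.Prime → s ∈ S → p ∣ s → p ∈ F) (n : ℕ) (hn : 0 < n) :
    ({s ∈ S | s ≤ n}).ncard ≤ (Nat.log 2 n + 1) ^ F.card := by
  classical
  have hfin : ({s ∈ S | s ≤ n}).Finite :=
    (Set.finite_Iic n).subset (fun s hs => hs.2)
  set L := Nat.log 2 n with hL
  -- exponent bound
  have hexp : ∀ s ∈ {s ∈ S | s ≤ n}, ∀ p : ℕ, s.factorization p ≤ L := by
    rintro s ⟨hsS, hsn⟩ p
    have hs0 : s ≠ 0 := fun h => hS0 (h ▸ hsS)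
    by_cases hp : p.Prime
    · have h1 : p ^ s.factorization p ∣ s := Nat.ordProj_dvd s p
      have h2 : 2 ^ s.factorization p ≤ p ^ s.factorization p :=
        Nat.pow_le_pow_left hp.two_le _
      have h3 : 2 ^ s.factorization p ≤ n :=
        le_trans (le_trans h2 (Nat.le_of_dvd (Nat.pos_of_ne_zero hs0) h1)) hsn
      exact (Nat.le_log_iff_pow_le one_lt_two hn.ne').mpr h3
    · simp [Nat.factorization_eq_zero_of_not_prime s hp]
  -- injection into functions
  have hinj : Set.InjOn (fun s : ℕ => fun p : F =>
      (⟨min (s.factorization p) L, Nat.lt_succ_of_le (min_le_right _ _)⟩ : Fin (L + 1)))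
      {s ∈ S | s ≤ n} := by
    rintro s hs t ht h
    have hs0 : s ≠ 0 := fun h' => hS0 (h' ▸ hs.1)
    have ht0 : t ≠ 0 := fun h' => hS0 (h' ▸ ht.1)
    refine Nat.factorization_inj hs0 ht0 ?_
    ext p
    by_cases hpF : p ∈ F
    · have := congrFun h ⟨p, hpF⟩
      have hv := Fin.val_eq_val _ _ |>.mpr this
      simpa [min_eq_left (hexp s hs p), min_eq_left (hexp t ht p)] using
        congrArg Fin.val this
    · have hzero : ∀ u : ℕ, u ∈ S → u.factorization p = 0 := by
        intro u huS
        by_contra hne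
        have hmem : p ∈ u.primeFactors := by
          rw [← Nat.support_factorization]
          exact Finsupp.mem_support_iff.mpr hne
        exact hpF (hF p u (Nat.prime_of_mem_primeFactors hmem) huS
          (Nat.dvd_of_mem_primeFactors hmem))
      rw [hzero s hs.1, hzero t ht.1]
  have := Set.ncard_le_ncard_of_injOn _ (fun s _ => Set.mem_univ _) hinj
    (Set.finite_univ)
  calc ({s ∈ S | s ≤ n}).ncard ≤ (Set.univ : Set (F → Fin (L + 1))).ncard := this
    _ = (L + 1) ^ F.card := by
        rw [Set.ncard_univ, Nat.card_eq_fintype_card, Fintype.card_fun]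
        simp

theorem primeFactors_infinite (α : ℝ) (hα : 1 ≤ α) (S : Set ℕ)
    (hS : HasPolyDensity S α) :
    (PrimeFactors S).Infinite := by
  by_contra h
  rw [Set.not_infinite] at h
  classical
  obtain ⟨hS0, K, hK, hbound⟩ := hS
  set F := h.toFinset with hFdef
  set k := F.card with hk
  have hF : ∀ p s, p.Prime → s ∈ S → p ∣ s → p ∈ F := by
    intro p s hp hsS hps
    simp only [hFdef, Set.Finite.mem_toFinset]
    exact ⟨hp, s, hsS, hps⟩
  have hα0 : 0 < α := lt_of_lt_of_le one_pos hα
  set r : ℝ := (2 : ℝ) ^ (1 / α) with hr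
  have hr1 : 1 < r := by
    rw [hr]
    exact Real.one_lt_rpow_iff_of_pos (by norm_num) |>.mpr
      (Or.inl ⟨one_lt_two, by positivity⟩)
  have hr0 : 0 < r := lt_trans one_pos hr1
  -- main inequality for n = 2^m
  have key : ∀ m : ℕ, K * r ^ m ≤ ((m + 1 : ℕ) : ℝ) ^ k := by
    intro m
    have hn : 0 < 2 ^ m := Nat.pow_pos (by norm_num)
    have h1 := hbound (2 ^ m) hn
    have h2 := card_bound_aux S hS0 F hF (2 ^ m) hn
    rw [Nat.log_pow one_lt_two] at h2
    have h3 : (({s ∈ S | s ≤ 2 ^ m}).ncard : ℝ) ≤ ((m + 1 : ℕ) : ℝ) ^ k := by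
      exact_mod_cast le_trans (Nat.cast_le.mpr h2) (le_of_eq (by push_cast; ring))
    have h4 : ((2 ^ m : ℕ) : ℝ) ^ (1 / α) = r ^ m := by
      rw [hr]
      push_cast
      rw [← Real.rpow_natCast (2 : ℝ) m, ← Real.rpow_mul (by norm_num),
        ← Real.rpow_natCast ((2:ℝ) ^ (1/α)) m, ← Real.rpow_mul (by norm_num)]
      ring_nf
    rw [h4] at h1
    exact le_trans h1 h3
  -- contradiction via limits
  have hlim : Filter.Tendsto (fun m : ℕ => ((m : ℝ)) ^ k / r ^ m)
      Filter.atTop (nhds 0) := tendsto_pow_const_div_const_pow_of_one_lt k hr1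
  have hlim2 : Filter.Tendsto (fun m : ℕ => ((m + 1 : ℕ) : ℝ) ^ k / r ^ (m + 1))
      Filter.atTop (nhds 0) := hlim.comp (Filter.tendsto_add_atTop_nat 1)
  have hlim3 : Filter.Tendsto (fun m : ℕ => r * (((m + 1 : ℕ) : ℝ) ^ k / r ^ (m + 1)))
      Filter.atTop (nhds 0) := by
    simpa using hlim2.const_mul r
  have hev := hlim3.eventually (eventually_lt_nhds hK)
  obtain ⟨m, hm⟩ := hev.exists
  have hKle : K ≤ ((m + 1 : ℕ) : ℝ) ^ k / r ^ m := by
    rw [le_div_iff₀ (by positivity)]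
    exact key m
  have heq : r * (((m + 1 : ℕ) : ℝ) ^ k / r ^ (m + 1)) = ((m + 1 : ℕ) : ℝ) ^ k / r ^ m := by
    field_simp
    rw [pow_succ]
    ring
  rw [heq] at hm
  exact absurd (lt_of_le_of_lt hKle hm) (lt_irrefl K)
end

section
/- Let α ≥ 1 be a real number, let S be a set of positive integers of polynomial density α, and let r > 1 be a real number. Then π_S(n) ≥ n^{1/α}/(log n)^r for infinitely many integers n ≥ 2. -/
open Finset in
private lemma geom_tail_le {u : ℝ} (h0 : 0 ≤ u) (h1 : u < 1) (n : ℕ) :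
    ∑ e ∈ Finset.range n, u ^ e ≤ (1 - u)⁻¹ := by
  have h2 : (0:ℝ) < 1 - u := by linarith
  have key : (∑ e ∈ range n, u ^ e) * (1 - u) = 1 - u ^ n := by
    linear_combination -geom_sum_mul u n
  rw [inv_eq_one_div, le_div_iff₀ h2, key]
  have : 0 ≤ u ^ n := pow_nonneg h0 n
  linarith


open Finset in
private lemma sum_rpow_neg_le_prod (Q T : Finset ℕ) (σ : ℝ) (E : ℕ)
    (hT : ∀ s ∈ T, s ≠ 0 ∧ s.primeFactors ⊆ Q ∧ ∀ p, s.factorization p ≤ E) :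
    ∑ s ∈ T, (s : ℝ) ^ (-σ) ≤
      ∏ p ∈ Q, ∑ e ∈ Finset.range (E + 1), ((p : ℝ) ^ (-σ)) ^ e := by
  classical
  rw [Finset.prod_sum]
  set W : (∀ a ∈ Q, ℕ) → ℝ := fun y => ∏ x ∈ Q.attach, (((x : ℕ) : ℝ) ^ (-σ)) ^ (y x.1 x.2)
    with hW
  set F : ℕ → (∀ a ∈ Q, ℕ) := fun s => fun p _ => s.factorization p with hF
  have hs_eq : ∀ s ∈ T, (s : ℝ) = ∏ p ∈ Q.attach, ((p : ℕ) : ℝ) ^ (s.factorization p) := by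
    intro s hs
    obtain ⟨h0, hsub, -⟩ := hT s hs
    have : (s : ℕ) = ∏ p ∈ Q, p ^ s.factorization p := by
      conv_lhs => rw [← Nat.factorization_prod_pow_eq_self h0]
      exact Finsupp.prod_of_support_subset _
        (by rw [Nat.support_factorization]; exact hsub) _ (by simp)
    rw [Finset.prod_attach Q (fun p => ((p:ℕ):ℝ) ^ s.factorization p)]
    exact_mod_cast congrArg (Nat.cast : ℕ → ℝ) this
  have hWF : ∀ s ∈ T, W (F s) = (s : ℝ) ^ (-σ) := by
    intro s hs
    have h1 : ∀ x ∈ Q.attach, ((((x:ℕ)):ℝ) ^ (-σ)) ^ (s.factorization x) =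
        ((((x:ℕ)):ℝ) ^ (s.factorization x) : ℝ) ^ (-σ) := by
      intro x _
      rw [← Real.rpow_natCast (((x:ℕ):ℝ) ^ (-σ)) (s.factorization x),
        ← Real.rpow_natCast ((x:ℕ):ℝ) (s.factorization x),
        ← Real.rpow_mul (by positivity), ← Real.rpow_mul (by positivity), mul_comm]
    rw [hW]
    simp only [hF]
    rw [Finset.prod_congr rfl h1, Real.finset_prod_rpow _ _ (fun x _ => by positivity),
      ← hs_eq s hs]
  have hinj : ∀ x ∈ T, ∀ y ∈ T, F x = F y → x = y := by
    intro a ha b hb hab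
    have he : ∀ p ∈ Q, a.factorization p = b.factorization p := by
      intro p hp
      exact congrFun (congrFun hab p) hp
    have : ((a:ℕ):ℝ) = ((b:ℕ):ℝ) := by
      rw [hs_eq a ha, hs_eq b hb]
      exact Finset.prod_congr rfl fun x _ => by rw [he x x.2]
    exact_mod_cast this
  calc ∑ s ∈ T, (s : ℝ) ^ (-σ) = ∑ y ∈ T.image F, W y := by
        rw [Finset.sum_image hinj]
        exact (Finset.sum_congr rfl hWF).symm
    _ ≤ ∑ y ∈ Q.pi (fun _ => Finset.range (E + 1)), W y := by
        apply Finset.sum_le_sum_of_subset_of_nonneg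
        · intro y hy
          obtain ⟨s, hs, rfl⟩ := Finset.mem_image.1 hy
          rw [Finset.mem_pi]
          intro p hp
          rw [Finset.mem_range]
          exact Nat.lt_succ_of_le ((hT s hs).2.2 p)
        · intro y _ _
          exact Finset.prod_nonneg fun x _ => pow_nonneg (Real.rpow_nonneg (by positivity) _) _
    _ = _ := rfl

open Finset in
private lemma prod_geom_le_exp (Q : Finset ℕ) (hQ : ∀ p ∈ Q, 2 ≤ p) (σ u₀ : ℝ)
    (hu₀0 : 0 ≤ u₀) (hu₀1 : u₀ < 1) (hu : ∀ p ∈ Q, (p : ℝ) ^ (-σ) ≤ u₀) (E : ℕ) :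
    ∏ p ∈ Q, ∑ e ∈ Finset.range (E + 1), ((p : ℝ) ^ (-σ)) ^ e ≤
      Real.exp ((1 - u₀)⁻¹ * ∑ p ∈ Q, (p : ℝ) ^ (-σ)) := by
  rw [Finset.mul_sum, Real.exp_sum]
  apply Finset.prod_le_prod
  · intro p _
    exact Finset.sum_nonneg fun e _ => pow_nonneg (Real.rpow_nonneg (by positivity) _) _
  · intro p hp
    set u : ℝ := (p : ℝ) ^ (-σ) with hu'
    have hu0 : 0 ≤ u := Real.rpow_nonneg (by positivity) _
    have hu1 : u < 1 := lt_of_le_of_lt (hu p hp) hu₀1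
    have h2 : (0:ℝ) < 1 - u := by linarith
    have h3 : (0:ℝ) < 1 - u₀ := by linarith
    calc ∑ e ∈ Finset.range (E + 1), u ^ e ≤ (1 - u)⁻¹ := geom_tail_le hu0 hu1 _
      _ ≤ (1 - u₀)⁻¹ * u + 1 := by
          rw [inv_eq_one_div, div_le_iff₀ h2]
          have hD : 1 ≤ (1 - u₀)⁻¹ * (1 - u) := by
            have huu : 1 - u₀ ≤ 1 - u := by
              have := hu p hp; rw [← hu'] at this; linarith
            calc (1:ℝ) = (1 - u₀)⁻¹ * (1 - u₀) := (inv_mul_cancel₀ h3.ne').symm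
              _ ≤ (1 - u₀)⁻¹ * (1 - u) := by
                  apply mul_le_mul_of_nonneg_left huu (by positivity)
          nlinarith [mul_nonneg hu0 (sub_nonneg.2 hD)]
      _ ≤ Real.exp ((1 - u₀)⁻¹ * u) := Real.add_one_le_exp _

open Finset in
private lemma tail_sum_le (P : Set ℕ) (α r : ℝ) (hα : 0 < α) (hr : 1 < r)
    (N₀ : ℕ) (hN₀ : 2 ≤ N₀)
    (hπ : ∀ n : ℕ, N₀ ≤ n →
      (({p ∈ P | p ≤ n}).ncard : ℝ) ≤ (n : ℝ) ^ (1 / α) / (Real.log n) ^ r)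
    (N : ℕ) (hN : N₀ ≤ N) (Q : Finset ℕ) (hQP : ∀ p ∈ Q, p ∈ P ∧ 2 ≤ p) :
    ∑ p ∈ Q.filter (fun p => N < p), (p : ℝ) ^ (-(1 / α)) ≤
      (2 : ℝ) ^ (1 / α) / (Real.log 2) ^ r *
        ∑' k : ℕ, (((k + Nat.log 2 N : ℕ) : ℝ) + 1) ^ (-r) := by
  classical
  set C₁ : ℝ := (2:ℝ) ^ (1/α) / (Real.log 2) ^ r with hC₁
  set L := Nat.log 2 N with hL
  set Q' := Q.filter (fun p => N < p) with hQ'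
  set g : ℕ → ℝ := fun k => ((k:ℝ) + 1) ^ (-r) with hg
  have hgnn : ∀ k, 0 ≤ g k := fun k => Real.rpow_nonneg (by positivity) _
  have hgsum : Summable g := by
    have h1 : Summable (fun n : ℕ => ((n:ℝ) ^ r)⁻¹) := Real.summable_nat_rpow_inv.2 hr
    apply ((summable_nat_add_iff 1).2 h1).congr
    intro n
    rw [hg]
    rw [← Real.rpow_neg (by positivity)]
    push_cast
    ring_nf
  have hC₁0 : 0 ≤ C₁ := by
    rw [hC₁]
    positivity
  have hmaps : ∀ p ∈ Q', Nat.log 2 p ∈ Q'.image (Nat.log 2) :=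
    fun p hp => Finset.mem_image_of_mem _ hp
  rw [← Finset.sum_fiberwise_of_maps_to hmaps (fun p => (p:ℝ) ^ (-(1/α)))]
  have hfiber : ∀ k ∈ Q'.image (Nat.log 2),
      (∑ p ∈ Q'.filter (fun p => Nat.log 2 p = k), (p:ℝ) ^ (-(1/α))) ≤ C₁ * g k ∧ L ≤ k := by
    intro k hk
    obtain ⟨q, hqQ', hqk⟩ := Finset.mem_image.1 hk
    have hqN : N < q := (Finset.mem_filter.1 hqQ').2
    have hNlt : N < 2 ^ (k+1) := by
      have h := Nat.lt_pow_succ_log_self (b := 2) one_lt_two q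
      rw [hqk] at h
      omega
    have hkL : L ≤ k := by
      have := Nat.log_lt_of_lt_pow (b := 2) (x := k+1) (y := N) (by omega) hNlt
      omega
    refine ⟨?_, hkL⟩
    set B := Q'.filter (fun p => Nat.log 2 p = k) with hB
    have hsub : ∀ p ∈ B, p ∈ P ∧ p ≤ 2 ^ (k+1) ∧ 2 ^ k ≤ p := by
      intro p hp
      obtain ⟨hp1, hp2⟩ := Finset.mem_filter.1 hp
      obtain ⟨hpQ, hpN⟩ := Finset.mem_filter.1 hp1
      have h2p : 2 ≤ p := (hQP p hpQ).2
      refine ⟨(hQP p hpQ).1, ?_, ?_⟩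
      · have := Nat.lt_pow_succ_log_self (b := 2) one_lt_two p
        rw [hp2] at this
        omega
      · have := Nat.pow_log_le_self 2 (x := p) (by omega)
        rwa [hp2] at this
    -- cardinality bound via the counting hypothesis at 2^(k+1)
    have hcard : (B.card : ℝ) ≤ (((2:ℕ) ^ (k+1) : ℕ) : ℝ) ^ (1/α) /
        (Real.log (((2:ℕ) ^ (k+1) : ℕ) : ℝ)) ^ r := by
      have h1 : (B : Set ℕ) ⊆ {p ∈ P | p ≤ 2 ^ (k+1)} := by
        intro p hp
        exact ⟨(hsub p hp).1, (hsub p hp).2.1⟩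
      have h2 : ({p ∈ P | p ≤ 2 ^ (k+1)} : Set ℕ).Finite :=
        (Set.finite_Iic (2 ^ (k+1))).subset (fun p hp => hp.2)
      have h3 := Set.ncard_le_ncard h1 h2
      rw [Set.ncard_coe_finset] at h3
      calc (B.card : ℝ) ≤ (({p ∈ P | p ≤ 2 ^ (k+1)} : Set ℕ).ncard : ℝ) := by exact_mod_cast h3
        _ ≤ _ := hπ (2 ^ (k+1)) (by omega)
    have hterm : ∀ p ∈ B, (p:ℝ) ^ (-(1/α)) ≤ (((2:ℕ) ^ k : ℕ) : ℝ) ^ (-(1/α)) := by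
      intro p hp
      apply Real.rpow_le_rpow_of_nonpos (by positivity)
        (by exact_mod_cast (hsub p hp).2.2) (neg_nonpos.2 (by positivity))
    calc ∑ p ∈ B, (p:ℝ) ^ (-(1/α)) ≤ B.card • ((((2:ℕ) ^ k : ℕ) : ℝ) ^ (-(1/α))) :=
          Finset.sum_le_card_nsmul _ _ _ hterm
      _ = (B.card : ℝ) * (((2:ℕ) ^ k : ℕ) : ℝ) ^ (-(1/α)) := by
          rw [nsmul_eq_mul]
      _ ≤ ((((2:ℕ) ^ (k+1) : ℕ) : ℝ) ^ (1/α) / (Real.log (((2:ℕ) ^ (k+1) : ℕ) : ℝ)) ^ r) *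
            (((2:ℕ) ^ k : ℕ) : ℝ) ^ (-(1/α)) := by
          apply mul_le_mul_of_nonneg_right hcard (Real.rpow_nonneg (by positivity) _)
      _ = C₁ * g k := by
          have ha : (((2:ℕ) ^ (k+1) : ℕ) : ℝ) = (2:ℝ) ^ (((k:ℝ) + 1)) := by
            rw [show ((k:ℝ) + 1) = ((k+1 : ℕ) : ℝ) by push_cast; ring, Real.rpow_natCast]
            push_cast
            ring
          have hb : (((2:ℕ) ^ k : ℕ) : ℝ) = (2:ℝ) ^ ((k:ℝ)) := by
            rw [Real.rpow_natCast]
            push_cast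
            ring
          have hlog : Real.log ((2:ℝ) ^ ((k:ℝ) + 1)) = ((k:ℝ) + 1) * Real.log 2 :=
            Real.log_rpow two_pos _
          rw [ha, hb, hlog]
          rw [← Real.rpow_mul (by norm_num : (0:ℝ) ≤ 2), ← Real.rpow_mul (by norm_num : (0:ℝ) ≤ 2),
            Real.mul_rpow (by positivity) (Real.log_nonneg one_le_two)]
          have hab : (2:ℝ) ^ (((k:ℝ)+1) * (1/α)) * (2:ℝ) ^ ((k:ℝ) * (-(1/α))) = (2:ℝ) ^ (1/α) := by
            rw [← Real.rpow_add two_pos]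
            congr 1
            field_simp
            ring
          have hgk : g k = (((k:ℝ)+1) ^ r)⁻¹ := by
            rw [hg]
            exact Real.rpow_neg (by positivity) r
          have expand : (2:ℝ) ^ (((k:ℝ)+1) * (1/α)) / (((k:ℝ)+1) ^ r * Real.log 2 ^ r) *
              (2:ℝ) ^ ((k:ℝ) * (-(1/α)))
              = ((2:ℝ) ^ (((k:ℝ)+1) * (1/α)) * (2:ℝ) ^ ((k:ℝ) * (-(1/α)))) /
                (((k:ℝ)+1) ^ r * Real.log 2 ^ r) := by
            ring
          rw [expand, hab, hC₁, hgk]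
          ring
  calc ∑ k ∈ Q'.image (Nat.log 2), ∑ p ∈ Q'.filter fun p => Nat.log 2 p = k, (p:ℝ) ^ (-(1/α))
      ≤ ∑ k ∈ Q'.image (Nat.log 2), C₁ * g k := Finset.sum_le_sum (fun k hk => (hfiber k hk).1)
    _ = C₁ * ∑ k ∈ Q'.image (Nat.log 2), g k := by rw [Finset.mul_sum]
    _ ≤ C₁ * ∑' k : ℕ, g (k + L) := by
        apply mul_le_mul_of_nonneg_left ?_ hC₁0
        have hinj' : ∀ a ∈ Q'.image (Nat.log 2), ∀ b ∈ Q'.image (Nat.log 2),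
            a - L = b - L → a = b := by
          intro a ha b hb hab
          have h1 := (hfiber a ha).2
          have h2 := (hfiber b hb).2
          omega
        have him : ∑ j ∈ (Q'.image (Nat.log 2)).image (fun k => k - L), g (j + L)
            = ∑ k ∈ Q'.image (Nat.log 2), g k := by
          rw [Finset.sum_image hinj']
          exact Finset.sum_congr rfl fun k hk => by rw [Nat.sub_add_cancel (hfiber k hk).2]
        rw [← him]
        exact ((summable_nat_add_iff L).2 hgsum).sum_le_tsum _ (fun j _ => hgnn _)
    _ = C₁ * ∑' k : ℕ, (((k + L : ℕ):ℝ) + 1) ^ (-r) := by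
        simp only [hg]

set_option maxHeartbeats 1000000 in
theorem primesCount_ge_rpow_div_log_pow (α : ℝ) (hα : 1 ≤ α) (S : Set ℕ)
    (hS : HasPolyDensity S α) (r : ℝ) (hr : 1 < r) :
    {n : ℕ | 2 ≤ n ∧
      (n : ℝ) ^ (1 / α) / (Real.log n) ^ r ≤ (primesCount S n : ℝ)}.Infinite := by
  classical
  obtain ⟨hS0, K, hK, hKd⟩ := hS
  by_contra hcon
  rw [Set.not_infinite] at hcon
  obtain ⟨B, hB⟩ := hcon.bddAbove
  set P : Set ℕ := PrimeFactors S with hPdef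
  set N₀ : ℕ := max (B + 1) 2 with hN₀def
  have hN₀2 : 2 ≤ N₀ := le_max_right _ _
  have hα0 : (0:ℝ) < α := lt_of_lt_of_le one_pos hα
  have hπ : ∀ n : ℕ, N₀ ≤ n →
      (({p ∈ P | p ≤ n}).ncard : ℝ) ≤ (n : ℝ) ^ (1 / α) / (Real.log n) ^ r := by
    intro n hn
    by_contra hle
    push_neg at hle
    have hmem : n ∈ {n : ℕ | 2 ≤ n ∧
        (n : ℝ) ^ (1 / α) / (Real.log n) ^ r ≤ (primesCount S n : ℝ)} := by
      refine ⟨le_trans hN₀2 hn, ?_⟩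
      have : (primesCount S n : ℝ) = (({p ∈ P | p ≤ n}).ncard : ℝ) := rfl
      rw [this]
      exact hle.le
    have h1 := hB hmem
    have h2 : B + 1 ≤ N₀ := le_max_left _ _
    omega
  have hlog2 : (0:ℝ) < Real.log 2 := Real.log_pos one_lt_two
  set C₁ : ℝ := (2:ℝ) ^ (1/α) / (Real.log 2) ^ r with hC₁def
  have hC₁ : 0 < C₁ := by rw [hC₁def]; positivity
  set g : ℕ → ℝ := fun k => ((k:ℝ) + 1) ^ (-r) with hgdef
  have hgnn : ∀ k, 0 ≤ g k := fun k => Real.rpow_nonneg (by positivity) _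
  have hgsum : Summable g := by
    have h1 : Summable (fun n : ℕ => ((n:ℝ) ^ r)⁻¹) := Real.summable_nat_rpow_inv.2 hr
    apply ((summable_nat_add_iff 1).2 h1).congr
    intro n
    rw [hgdef]
    rw [← Real.rpow_neg (by positivity)]
    push_cast
    ring_nf
  set Z : ℝ := ∑' k, g k with hZdef
  have hZ0 : 0 ≤ Z := tsum_nonneg hgnn
  set M : ℝ := (N₀ + 1 : ℝ) + C₁ * Z with hMdef
  have hM0 : 0 ≤ M := by
    have : (0:ℝ) ≤ C₁ * Z := mul_nonneg hC₁.le hZ0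
    have h2 : (0:ℝ) ≤ (N₀ : ℝ) := Nat.cast_nonneg _
    rw [hMdef]
    linarith
  -- the uniform bound on prime sums
  have hFULL : ∀ Q : Finset ℕ, (∀ p ∈ Q, p ∈ P ∧ 2 ≤ p) →
      ∑ p ∈ Q, (p:ℝ) ^ (-(1/α)) ≤ M := by
    intro Q hQ
    rw [← Finset.sum_filter_add_sum_filter_not Q (fun p => N₀ < p)]
    have h1 : ∑ p ∈ Q.filter (fun p => N₀ < p), (p:ℝ) ^ (-(1/α)) ≤ C₁ * Z := by
      refine (tail_sum_le P α r hα0 hr N₀ hN₀2 hπ N₀ le_rfl Q hQ).trans ?_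
      apply mul_le_mul_of_nonneg_left ?_ hC₁.le
      have hshift : ∑' k : ℕ, (((k + Nat.log 2 N₀ : ℕ) : ℝ) + 1) ^ (-r)
          = ∑' k : ℕ, g (k + Nat.log 2 N₀) := rfl
      rw [hshift]
      have h3 := hgsum.sum_add_tsum_nat_add (Nat.log 2 N₀)
      have h4 : 0 ≤ ∑ i ∈ Finset.range (Nat.log 2 N₀), g i :=
        Finset.sum_nonneg fun i _ => hgnn i
      rw [hZdef]
      linarith
    have h2 : ∑ p ∈ Q.filter (fun p => ¬ N₀ < p), (p:ℝ) ^ (-(1/α)) ≤ (N₀ + 1 : ℝ) := by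
      have hsub : Q.filter (fun p => ¬ N₀ < p) ⊆ Finset.range (N₀ + 1) := by
        intro p hp
        rw [Finset.mem_range]
        have := (Finset.mem_filter.1 hp).2
        omega
      calc ∑ p ∈ Q.filter (fun p => ¬ N₀ < p), (p:ℝ) ^ (-(1/α))
          ≤ (Q.filter (fun p => ¬ N₀ < p)).card • (1:ℝ) := by
            apply Finset.sum_le_card_nsmul
            intro p hp
            have h2p : (1:ℝ) ≤ (p:ℝ) := by
              have := (hQ p (Finset.mem_filter.1 hp).1).2
              exact_mod_cast Nat.one_le_of_lt this
            exact Real.rpow_le_one_of_one_le_of_nonpos h2p (neg_nonpos.2 (by positivity))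
        _ = ((Q.filter (fun p => ¬ N₀ < p)).card : ℝ) := by rw [nsmul_eq_mul, mul_one]
        _ ≤ ((N₀ + 1 : ℕ) : ℝ) := by
            exact_mod_cast (Finset.card_le_card hsub).trans_eq (Finset.card_range _)
        _ = (N₀ + 1 : ℝ) := by push_cast; ring
    rw [hMdef]
    linarith
  -- constants
  set u₀ : ℝ := (2:ℝ) ^ (-(1/(2*α))) with hu₀def
  have hu₀0 : 0 < u₀ := Real.rpow_pos_of_pos two_pos _
  have hu₀1 : u₀ < 1 :=
    Real.rpow_lt_one_of_one_lt_of_neg one_lt_two (neg_neg_iff_pos.2 (by positivity))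
  set D₀ : ℝ := (1 - u₀)⁻¹ with hD₀def
  have hD₀0 : 0 < D₀ := inv_pos.2 (by linarith)
  set c : ℝ := max 1 (2 * D₀ * M + 2 - Real.log K) with hcdef
  have hc1 : (1:ℝ) ≤ c := le_max_left _ _
  have hc0 : (0:ℝ) < c := lt_of_lt_of_le one_pos hc1
  have hc2 : 2 * D₀ * M + 2 - Real.log K ≤ c := le_max_right _ _
  have hδ : (0:ℝ) < (D₀ * Real.exp c)⁻¹ / C₁ := by positivity
  obtain ⟨i₀, hi₀⟩ := Filter.eventually_atTop.1
    ((tendsto_sum_nat_add g).eventually (gt_mem_nhds hδ))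
  set N₁ : ℕ := max N₀ (2 ^ i₀) with hN₁def
  have hN₁N₀ : N₀ ≤ N₁ := le_max_left _ _
  have hN₁2 : 2 ≤ N₁ := le_trans hN₀2 hN₁N₀
  set L₁ : ℕ := Nat.log 2 N₁ with hL₁def
  have hL₁ : i₀ ≤ L₁ := (Nat.le_log_iff_pow_le one_lt_two (by omega)).2 (le_max_right _ _)
  have hε : C₁ * ∑' k, g (k + L₁) ≤ (D₀ * Real.exp c)⁻¹ := by
    have h5 := (hi₀ L₁ hL₁).le
    calc C₁ * ∑' k, g (k + L₁) ≤ C₁ * ((D₀ * Real.exp c)⁻¹ / C₁) :=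
          mul_le_mul_of_nonneg_left h5 hC₁.le
      _ = (D₀ * Real.exp c)⁻¹ := by
          field_simp
  -- choose x
  set R : ℝ := max (2 * α * c) (c * Real.log N₁ / Real.log 2) with hRdef
  set x : ℕ := max 2 ⌈Real.exp R⌉₊ with hxdef
  have hx2 : 2 ≤ x := le_max_left _ _
  have hx0 : (0:ℝ) < (x:ℝ) := by exact_mod_cast lt_of_lt_of_le two_pos hx2
  have hlogx : R ≤ Real.log x := by
    have h1 : Real.exp R ≤ (⌈Real.exp R⌉₊ : ℝ) := Nat.le_ceil _
    have h2 : ((⌈Real.exp R⌉₊ : ℕ) : ℝ) ≤ (x:ℝ) := by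
      exact_mod_cast le_max_right 2 ⌈Real.exp R⌉₊
    calc R = Real.log (Real.exp R) := (Real.log_exp R).symm
      _ ≤ Real.log x := Real.log_le_log (Real.exp_pos _) (h1.trans h2)
  have hlogx0 : 0 < Real.log x := Real.log_pos (by exact_mod_cast hx2)
  set σ : ℝ := 1/α - c / Real.log x with hσdef
  have hσ1 : c / Real.log x ≤ 1/(2*α) := by
    have hR1 : 2*α*c ≤ Real.log x := le_trans (le_max_left _ _) hlogx
    rw [div_le_div_iff₀ hlogx0 (by positivity)]
    nlinarith
  have hσlb : 1/(2*α) ≤ σ := by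
    rw [hσdef]
    have he : 1/α - 1/(2*α) = 1/(2*α) := by field_simp; ring
    linarith
  have hσ0 : 0 < σ := lt_of_lt_of_le (by positivity) hσlb
  -- finsets
  have hTfin : ({s ∈ S | s ≤ x}).Finite := (Set.finite_Iic x).subset (fun s hs => hs.2)
  set T := hTfin.toFinset with hTdef
  have hQfin : ({p ∈ P | p ≤ x}).Finite := (Set.finite_Iic x).subset (fun p hp => hp.2)
  set Q := hQfin.toFinset with hQdef
  have hTmem : ∀ s, s ∈ T ↔ s ∈ S ∧ s ≤ x := by
    intro s
    rw [hTdef, Set.Finite.mem_toFinset]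
    exact Iff.rfl
  have hQmem : ∀ p, p ∈ Q ↔ p ∈ P ∧ p ≤ x := by
    intro p
    rw [hQdef, Set.Finite.mem_toFinset]
    exact Iff.rfl
  have hQprime : ∀ p ∈ Q, Nat.Prime p := fun p hp => ((hQmem p).1 hp).1.1
  have hQ2 : ∀ p ∈ Q, 2 ≤ p := fun p hp => (hQprime p hp).two_le
  -- step 1
  have hK1 : K * (x:ℝ) ^ (1/α) ≤ (T.card : ℝ) := by
    have h6 := hKd x (by omega)
    rwa [Set.ncard_eq_toFinset_card _ hTfin] at h6
  -- step 2
  have hstep2 : (T.card : ℝ) ≤ (x:ℝ) ^ σ * ∑ s ∈ T, (s:ℝ) ^ (-σ) := by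
    rw [Finset.mul_sum]
    have h7 : ∀ s ∈ T, (1:ℝ) ≤ (x:ℝ) ^ σ * (s:ℝ) ^ (-σ) := by
      intro s hs
      have hs1 : 1 ≤ s := by
        obtain ⟨hsS, _⟩ := (hTmem s).1 hs
        have hne : s ≠ 0 := fun h => hS0 (h ▸ hsS)
        omega
      have hsx : (s:ℝ) ≤ (x:ℝ) := by exact_mod_cast ((hTmem s).1 hs).2
      have hsp : (0:ℝ) < (s:ℝ) ^ σ := Real.rpow_pos_of_pos (by exact_mod_cast hs1) _
      rw [Real.rpow_neg (by positivity)]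
      rw [show (1:ℝ) = (s:ℝ)^σ * ((s:ℝ)^σ)⁻¹ from (mul_inv_cancel₀ hsp.ne').symm]
      exact mul_le_mul_of_nonneg_right
        (Real.rpow_le_rpow (by positivity) hsx hσ0.le) (by positivity)
    calc (T.card : ℝ) = ∑ _s ∈ T, (1:ℝ) := by rw [Finset.sum_const, nsmul_eq_mul, mul_one]
      _ ≤ _ := Finset.sum_le_sum h7
  -- step 3
  have hstep3 : ∑ s ∈ T, (s:ℝ) ^ (-σ) ≤
      ∏ p ∈ Q, ∑ e ∈ Finset.range (x + 1), ((p:ℝ) ^ (-σ)) ^ e := by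
    apply sum_rpow_neg_le_prod
    intro s hs
    obtain ⟨hsS, hsx⟩ := (hTmem s).1 hs
    have hs0 : s ≠ 0 := fun h => hS0 (h ▸ hsS)
    refine ⟨hs0, ?_, ?_⟩
    · intro p hp
      rw [Nat.mem_primeFactors] at hp
      obtain ⟨hpp, hpd, -⟩ := hp
      rw [hQmem]
      exact ⟨⟨hpp, s, hsS, hpd⟩, le_trans (Nat.le_of_dvd (Nat.pos_of_ne_zero hs0) hpd) hsx⟩
    · intro p
      exact le_trans (Nat.factorization_lt p hs0).le hsx
  -- step 4
  have hstep4 : ∏ p ∈ Q, ∑ e ∈ Finset.range (x + 1), ((p:ℝ) ^ (-σ)) ^ e ≤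
      Real.exp (D₀ * ∑ p ∈ Q, (p:ℝ) ^ (-σ)) := by
    rw [hD₀def]
    apply prod_geom_le_exp Q hQ2 σ u₀ hu₀0.le hu₀1 ?_ x
    intro p hp
    have h2p : (2:ℝ) ≤ (p:ℝ) := by exact_mod_cast hQ2 p hp
    calc (p:ℝ) ^ (-σ) ≤ (2:ℝ) ^ (-σ) :=
          Real.rpow_le_rpow_of_nonpos two_pos h2p (neg_nonpos.2 hσ0.le)
      _ ≤ u₀ := by
          rw [hu₀def]
          exact Real.rpow_le_rpow_of_exponent_le one_le_two (by linarith)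
  -- step 5 : the prime sum
  have hdecomp : ∀ p ∈ Q, (p:ℝ) ^ (-σ) = (p:ℝ) ^ (-(1/α)) * (p:ℝ) ^ (c / Real.log x) := by
    intro p hp
    have hp0 : (0:ℝ) < (p:ℝ) := by
      have := hQ2 p hp
      exact_mod_cast lt_of_lt_of_le two_pos this
    rw [← Real.rpow_add hp0]
    congr 1
    rw [hσdef]
    ring
  have hsmall : ∑ p ∈ Q.filter (fun p => ¬ N₁ < p), (p:ℝ) ^ (-σ) ≤ 2 * M := by
    have hQ' : ∀ p ∈ Q.filter (fun p => ¬ N₁ < p), p ∈ P ∧ 2 ≤ p := by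
      intro p hp
      have hpQ := (Finset.mem_filter.1 hp).1
      exact ⟨((hQmem p).1 hpQ).1, hQ2 p hpQ⟩
    have hbM := hFULL _ hQ'
    have hterm : ∀ p ∈ Q.filter (fun p => ¬ N₁ < p),
        (p:ℝ) ^ (-σ) ≤ 2 * (p:ℝ) ^ (-(1/α)) := by
      intro p hp
      obtain ⟨hpQ, hpN⟩ := Finset.mem_filter.1 hp
      have hp0 : (0:ℝ) < (p:ℝ) := by
        have := hQ2 p hpQ
        exact_mod_cast lt_of_lt_of_le two_pos this
      have hfac : (p:ℝ) ^ (c / Real.log x) ≤ 2 := by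
        have hb1 : (p:ℝ) ^ (c / Real.log x) ≤ (N₁:ℝ) ^ (c / Real.log x) :=
          Real.rpow_le_rpow hp0.le (by exact_mod_cast (not_lt.1 hpN)) (by positivity)
        have hN₁0 : (0:ℝ) < (N₁:ℝ) := by exact_mod_cast lt_of_lt_of_le two_pos hN₁2
        have hR2 : c * Real.log N₁ / Real.log 2 ≤ Real.log x :=
          le_trans (le_max_right _ _) hlogx
        rw [div_le_iff₀ hlog2] at hR2
        refine hb1.trans ?_
        rw [Real.rpow_def_of_pos hN₁0,
          show (2:ℝ) = Real.exp (Real.log 2) from (Real.exp_log two_pos).symm]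
        apply Real.exp_le_exp.2
        rw [mul_comm, div_mul_eq_mul_div, div_le_iff₀ hlogx0]
        nlinarith [hR2]
      calc (p:ℝ) ^ (-σ) = (p:ℝ) ^ (-(1/α)) * (p:ℝ) ^ (c / Real.log x) := hdecomp p hpQ
        _ ≤ (p:ℝ) ^ (-(1/α)) * 2 :=
            mul_le_mul_of_nonneg_left hfac (Real.rpow_nonneg hp0.le _)
        _ = 2 * (p:ℝ) ^ (-(1/α)) := mul_comm _ _
    calc ∑ p ∈ Q.filter (fun p => ¬ N₁ < p), (p:ℝ) ^ (-σ)
        ≤ ∑ p ∈ Q.filter (fun p => ¬ N₁ < p), 2 * (p:ℝ) ^ (-(1/α)) :=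
          Finset.sum_le_sum hterm
      _ = 2 * ∑ p ∈ Q.filter (fun p => ¬ N₁ < p), (p:ℝ) ^ (-(1/α)) := by
          rw [Finset.mul_sum]
      _ ≤ 2 * M := by linarith
  have htail : ∑ p ∈ Q.filter (fun p => N₁ < p), (p:ℝ) ^ (-σ) ≤ D₀⁻¹ := by
    have hterm : ∀ p ∈ Q.filter (fun p => N₁ < p),
        (p:ℝ) ^ (-σ) ≤ Real.exp c * (p:ℝ) ^ (-(1/α)) := by
      intro p hp
      have hpQ := (Finset.mem_filter.1 hp).1
      have hp0 : (0:ℝ) < (p:ℝ) := by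
        have := hQ2 p hpQ
        exact_mod_cast lt_of_lt_of_le two_pos this
      have hfac : (p:ℝ) ^ (c / Real.log x) ≤ Real.exp c := by
        rw [Real.rpow_def_of_pos hp0]
        apply Real.exp_le_exp.2
        have hpx : Real.log p ≤ Real.log x := by
          apply Real.log_le_log hp0
          exact_mod_cast ((hQmem p).1 hpQ).2
        rw [mul_comm, div_mul_eq_mul_div, div_le_iff₀ hlogx0]
        nlinarith [hpx]
      calc (p:ℝ) ^ (-σ) = (p:ℝ) ^ (-(1/α)) * (p:ℝ) ^ (c / Real.log x) := hdecomp p hpQ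
        _ ≤ (p:ℝ) ^ (-(1/α)) * Real.exp c :=
            mul_le_mul_of_nonneg_left hfac (Real.rpow_nonneg hp0.le _)
        _ = Real.exp c * (p:ℝ) ^ (-(1/α)) := mul_comm _ _
    have hQ'' : ∀ p ∈ Q, p ∈ P ∧ 2 ≤ p := fun p hp => ⟨((hQmem p).1 hp).1, hQ2 p hp⟩
    have htsl := tail_sum_le P α r hα0 hr N₀ hN₀2 hπ N₁ hN₁N₀ Q hQ''
    have hshift : ∑' k : ℕ, (((k + Nat.log 2 N₁ : ℕ) : ℝ) + 1) ^ (-r)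
        = ∑' k : ℕ, g (k + L₁) := rfl
    rw [hshift] at htsl
    calc ∑ p ∈ Q.filter (fun p => N₁ < p), (p:ℝ) ^ (-σ)
        ≤ ∑ p ∈ Q.filter (fun p => N₁ < p), Real.exp c * (p:ℝ) ^ (-(1/α)) :=
          Finset.sum_le_sum hterm
      _ = Real.exp c * ∑ p ∈ Q.filter (fun p => N₁ < p), (p:ℝ) ^ (-(1/α)) := by
          rw [Finset.mul_sum]
      _ ≤ Real.exp c * (D₀ * Real.exp c)⁻¹ :=
          mul_le_mul_of_nonneg_left (htsl.trans hε) (Real.exp_nonneg _)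
      _ = D₀⁻¹ := by
          rw [mul_inv]
          field_simp
  have hSp : ∑ p ∈ Q, (p:ℝ) ^ (-σ) ≤ 2 * M + D₀⁻¹ := by
    rw [← Finset.sum_filter_add_sum_filter_not Q (fun p => N₁ < p)]
    linarith
  -- step 6
  have hxσ : (x:ℝ) ^ σ = (x:ℝ) ^ (1/α) * Real.exp (-c) := by
    rw [hσdef, sub_eq_add_neg, Real.rpow_add hx0]
    congr 1
    rw [Real.rpow_def_of_pos hx0]
    congr 1
    field_simp
  -- final contradiction
  have hxa : (0:ℝ) < (x:ℝ) ^ (1/α) := Real.rpow_pos_of_pos hx0 _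
  have hDSp : D₀ * ∑ p ∈ Q, (p:ℝ) ^ (-σ) ≤ 2 * D₀ * M + 1 := by
    have h8 : D₀ * ∑ p ∈ Q, (p:ℝ) ^ (-σ) ≤ D₀ * (2 * M + D₀⁻¹) :=
      mul_le_mul_of_nonneg_left hSp hD₀0.le
    have h9 : D₀ * D₀⁻¹ = 1 := mul_inv_cancel₀ hD₀0.ne'
    nlinarith
  have hchain : K * (x:ℝ) ^ (1/α) ≤
      (x:ℝ) ^ (1/α) * Real.exp (-c) * Real.exp (2 * D₀ * M + 1) := by
    have h10 : (T.card : ℝ) ≤ (x:ℝ) ^ σ * Real.exp (D₀ * ∑ p ∈ Q, (p:ℝ) ^ (-σ)) := by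
      calc (T.card : ℝ) ≤ (x:ℝ) ^ σ * ∑ s ∈ T, (s:ℝ) ^ (-σ) := hstep2
        _ ≤ (x:ℝ) ^ σ * Real.exp (D₀ * ∑ p ∈ Q, (p:ℝ) ^ (-σ)) := by
            apply mul_le_mul_of_nonneg_left (hstep3.trans hstep4)
              (Real.rpow_nonneg hx0.le _)
    calc K * (x:ℝ) ^ (1/α) ≤ (T.card : ℝ) := hK1
      _ ≤ (x:ℝ) ^ σ * Real.exp (D₀ * ∑ p ∈ Q, (p:ℝ) ^ (-σ)) := h10
      _ ≤ (x:ℝ) ^ σ * Real.exp (2 * D₀ * M + 1) := by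
          apply mul_le_mul_of_nonneg_left (Real.exp_le_exp.2 hDSp)
            (Real.rpow_nonneg hx0.le _)
      _ = (x:ℝ) ^ (1/α) * Real.exp (-c) * Real.exp (2 * D₀ * M + 1) := by rw [hxσ]
  have hexp : Real.exp (-c) * Real.exp (2 * D₀ * M + 1) ≤ K * Real.exp (-1) := by
    rw [← Real.exp_add]
    have h11 : -c + (2 * D₀ * M + 1) ≤ Real.log K + -1 := by linarith
    calc Real.exp (-c + (2 * D₀ * M + 1)) ≤ Real.exp (Real.log K + -1) :=
          Real.exp_le_exp.2 h11
      _ = K * Real.exp (-1) := by rw [Real.exp_add, Real.exp_log hK]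
  have hlt : K * Real.exp (-1) < K := by
    nlinarith [Real.exp_lt_one_iff.2 (show (-1:ℝ) < 0 by norm_num), Real.exp_pos (-1:ℝ)]
  have : K * (x:ℝ) ^ (1/α) < K * (x:ℝ) ^ (1/α) := by
    calc K * (x:ℝ) ^ (1/α) ≤ (x:ℝ) ^ (1/α) * (Real.exp (-c) * Real.exp (2 * D₀ * M + 1)) := by
          rw [← mul_assoc]
          exact hchain
      _ ≤ (x:ℝ) ^ (1/α) * (K * Real.exp (-1)) :=
          mul_le_mul_of_nonneg_left hexp hxa.le
      _ < (x:ℝ) ^ (1/α) * K := by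
          exact mul_lt_mul_of_pos_left hlt hxa
      _ = K * (x:ℝ) ^ (1/α) := mul_comm _ _
  exact absurd this (lt_irrefl _)
end

section
/- Let α ≥ 1 be a real number, let S be a set of positive integers of polynomial density α, and let r > 1 be a real number. Then π_S(n) ≥ n^{1/α}/(log n · (log log n)^r) for infinitely many integers n ≥ 16. -/
open Finset Real


private lemma aux_ne_zero_pow (k : ℕ) : ((2:ℝ)^k) ≠ 0 := by positivity

private lemma aux_summable_logpow {L r : ℝ} (hL : 1/2 ≤ L) (hL2 : L ≤ Real.log 2) (hr : 1 < r) :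
    Summable (fun n : ℕ => (((n : ℝ) * L) * (max 1 (Real.log ((n : ℝ) * L))) ^ r)⁻¹) := by
  have hL0 : (0:ℝ) < L := lt_of_lt_of_le (by norm_num) hL
  have hr0 : (0:ℝ) ≤ r := by linarith
  have hmax_pos : ∀ x : ℝ, (0:ℝ) < max 1 x := fun x => lt_of_lt_of_le one_pos (le_max_left _ _)
  have h_nonneg : ∀ n : ℕ, 0 ≤ (((n : ℝ) * L) * (max 1 (Real.log ((n : ℝ) * L))) ^ r)⁻¹ := by
    intro n
    have h1 : (0:ℝ) ≤ (n : ℝ) * L := by positivity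
    have h2 : (0:ℝ) ≤ (max 1 (Real.log ((n : ℝ) * L))) ^ r :=
      (Real.rpow_pos_of_pos (hmax_pos _) r).le
    positivity
  have h_mono : ∀ ⦃m n : ℕ⦄, 0 < m → m ≤ n →
      (((n : ℝ) * L) * (max 1 (Real.log ((n : ℝ) * L))) ^ r)⁻¹
        ≤ (((m : ℝ) * L) * (max 1 (Real.log ((m : ℝ) * L))) ^ r)⁻¹ := by
    intro m n hm hmn
    have hm' : (0:ℝ) < (m:ℝ) * L := by
      have : (0:ℝ) < (m:ℝ) := by exact_mod_cast hm
      positivity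
    have hcast : (m:ℝ) ≤ (n:ℝ) := by exact_mod_cast hmn
    have hmn' : (m:ℝ) * L ≤ (n:ℝ) * L := by nlinarith
    have hlog : Real.log ((m:ℝ) * L) ≤ Real.log ((n:ℝ) * L) := Real.log_le_log hm' hmn'
    have hmax : max 1 (Real.log ((m:ℝ) * L)) ≤ max 1 (Real.log ((n:ℝ) * L)) :=
      max_le_max le_rfl hlog
    have hrpow : (max 1 (Real.log ((m:ℝ) * L))) ^ r ≤ (max 1 (Real.log ((n:ℝ) * L))) ^ r :=
      Real.rpow_le_rpow (hmax_pos _).le hmax hr0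
    have hD : ((m:ℝ) * L) * (max 1 (Real.log ((m:ℝ) * L))) ^ r
        ≤ ((n:ℝ) * L) * (max 1 (Real.log ((n:ℝ) * L))) ^ r :=
      mul_le_mul hmn' hrpow (Real.rpow_pos_of_pos (hmax_pos _) r).le (by positivity)
    have hDpos : 0 < ((m:ℝ) * L) * (max 1 (Real.log ((m:ℝ) * L))) ^ r :=
      mul_pos hm' (Real.rpow_pos_of_pos (hmax_pos _) r)
    exact inv_anti₀ hDpos hD
  rw [← summable_condensed_iff_of_nonneg h_nonneg h_mono]
  -- now show summability of the condensed series
  set gmaj : ℕ → ℝ := fun k => (L * (max 1 ((k:ℝ) * (L/2))) ^ r)⁻¹ with hgmaj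
  have hgmaj_nonneg : ∀ k, 0 ≤ gmaj k := by
    intro k
    have := (Real.rpow_pos_of_pos (hmax_pos ((k:ℝ) * (L/2))) r).le
    positivity
  have hgmaj_sum : Summable gmaj := by
    rw [← summable_nat_add_iff 2]
    have hbase : Summable (fun k : ℕ => (((k:ℝ) + 2) ^ r)⁻¹) := by
      have h0 := (Real.summable_nat_rpow_inv (p := r)).mpr hr
      have h1 := (summable_nat_add_iff 2).mpr h0
      refine h1.congr fun n => ?_
      push_cast
      ring_nf
    have hu : Summable (fun k : ℕ => (L * (L/2) ^ r)⁻¹ * ((((k:ℝ) + 2)) ^ r)⁻¹) :=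
      hbase.mul_left _
    refine Summable.of_nonneg_of_le (fun k => hgmaj_nonneg _) (fun k => ?_) hu
    have hval : (0:ℝ) < ((k:ℝ) + 2) * (L/2) := by positivity
    have hmaxge : ((k:ℝ) + 2) * (L/2) ≤ max 1 (((k:ℝ) + 2) * (L/2)) := le_max_right _ _
    have hrp : (((k:ℝ) + 2) * (L/2)) ^ r ≤ (max 1 (((k:ℝ) + 2) * (L/2))) ^ r :=
      Real.rpow_le_rpow hval.le hmaxge hr0
    have hDpos : 0 < L * (((k:ℝ) + 2) * (L/2)) ^ r :=
      mul_pos hL0 (Real.rpow_pos_of_pos hval r)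
    have h2 : gmaj (k + 2) ≤ (L * (((k:ℝ) + 2) * (L/2)) ^ r)⁻¹ := by
      have : L * (((k:ℝ) + 2) * (L/2)) ^ r ≤ L * (max 1 (((k+2:ℕ):ℝ) * (L/2))) ^ r := by
        push_cast
        exact mul_le_mul_of_nonneg_left hrp hL0.le
      have := inv_anti₀ hDpos this
      simpa [hgmaj] using this
    refine h2.trans (le_of_eq ?_)
    rw [Real.mul_rpow (by positivity) (by positivity), mul_inv, mul_inv, mul_inv]
    ring
  refine Summable.of_nonneg_of_le (fun k => ?_) (fun k => ?_) hgmaj_sum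
  · have := h_nonneg (2^k)
    positivity
  · -- (2:ℝ)^k * e (2^k) ≤ gmaj k
    have hcast : ((2^k : ℕ) : ℝ) = (2:ℝ)^k := by push_cast; ring
    rw [hcast]
    set X : ℝ := (max 1 (Real.log ((2:ℝ)^k * L))) ^ r with hX
    set Y : ℝ := (max 1 ((k:ℝ) * (L/2))) ^ r with hY
    have hXpos : 0 < X := Real.rpow_pos_of_pos (hmax_pos _) r
    have hYpos : 0 < Y := Real.rpow_pos_of_pos (hmax_pos _) r
    have key : max 1 ((k:ℝ) * (L/2)) ≤ max 1 (Real.log ((2:ℝ)^k * L)) := by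
      rcases le_or_gt ((k:ℝ) * (L/2)) 1 with h | h
      · rw [max_eq_left h]
        exact le_max_left _ _
      · refine max_le (le_max_left _ _) (le_max_of_le_right ?_)
        -- show k * (L/2) ≤ log (2^k * L)
        have hlogL : -Real.log L ≤ 1 := by
          have h1 : Real.log L⁻¹ ≤ L⁻¹ - 1 := Real.log_le_sub_one_of_pos (by positivity)
          have h2 : L⁻¹ ≤ 2 := by
            rw [inv_le_comm₀ hL0 (by norm_num)]
            linarith
          rw [Real.log_inv] at h1
          linarith
        have hlog2 : Real.log ((2:ℝ)^k * L) = (k:ℝ) * Real.log 2 + Real.log L := by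
          rw [Real.log_mul (aux_ne_zero_pow k) (ne_of_gt hL0), Real.log_pow]
        have hkL : (k:ℝ) * L ≤ (k:ℝ) * Real.log 2 :=
          mul_le_mul_of_nonneg_left hL2 (Nat.cast_nonneg k)
        rw [hlog2]
        nlinarith
    have hYX : Y ≤ X := Real.rpow_le_rpow (hmax_pos _).le key hr0
    have hexp : (2:ℝ)^k * (((2:ℝ)^k * L) * X)⁻¹ = (L * X)⁻¹ := by
      rw [show ((2:ℝ)^k * L) * X = (2:ℝ)^k * (L * X) by ring, mul_inv, ← mul_assoc,
        mul_inv_cancel₀ (aux_ne_zero_pow k), one_mul]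
    rw [hexp]
    exact inv_anti₀ (mul_pos hL0 hYpos) (mul_le_mul_of_nonneg_left hYX hL0.le)

private lemma aux_e_nonneg (L r : ℝ) (hL0 : 0 < L) (n : ℕ) :
    0 ≤ (((n : ℝ) * L) * (max 1 (Real.log ((n : ℝ) * L))) ^ r)⁻¹ := by
  have h2 : (0:ℝ) < max 1 (Real.log ((n : ℝ) * L)) :=
    lt_of_lt_of_le one_pos (le_max_left _ _)
  have h3 : (0:ℝ) ≤ (max 1 (Real.log ((n : ℝ) * L))) ^ r := (Real.rpow_pos_of_pos h2 r).le
  have h1 : (0:ℝ) ≤ (n : ℝ) * L := by positivity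
  positivity

private lemma aux_primeSumBound {P' : Set ℕ} (hprime : ∀ p ∈ P', p.Prime) {c r : ℝ}
    (hc : 0 < c) (hr : 1 < r) {N₀ : ℕ} (hN16 : 16 ≤ N₀)
    (hcount : ∀ n : ℕ, N₀ ≤ n →
      (({p ∈ P' | p ≤ n}).ncard : ℝ) < (n:ℝ) ^ c / (Real.log n * (Real.log (Real.log n)) ^ r)) :
    ∃ C : ℝ, ∀ t : Finset ℕ, ∑ p ∈ t, Set.indicator P' (fun q => (q:ℝ) ^ (-c)) p ≤ C := by
  classical
  set L : ℝ := Real.log 2 with hLdef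
  have hL05 : 1/2 ≤ L := by
    have := Real.log_two_gt_d9
    rw [hLdef]; linarith
  have hL0 : (0:ℝ) < L := by linarith
  set pw : ℕ → ℝ := Set.indicator P' (fun q => (q:ℝ) ^ (-c)) with hpwdef
  have hpw_nonneg : ∀ p, 0 ≤ pw p := fun p =>
    Set.indicator_apply_nonneg (fun _ => by positivity)
  set e : ℕ → ℝ := fun n => (((n : ℝ) * L) * (max 1 (Real.log ((n : ℝ) * L))) ^ r)⁻¹ with hedef
  have hsumA : Summable e := aux_summable_logpow hL05 le_rfl hr
  set b : ℕ → ℝ := fun k => (2:ℝ) ^ c * e (k+1) with hbdef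
  have hb_nonneg : ∀ k, 0 ≤ b k := by
    intro k
    have := aux_e_nonneg L r hL0 (k+1)
    have h2 : (0:ℝ) ≤ (2:ℝ) ^ c := (Real.rpow_pos_of_pos two_pos c).le
    rw [hbdef]
    exact mul_nonneg h2 (by exact_mod_cast this)
  have hsumb : Summable b := ((summable_nat_add_iff 1).mpr hsumA).mul_left _
  -- block bound
  have hblock : ∀ k : ℕ, ∑ p ∈ Ioc (2^k) (2^(k+1)), pw p ≤
      (if k < N₀ then (2:ℝ)^k else 0) + b k := by
    intro k
    rcases lt_or_ge k N₀ with hk | hk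
    · -- crude bound
      have hle : ∀ p ∈ Ioc (2^k) (2^(k+1)), pw p ≤ 1 := by
        intro p hp
        have hp1 : (1:ℝ) ≤ (p:ℝ) := by
          have := (Finset.mem_Ioc.mp hp).1
          have : 1 ≤ p := le_trans (Nat.one_le_two_pow) (le_of_lt this)
          exact_mod_cast this
        by_cases hpP : p ∈ P'
        · rw [hpwdef, Set.indicator_of_mem hpP]
          exact Real.rpow_le_one_of_one_le_of_nonpos hp1 (by linarith)
        · rw [hpwdef, Set.indicator_of_notMem hpP]; norm_num
      calc ∑ p ∈ Ioc (2^k) (2^(k+1)), pw p ≤ (Ioc (2^k) (2^(k+1))).card • (1:ℝ) :=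
            Finset.sum_le_card_nsmul _ _ _ hle
        _ = ((Ioc (2^k) (2^(k+1))).card : ℝ) := by rw [nsmul_eq_mul, mul_one]
        _ ≤ (2:ℝ)^k := by
            rw [Nat.card_Ioc]
            have : 2^(k+1) - 2^k = 2^k := by
              rw [pow_succ]; omega
            rw [this]
            push_cast
            exact le_rfl
        _ ≤ (if k < N₀ then (2:ℝ)^k else 0) + b k := by
            rw [if_pos hk]
            have := hb_nonneg k
            linarith
    · -- main bound
      set n : ℕ := 2^(k+1) with hndef
      have hn : N₀ ≤ n := by
        calc N₀ ≤ k := hk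
          _ ≤ 2^k := (Nat.lt_two_pow_self (n := k)).le
          _ ≤ 2^(k+1) := Nat.pow_le_pow_right (by norm_num) (Nat.le_succ k)
      have hg := hcount n hn
      set sn : Finset ℕ := (Ioc (2^k) (2^(k+1))).filter (· ∈ P') with hsndef
      have h1 : ∑ p ∈ Ioc (2^k) (2^(k+1)), pw p = ∑ p ∈ sn, pw p := by
        refine (Finset.sum_subset (Finset.filter_subset _ _) ?_).symm
        intro x hx hnx
        have : x ∉ P' := by
          intro hxP
          exact hnx (Finset.mem_filter.mpr ⟨hx, hxP⟩)
        rw [hpwdef]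
        exact Set.indicator_of_notMem this _
      have h2 : ∑ p ∈ sn, pw p ≤ sn.card • (((2^k : ℕ):ℝ) ^ (-c)) := by
        refine Finset.sum_le_card_nsmul _ _ _ ?_
        intro p hp
        have hpP : p ∈ P' := (Finset.mem_filter.mp hp).2
        have hpI := Finset.mem_Ioc.mp (Finset.mem_filter.mp hp).1
        rw [hpwdef, Set.indicator_of_mem hpP]
        refine Real.rpow_le_rpow_of_nonpos ?_ ?_ (by linarith)
        · positivity
        · exact_mod_cast hpI.1.le
      have hcard : (sn.card : ℝ) ≤ (({p ∈ P' | p ≤ n}).ncard : ℝ) := by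
        have hsub : (sn : Set ℕ) ⊆ {p ∈ P' | p ≤ n} := by
          intro p hp
          rw [Finset.coe_filter] at hp
          have hp' : p ∈ Ioc (2^k) (2^(k+1)) ∧ p ∈ P' := hp
          exact ⟨hp'.2, (Finset.mem_Ioc.mp hp'.1).2⟩
        have hfin : ({p ∈ P' | p ≤ n}).Finite :=
          Set.Finite.subset (Set.finite_Iic n) (fun x hx => hx.2)
        have := Set.ncard_le_ncard hsub hfin
        rw [← Set.ncard_coe_finset sn]
        exact_mod_cast this
      have hxpos : (0:ℝ) < ((2^k : ℕ):ℝ) ^ (-c) := by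
        apply Real.rpow_pos_of_pos
        positivity
      have h3 : (sn.card : ℝ) * (((2^k : ℕ):ℝ) ^ (-c)) ≤
          ((n:ℝ) ^ c / (Real.log n * (Real.log (Real.log n)) ^ r)) * (((2^k : ℕ):ℝ) ^ (-c)) :=
        mul_le_mul_of_nonneg_right (le_of_lt (lt_of_le_of_lt hcard hg)) hxpos.le
      -- now the algebra: RHS = b k
      have hk17 : (17:ℝ) ≤ (k:ℝ) + 1 := by
        have : 16 ≤ k := le_trans hN16 hk
        have : (16:ℝ) ≤ (k:ℝ) := by exact_mod_cast this
        linarith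
      have hlogn : Real.log (n:ℝ) = ((k:ℝ)+1) * L := by
        rw [hndef]
        push_cast
        rw [Real.log_pow]
        push_cast; ring
      have hkLpos : (0:ℝ) < ((k:ℝ)+1) * L := by positivity
      have hloglog1 : 1 ≤ Real.log (((k:ℝ)+1) * L) := by
        rw [Real.le_log_iff_exp_le hkLpos]
        have h1 : Real.exp 1 < 2.7182818286 := Real.exp_one_lt_d9
        nlinarith
      have hmaxeq : max 1 (Real.log (((k:ℝ)+1) * L)) = Real.log (((k:ℝ)+1) * L) :=
        max_eq_right hloglog1
      have hD : (0:ℝ) < ((k:ℝ)+1) * L * (Real.log (((k:ℝ)+1) * L)) ^ r :=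
        mul_pos hkLpos (Real.rpow_pos_of_pos (by linarith) r)
      have hrhs : ((n:ℝ) ^ c / (Real.log n * (Real.log (Real.log n)) ^ r)) *
          (((2^k : ℕ):ℝ) ^ (-c)) = b k := by
        have hpow : ((n:ℕ):ℝ) ^ c * (((2^k : ℕ):ℝ) ^ (-c)) = (2:ℝ)^c := by
          rw [hndef]
          push_cast
          rw [← Real.rpow_natCast 2 (k+1), ← Real.rpow_natCast 2 k,
            ← Real.rpow_mul (by norm_num), ← Real.rpow_mul (by norm_num),
            ← Real.rpow_add (by norm_num)]
          congr 1
          push_cast; ring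
        rw [div_mul_eq_mul_div, hpow, hlogn, div_eq_mul_inv, hbdef]
        simp only [hedef]
        push_cast
        rw [hmaxeq]
      calc ∑ p ∈ Ioc (2^k) (2^(k+1)), pw p = ∑ p ∈ sn, pw p := h1
        _ ≤ sn.card • (((2^k : ℕ):ℝ) ^ (-c)) := h2
        _ = (sn.card : ℝ) * (((2^k : ℕ):ℝ) ^ (-c)) := by rw [nsmul_eq_mul]
        _ ≤ ((n:ℝ) ^ c / (Real.log n * (Real.log (Real.log n)) ^ r)) *
            (((2^k : ℕ):ℝ) ^ (-c)) := h3
        _ = b k := hrhs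
        _ ≤ (if k < N₀ then (2:ℝ)^k else 0) + b k := by
            rw [if_neg (not_lt.mpr hk)]
            linarith
  -- partial sums over Ioc 1 (2^K)
  have hstep : ∀ K : ℕ, ∑ p ∈ Ioc 1 (2^K), pw p ≤
      ∑ k ∈ range K, ((if k < N₀ then (2:ℝ)^k else 0) + b k) := by
    intro K
    induction K with
    | zero => simp
    | succ K ih =>
      have h1K : (1:ℕ) ≤ 2^K := Nat.one_le_two_pow
      have hKsucc : (2:ℕ)^K ≤ 2^(K+1) := Nat.pow_le_pow_right (by norm_num) (Nat.le_succ K)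
      rw [← Finset.sum_Ioc_consecutive _ h1K hKsucc, Finset.sum_range_succ]
      exact add_le_add ih (hblock K)
  set C : ℝ := (∑ k ∈ range N₀, (2:ℝ)^k) + (∑' k, b k) with hCdef
  have hbound : ∀ K : ℕ, ∑ k ∈ range K, ((if k < N₀ then (2:ℝ)^k else 0) + b k) ≤ C := by
    intro K
    rw [Finset.sum_add_distrib]
    have h1 : ∑ k ∈ range K, (if k < N₀ then (2:ℝ)^k else 0) ≤ ∑ k ∈ range N₀, (2:ℝ)^k := by
      rw [← Finset.sum_filter]
      refine Finset.sum_le_sum_of_subset_of_nonneg ?_ (fun i _ _ => by positivity)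
      intro x hx
      rw [Finset.mem_filter] at hx
      exact Finset.mem_range.mpr hx.2
    have h2 : ∑ k ∈ range K, b k ≤ ∑' k, b k :=
      Summable.sum_le_tsum _ (fun i _ => hb_nonneg i) hsumb
    rw [hCdef]
    exact add_le_add h1 h2
  refine ⟨C, fun t => ?_⟩
  set s : Finset ℕ := t.filter (· ∈ P') with hsdef
  have h1 : ∑ p ∈ t, Set.indicator P' (fun q => (q:ℝ) ^ (-c)) p = ∑ p ∈ s, pw p := by
    refine (Finset.sum_subset (Finset.filter_subset _ _) ?_).symm
    intro x hx hnx
    have : x ∉ P' := fun hxP => hnx (Finset.mem_filter.mpr ⟨hx, hxP⟩)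
    exact Set.indicator_of_notMem this _
  have hsub : s ⊆ Ioc 1 (2^(t.sup id)) := by
    intro p hp
    rw [Finset.mem_filter] at hp
    have hpP := hp.2
    have hp1 : 1 < p := (hprime p hpP).one_lt
    have hple : p ≤ t.sup id := Finset.le_sup (f := id) hp.1
    have : p ≤ 2^(t.sup id) := le_trans hple Nat.lt_two_pow_self.le
    exact Finset.mem_Ioc.mpr ⟨hp1, this⟩
  have h2 : ∑ p ∈ s, pw p ≤ ∑ p ∈ Ioc 1 (2^(t.sup id)), pw p :=
    Finset.sum_le_sum_of_subset_of_nonneg hsub (fun i _ _ => hpw_nonneg i)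
  rw [h1]
  exact le_trans h2 (le_trans (hstep _) (hbound _))

private lemma aux_euler {P' : Set ℕ} (hprime : ∀ p ∈ P', p.Prime) {c : ℝ} (hc : 0 < c)
    {C : ℝ} (hC : ∀ t : Finset ℕ, ∑ p ∈ t, Set.indicator P' (fun q => (q:ℝ) ^ (-c)) p ≤ C) :
    Summable (Set.indicator {m : ℕ | m ≠ 0 ∧ ∀ p ∈ m.primeFactorsList, p ∈ P'}
      (fun m => (m:ℝ) ^ (-c))) := by
  classical
  set F : Set ℕ := {m : ℕ | m ≠ 0 ∧ ∀ p ∈ m.primeFactorsList, p ∈ P'} with hFdef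
  set fm : ℕ →* ℝ :=
    { toFun := fun m => (m:ℝ) ^ (-c)
      map_one' := by norm_num
      map_mul' := by
        intro m n
        push_cast
        exact Real.mul_rpow (by positivity) (by positivity) } with hfmdef
  have hfm : ∀ m : ℕ, fm m = (m:ℝ) ^ (-c) := fun m => rfl
  have hfm_nonneg : ∀ m : ℕ, 0 ≤ fm m := fun m => by rw [hfm]; positivity
  have hlt : ∀ {p : ℕ}, p.Prime → ‖fm p‖ < 1 := by
    intro p hp
    rw [Real.norm_eq_abs, abs_of_nonneg (hfm_nonneg p), hfm]
    refine Real.rpow_lt_one_of_one_lt_of_neg ?_ (by linarith)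
    exact_mod_cast hp.one_lt
  set A : ℝ := (1 - (2:ℝ) ^ (-c))⁻¹ with hAdef
  have h2c : (2:ℝ) ^ (-c) < 1 :=
    Real.rpow_lt_one_of_one_lt_of_neg one_lt_two (by linarith)
  have h2c0 : (0:ℝ) < (2:ℝ) ^ (-c) := Real.rpow_pos_of_pos two_pos _
  have hA0 : 0 < A := by rw [hAdef]; exact inv_pos.mpr (by linarith)
  have hGF_nonneg : ∀ m, 0 ≤ Set.indicator F (fun m => (m:ℝ) ^ (-c)) m := fun m =>
    Set.indicator_apply_nonneg (fun _ => by positivity)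
  refine summable_of_sum_range_le hGF_nonneg (c := Real.exp (A * C)) (fun n => ?_)
  set sn : Finset ℕ := (range n).filter (· ∈ P') with hsndef
  have hEuler := EulerProduct.summable_and_hasSum_factoredNumbers_prod_filter_prime_geometric
    (f := fm) (fun {p} hp => hlt hp) sn
  have hsumInd : Summable (Set.indicator (Nat.factoredNumbers sn) (fm ·)) :=
    summable_subtype_iff_indicator.mp hEuler.2.summable
  have hstep1 : ∑ m ∈ range n, Set.indicator F (fun m => (m:ℝ) ^ (-c)) m ≤
      ∑ m ∈ range n, Set.indicator (Nat.factoredNumbers sn) (fm ·) m := by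
    refine Finset.sum_le_sum (fun m hm => ?_)
    by_cases hmF : m ∈ F
    · have hmfac : m ∈ Nat.factoredNumbers sn := by
        refine ⟨hmF.1, fun p hp => ?_⟩
        have hpP : p ∈ P' := hmF.2 p hp
        have hpm : p ≤ m := Nat.le_of_dvd (Nat.pos_of_ne_zero hmF.1)
          (Nat.dvd_of_mem_primeFactorsList hp)
        have hpn : p < n := lt_of_le_of_lt hpm (Finset.mem_range.mp hm)
        exact Finset.mem_filter.mpr ⟨Finset.mem_range.mpr hpn, hpP⟩
      rw [Set.indicator_of_mem hmF, Set.indicator_of_mem hmfac, hfm]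
    · rw [Set.indicator_of_notMem hmF]
      exact Set.indicator_apply_nonneg (fun _ => hfm_nonneg m)
  have hstep2 : ∑ m ∈ range n, Set.indicator (Nat.factoredNumbers sn) (fm ·) m ≤
      ∑' m : ℕ, Set.indicator (Nat.factoredNumbers sn) (fm ·) m :=
    Summable.sum_le_tsum _ (fun m _ => Set.indicator_apply_nonneg (fun _ => hfm_nonneg m)) hsumInd
  have hstep3 : ∑' m : ℕ, Set.indicator (Nat.factoredNumbers sn) (fm ·) m =
      ∏ p ∈ sn with p.Prime, (1 - fm p)⁻¹ := by
    rw [← tsum_subtype (Nat.factoredNumbers sn) (fm ·)]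
    exact hEuler.2.tsum_eq
  have hstep4 : ∏ p ∈ sn with p.Prime, (1 - fm p)⁻¹ ≤ Real.exp (A * C) := by
    have hfac : ∀ p ∈ sn.filter (·.Prime), (1 - fm p)⁻¹ ≤ Real.exp (A * fm p) := by
      intro p hp
      have hpp : p.Prime := (Finset.mem_filter.mp hp).2
      have hp2 : (2:ℝ) ≤ (p:ℝ) := by exact_mod_cast hpp.two_le
      have ht0 : 0 < fm p := by rw [hfm]; positivity
      have ht2 : fm p ≤ (2:ℝ) ^ (-c) := by
        rw [hfm]
        exact Real.rpow_le_rpow_of_nonpos two_pos hp2 (by linarith)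
      have h1t : 0 < 1 - fm p := by linarith
      have hAinv : A * (1 - (2:ℝ) ^ (-c)) = 1 := by
        rw [hAdef]
        exact inv_mul_cancel₀ (by linarith)
      have h6 : 1 ≤ A * (1 - fm p) := by
        rw [← hAinv]
        exact mul_le_mul_of_nonneg_left (by linarith) hA0.le
      have hkey : 1 ≤ (1 + A * fm p) * (1 - fm p) := by
        nlinarith [mul_nonneg ht0.le (sub_nonneg.mpr h6)]
      have h5 : (1 - fm p)⁻¹ ≤ 1 + A * fm p := by
        rw [inv_eq_one_div, div_le_iff₀ h1t]
        linarith [hkey]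
      refine h5.trans ?_
      have := Real.add_one_le_exp (A * fm p)
      linarith
    have hprod : ∏ p ∈ sn with p.Prime, (1 - fm p)⁻¹ ≤
        ∏ p ∈ sn with p.Prime, Real.exp (A * fm p) := by
      refine Finset.prod_le_prod (fun p hp => ?_) hfac
      have hpp : p.Prime := (Finset.mem_filter.mp hp).2
      have hlt' := hlt hpp
      rw [Real.norm_eq_abs, abs_of_nonneg (hfm_nonneg p)] at hlt'
      have h1t : 0 < 1 - fm p := by linarith
      positivity
    refine hprod.trans ?_
    rw [← Real.exp_sum]
    refine Real.exp_le_exp.mpr ?_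
    rw [← Finset.mul_sum]
    refine mul_le_mul_of_nonneg_left ?_ hA0.le
    have heq : ∑ p ∈ sn with p.Prime, fm p =
        ∑ p ∈ sn.filter (·.Prime), Set.indicator P' (fun q => (q:ℝ) ^ (-c)) p := by
      refine Finset.sum_congr rfl (fun p hp => ?_)
      have hpP : p ∈ P' := (Finset.mem_filter.mp ((Finset.mem_filter.mp hp).1)).2
      rw [Set.indicator_of_mem hpP, hfm]
    rw [heq]
    exact hC _
  calc ∑ m ∈ range n, Set.indicator F (fun m => (m:ℝ) ^ (-c)) m
      ≤ ∑ m ∈ range n, Set.indicator (Nat.factoredNumbers sn) (fm ·) m := hstep1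
    _ ≤ ∑' m : ℕ, Set.indicator (Nat.factoredNumbers sn) (fm ·) m := hstep2
    _ = ∏ p ∈ sn with p.Prime, (1 - fm p)⁻¹ := hstep3
    _ ≤ Real.exp (A * C) := hstep4

theorem primesCount_ge_rpow_div_log_loglog (α : ℝ) (hα : 1 ≤ α) (S : Set ℕ)
    (hS : HasPolyDensity S α) (r : ℝ) (hr : 1 < r) :
    {n : ℕ | 16 ≤ n ∧
      (n : ℝ) ^ (1 / α) / (Real.log n * (Real.log (Real.log n)) ^ r)
        ≤ (primesCount S n : ℝ)}.Infinite := by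
  classical
  by_contra hfin
  rw [Set.not_infinite] at hfin
  obtain ⟨h0S, K, hK, hdens⟩ := hS
  have hα0 : (0:ℝ) < α := lt_of_lt_of_le one_pos hα
  set c : ℝ := 1 / α with hcdef
  have hc : 0 < c := by positivity
  set P' : Set ℕ := PrimeFactors S with hP'def
  have hprime : ∀ p ∈ P', p.Prime := fun p hp => hp.1
  obtain ⟨B, hB⟩ := hfin.bddAbove
  set N₀ : ℕ := max 16 (B+1) with hN₀def
  have hN16 : 16 ≤ N₀ := le_max_left _ _
  have hcount : ∀ n : ℕ, N₀ ≤ n →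
      (({p ∈ P' | p ≤ n}).ncard : ℝ) <
        (n:ℝ) ^ c / (Real.log n * (Real.log (Real.log n)) ^ r) := by
    intro n hn
    by_contra hcon
    push_neg at hcon
    have hmem : n ∈ {n : ℕ | 16 ≤ n ∧
        (n : ℝ) ^ (1 / α) / (Real.log n * (Real.log (Real.log n)) ^ r)
          ≤ (primesCount S n : ℝ)} := by
      refine ⟨le_trans hN16 hn, ?_⟩
      rw [hcdef] at hcon
      exact hcon
    have h10 : n ≤ B := hB hmem
    have h11 : B + 1 ≤ n := le_trans (le_max_right 16 (B+1)) hn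
    omega
  obtain ⟨C, hC⟩ := aux_primeSumBound hprime hc hr hN16 hcount
  have hGF := aux_euler hprime hc hC
  set F : Set ℕ := {m : ℕ | m ≠ 0 ∧ ∀ p ∈ m.primeFactorsList, p ∈ P'} with hFdef
  set GF : ℕ → ℝ := Set.indicator F (fun m => (m:ℝ) ^ (-c)) with hGFdef
  have hGF_nonneg : ∀ m, 0 ≤ GF m := fun m =>
    Set.indicator_apply_nonneg (fun _ => by positivity)
  set L0 : ℝ := ∑' m, GF m with hL0def
  have htend : Filter.Tendsto (fun n => ∑ m ∈ range n, GF m) Filter.atTop (nhds L0) :=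
    hGF.hasSum.tendsto_sum_nat
  have hev : ∀ᶠ n in Filter.atTop, L0 - K/2 < ∑ m ∈ range n, GF m :=
    htend.eventually (eventually_gt_nhds (by linarith))
  obtain ⟨M, hM⟩ := hev.exists
  have htail : ∀ T : Finset ℕ, (∀ m ∈ T, M ≤ m) → ∑ m ∈ T, GF m < K/2 := by
    intro T hT
    have hdisj : Disjoint (range M) T := by
      rw [Finset.disjoint_left]
      intro a ha haT
      exact absurd (hT a haT) (not_le.mpr (Finset.mem_range.mp ha))
    have hle : ∑ m ∈ range M ∪ T, GF m ≤ L0 :=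
      Summable.sum_le_tsum _ (fun m _ => hGF_nonneg m) hGF
    rw [Finset.sum_union hdisj] at hle
    linarith
  have hmain : ∀ n : ℕ, 1 ≤ n → K/2 * (n:ℝ)^c ≤ M := by
    intro n hn1
    set T : Finset ℕ := (Finset.Icc M n).filter (· ∈ F) with hTdef
    have hnpos : (0:ℝ) < (n:ℝ) := by exact_mod_cast hn1
    have hcardT : (T.card : ℝ) * ((n:ℝ)^(-c)) ≤ ∑ m ∈ T, GF m := by
      have h12 : ∀ m ∈ T, (n:ℝ)^(-c) ≤ GF m := by
        intro m hm
        have hmF : m ∈ F := (Finset.mem_filter.mp hm).2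
        have hmIcc := Finset.mem_Icc.mp (Finset.mem_filter.mp hm).1
        rw [hGFdef, Set.indicator_of_mem hmF]
        have hm0 : (0:ℝ) < (m:ℝ) := by
          have := Nat.pos_of_ne_zero hmF.1
          exact_mod_cast this
        refine Real.rpow_le_rpow_of_nonpos hm0 ?_ (by linarith)
        exact_mod_cast hmIcc.2
      have h13 := Finset.card_nsmul_le_sum T GF ((n:ℝ)^(-c)) h12
      rwa [nsmul_eq_mul] at h13
    have hTsum : ∑ m ∈ T, GF m < K/2 :=
      htail T (fun m hm => (Finset.mem_Icc.mp (Finset.mem_filter.mp hm).1).1)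
    have hnc : (0:ℝ) < (n:ℝ)^c := Real.rpow_pos_of_pos hnpos c
    have hncinv : (0:ℝ) < (n:ℝ)^(-c) := Real.rpow_pos_of_pos hnpos _
    have hcardT' : (T.card : ℝ) ≤ K/2 * (n:ℝ)^c := by
      have h14 : (T.card:ℝ) * (n:ℝ)^(-c) * (n:ℝ)^c ≤ K/2 * (n:ℝ)^c :=
        mul_le_mul_of_nonneg_right (le_of_lt (lt_of_le_of_lt hcardT hTsum)) hnc.le
      rwa [mul_assoc, ← Real.rpow_add hnpos, neg_add_cancel, Real.rpow_zero, mul_one] at h14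
    have hsubset : {s ∈ S | s ≤ n} ⊆ ((range M ∪ T : Finset ℕ) : Set ℕ) := by
      intro s hs
      rw [Finset.coe_union, Set.mem_union]
      rcases lt_or_ge s M with h | h
      · left
        exact Finset.mem_coe.mpr (Finset.mem_range.mpr h)
      · right
        have hsF : s ∈ F := by
          refine ⟨fun h0 => h0S (h0 ▸ hs.1), fun p hp => ?_⟩
          exact ⟨Nat.prime_of_mem_primeFactorsList hp, s, hs.1,
            Nat.dvd_of_mem_primeFactorsList hp⟩
        exact Finset.mem_coe.mpr (Finset.mem_filter.mpr ⟨Finset.mem_Icc.mpr ⟨h, hs.2⟩, hsF⟩)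
    have hncard : (({s ∈ S | s ≤ n}).ncard : ℝ) ≤ (M : ℝ) + T.card := by
      have h8 := Set.ncard_le_ncard hsubset (Finset.finite_toSet _)
      rw [Set.ncard_coe_finset] at h8
      have h9 : (range M ∪ T).card ≤ M + T.card := by
        refine le_trans (Finset.card_union_le _ _) ?_
        simp [Finset.card_range]
      have : ({s ∈ S | s ≤ n}).ncard ≤ M + T.card := le_trans h8 h9
      exact_mod_cast this
    have hdens' := hdens n (by omega)
    have hchain : K * (n:ℝ)^c ≤ (M:ℝ) + K/2 * (n:ℝ)^c := by
      calc K * (n:ℝ)^c ≤ (({s ∈ S | s ≤ n}).ncard : ℝ) := hdens'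
        _ ≤ (M:ℝ) + T.card := hncard
        _ ≤ (M:ℝ) + K/2 * (n:ℝ)^c := by linarith
    linarith
  -- final contradiction
  set x : ℝ := 2 * M / K + 1 with hxdef
  have hx1 : 1 ≤ x := by
    rw [hxdef]
    have : (0:ℝ) ≤ 2 * M / K := by positivity
    linarith
  set n₁ : ℕ := max 1 ⌈x ^ (1/c)⌉₊ with hn₁def
  have hn11 : 1 ≤ n₁ := le_max_left _ _
  have hxn : x ≤ (n₁:ℝ)^c := by
    have h9 : x^(1/c) ≤ (n₁:ℝ) := by
      refine le_trans (Nat.le_ceil _) ?_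
      exact_mod_cast le_max_right 1 ⌈x ^ (1/c)⌉₊
    calc x = (x^(1/c))^c := by
          rw [← Real.rpow_mul (by linarith : (0:ℝ) ≤ x), one_div,
            inv_mul_cancel₀ (ne_of_gt hc), Real.rpow_one]
      _ ≤ (n₁:ℝ)^c := Real.rpow_le_rpow (by positivity) h9 hc.le
  have hfin2 := hmain n₁ hn11
  have h15 : K/2 * x ≤ K/2 * (n₁:ℝ)^c := mul_le_mul_of_nonneg_left hxn (by linarith)
  have h16 : K/2 * x = (M:ℝ) + K/2 := by
    rw [hxdef]
    field_simp
  linarith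
end

section
/- Let α ≥ 1 be a real number and let S be a set of positive integers of polynomial density α. Then the series ∑_{s ∈ S} s^{-1/α} diverges; that is, the partial sums N ↦ ∑_{s ∈ S, s ≤ N} s^{-1/α} tend to infinity as N → ∞. -/
theorem sum_rpow_diverges (α : ℝ) (hα : 1 ≤ α) (S : Set ℕ)
    (hS : HasPolyDensity S α) :
    Filter.Tendsto
      (fun N : ℕ => ∑ s ∈ Finset.range (N + 1),
        Set.indicator S (fun s : ℕ => (s : ℝ) ^ (-(1 / α))) s)
      Filter.atTop Filter.atTop := by
  classical
  obtain ⟨h0, K, hK, hcard⟩ := hS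
  have hα0 : (0:ℝ) < α := lt_of_lt_of_le one_pos hα
  have hc : (0:ℝ) < 1/α := by positivity
  set g : ℕ → ℝ := fun s => (s:ℝ) ^ (-(1/α)) with hg
  have hgnn : ∀ s : ℕ, 0 ≤ g s := fun s => Real.rpow_nonneg (by positivity) _
  set A : ℕ → Finset ℕ := fun n => (Finset.range (n+1)).filter (· ∈ S) with hA
  have hf : ∀ N : ℕ, (∑ s ∈ Finset.range (N+1), Set.indicator S g s) = ∑ s ∈ A N, g s := by
    intro N
    rw [Finset.sum_filter]
    refine Finset.sum_congr rfl fun s _ => ?_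
    simp [Set.indicator_apply]
  have hcardA : ∀ n : ℕ, 0 < n → K * (n:ℝ)^(1/α) ≤ (A n).card := by
    intro n hn
    have hset : ({s ∈ S | s ≤ n} : Set ℕ) = ↑(A n) := by
      ext s; simp [hA, Nat.lt_succ_iff, and_comm]
    have := hcard n hn
    rwa [hset, Set.ncard_coe_finset] at this
  have hAle : ∀ n : ℕ, (A n).card ≤ n := by
    intro n
    have hsub : A n ⊆ Finset.Icc 1 n := by
      intro s hs
      simp only [hA, Finset.mem_filter, Finset.mem_range, Nat.lt_succ_iff] at hs
      have : s ≠ 0 := fun h => h0 (h ▸ hs.2)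
      simp [Finset.mem_Icc, Nat.one_le_iff_ne_zero.mpr this, hs.1]
    simpa using Finset.card_le_card hsub
  have hAmono : ∀ {m n : ℕ}, m ≤ n → A m ⊆ A n := by
    intro m n h
    exact Finset.filter_subset_filter _ (Finset.range_subset_range.mpr (by omega))
  -- key step: from any M we can gain K/2
  have key : ∀ M : ℕ, 0 < M → ∃ N, M < N ∧ (∑ s ∈ A M, g s) + K/2 ≤ ∑ s ∈ A N, g s := by
    intro M hM
    set y : ℝ := (2*M/K)^α with hy
    have hyn : (0:ℝ) ≤ 2*M/K := by positivity
    set N : ℕ := max (M+1) ⌈y⌉₊ with hN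
    have hMN : M < N := lt_of_lt_of_le (Nat.lt_succ_self M) (le_max_left _ _)
    have hNpos : 0 < N := lt_trans hM hMN
    have hNy : y ≤ (N:ℝ) := (Nat.le_ceil y).trans (Nat.cast_le.mpr (le_max_right _ _))
    have hNr : 2*M/K ≤ (N:ℝ)^(1/α) := by
      calc 2*M/K = ((2*M/K)^α)^(1/α) := by
            rw [← Real.rpow_mul hyn, mul_one_div_cancel (ne_of_gt hα0), Real.rpow_one]
        _ ≤ (N:ℝ)^(1/α) := Real.rpow_le_rpow (Real.rpow_nonneg hyn _) hNy (le_of_lt hc)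
    have hNrpos : (0:ℝ) < (N:ℝ)^(1/α) := Real.rpow_pos_of_pos (by exact_mod_cast hNpos) _
    have hbpos : (0:ℝ) < g N := by
      rw [hg]; exact Real.rpow_pos_of_pos (by exact_mod_cast hNpos) _
    have hsub : A M ⊆ A N := hAmono (le_of_lt hMN)
    -- each element of A N \ A M has g s ≥ g N
    have hterm : ∀ s ∈ A N \ A M, g N ≤ g s := by
      intro s hs
      have hs' := Finset.mem_sdiff.mp hs
      have hsN : s ≤ N ∧ s ∈ S := by
        have := hs'.1
        simp only [hA, Finset.mem_filter, Finset.mem_range, Nat.lt_succ_iff] at this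
        exact this
      have hspos : 0 < s := Nat.pos_of_ne_zero (fun h => h0 (h ▸ hsN.2))
      have h1 : (s:ℝ)^(1/α) ≤ (N:ℝ)^(1/α) :=
        Real.rpow_le_rpow (by positivity) (by exact_mod_cast hsN.1) (le_of_lt hc)
      have hspos' : (0:ℝ) < (s:ℝ)^(1/α) := Real.rpow_pos_of_pos (by exact_mod_cast hspos) _
      rw [hg]
      simp only [Real.rpow_neg (by positivity : (0:ℝ) ≤ (N:ℝ)),
        Real.rpow_neg (by positivity : (0:ℝ) ≤ (s:ℝ))]
      exact inv_anti₀ hspos' h1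
    have hsum_ge : ((A N \ A M).card : ℝ) * g N ≤ ∑ s ∈ A N \ A M, g s := by
      have := Finset.card_nsmul_le_sum (A N \ A M) g (g N) hterm
      simpa [nsmul_eq_mul] using this
    have hcard_sdiff : ((A N \ A M).card : ℝ) = ((A N).card : ℝ) - ((A M).card : ℝ) := by
      rw [Finset.card_sdiff_of_subset hsub, Nat.cast_sub (Finset.card_le_card hsub)]
    have hgN : g N = ((N:ℝ)^(1/α))⁻¹ := by
      rw [hg]; simp [Real.rpow_neg (by positivity : (0:ℝ) ≤ (N:ℝ))]
    have hcount : K * (N:ℝ)^(1/α) - M ≤ ((A N \ A M).card : ℝ) := by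
      rw [hcard_sdiff]
      have h1 := hcardA N hNpos
      have h2 : ((A M).card : ℝ) ≤ M := by exact_mod_cast hAle M
      linarith
    have hKhalf : K/2 ≤ ((A N \ A M).card : ℝ) * g N := by
      have hM1 : (1:ℝ) ≤ M := by exact_mod_cast hM
      have h3 : (K * (N:ℝ)^(1/α) - M) * g N ≤ ((A N \ A M).card : ℝ) * g N :=
        mul_le_mul_of_nonneg_right hcount (le_of_lt hbpos)
      have h4 : (K * (N:ℝ)^(1/α) - M) * g N = K - M * ((N:ℝ)^(1/α))⁻¹ := by
        rw [hgN]; field_simp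
      have h5 : (M:ℝ) * ((N:ℝ)^(1/α))⁻¹ ≤ K/2 := by
        rw [← div_eq_mul_inv, div_le_iff₀ hNrpos]
        have h6 : K/2 * (2*M/K) ≤ K/2 * (N:ℝ)^(1/α) :=
          mul_le_mul_of_nonneg_left hNr (by positivity)
        have h7 : K/2 * (2*M/K) = M := by field_simp
        linarith
      linarith
    refine ⟨N, hMN, ?_⟩
    have hsplit : ∑ s ∈ A N \ A M, g s + ∑ s ∈ A M, g s = ∑ s ∈ A N, g s :=
      Finset.sum_sdiff hsub
    linarith
  -- growth by induction
  have grow : ∀ k : ℕ, ∃ N, 0 < N ∧ (k:ℝ) * (K/2) ≤ ∑ s ∈ A N, g s := by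
    intro k
    induction k with
    | zero =>
      refine ⟨1, one_pos, ?_⟩
      simp only [Nat.cast_zero, zero_mul]
      exact Finset.sum_nonneg fun s _ => hgnn s
    | succ k ih =>
      obtain ⟨M, hM, hsum⟩ := ih
      obtain ⟨N, hMN, hstep⟩ := key M hM
      refine ⟨N, lt_trans hM hMN, ?_⟩
      push_cast
      linarith
  apply Filter.tendsto_atTop_atTop_of_monotone
  · intro a b hab
    apply Finset.sum_le_sum_of_subset_of_nonneg
    · exact Finset.range_subset_range.mpr (by omega)
    · intro i _ _
      exact Set.indicator_nonneg (fun s _ => hgnn s) i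
  · intro C
    obtain ⟨k, hk⟩ := exists_nat_ge (C / (K/2))
    obtain ⟨N, _, hN⟩ := grow k
    refine ⟨N, ?_⟩
    rw [hf N]
    have : C ≤ (k:ℝ) * (K/2) := by
      rw [div_le_iff₀ (by positivity)] at hk
      linarith
    linarith
end

section
/- Let α ≥ 1 be a real number, let S be a set of positive integers (0 ∉ S), and let N be a positive integer. Then ∏_{p ∈ P(S), p ≤ N} 1/(1 - p^{-1/α}) ≥ ∑_{s ∈ S, s ≤ N} s^{-1/α}, where the product is over the (finitely many) primes p ≤ N belonging to P(S). -/
/-!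
The function `n ↦ n ^ (-1/α)` is completely multiplicative with values in `[0, 1)` at primes, and
every `s ∈ S` with `s ≤ N` factors over the primes of `P(S)` up to `N`. Hence the partial sum is a
finite part of the nonnegative series of `m ^ (-1/α)` over all `m` factored over those primes,
which by the Euler product for completely multiplicative functions equals
`∏ p, (1 - p ^ (-1/α))⁻¹`.
-/

noncomputable def Nat.rpowMonoidHom (c : ℝ) : ℕ →* ℝ where
  toFun n := (n : ℝ) ^ c
  map_one' := by simp
  map_mul' m n := by push_cast; exact Real.mul_rpow m.cast_nonneg n.cast_nonneg

theorem sum_le_prod_one_sub_inv_of_subset_factoredNumbers {f : ℕ →* ℝ}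
    (hf_nonneg : ∀ n, 0 ≤ f n) (hf_lt_one : ∀ p, p.Prime → f p < 1) {P T : Finset ℕ}
    (hT : (T : Set ℕ) ⊆ Nat.factoredNumbers P) :
    ∑ m ∈ T, f m ≤ ∏ p ∈ P with p.Prime, (1 - f p)⁻¹ := by
  have hsum := (EulerProduct.summable_and_hasSum_factoredNumbers_prod_filter_prime_geometric
    (f := f) (fun hp ↦ by rw [Real.norm_of_nonneg (hf_nonneg _)]; exact hf_lt_one _ hp) P).2
  rw [← Function.comp_def, hasSum_subtype_iff_indicator] at hsum
  calc ∑ m ∈ T, f m = ∑ m ∈ T, (Nat.factoredNumbers P).indicator f m :=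
        Finset.sum_congr rfl fun m hm ↦ (Set.indicator_of_mem (hT hm) f).symm
    _ ≤ _ := sum_le_hasSum T (fun m _ ↦ Set.indicator_nonneg (fun n _ ↦ hf_nonneg n) m) hsum

theorem coe_filter_mem_subset_factoredNumbers {S : Set ℕ} [DecidablePred (· ∈ S)]
    [DecidablePred (· ∈ PrimeFactors S)] (hS : 0 ∉ S) (N : ℕ) :
    (↑{s ∈ Finset.range (N + 1) | s ∈ S} : Set ℕ) ⊆
      Nat.factoredNumbers {p ∈ Finset.range (N + 1) | p ∈ PrimeFactors S} := by
  intro s hs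
  obtain ⟨hsN, hsS⟩ := Finset.mem_filter.mp hs
  have hs_pos : 0 < s := Nat.pos_of_ne_zero (ne_of_mem_of_not_mem hsS hS)
  refine Nat.mem_factoredNumbers'.mpr fun p hp hps ↦ Finset.mem_filter.mpr ⟨?_, hp, s, hsS, hps⟩
  exact Finset.mem_range_succ_iff.mpr
    ((Nat.le_of_dvd hs_pos hps).trans (Finset.mem_range_succ_iff.mp hsN))

theorem partialProd_ge_partialSum_general (α : ℝ) (hα : 1 ≤ α) (S : Set ℕ) (hS : 0 ∉ S)
    (N : ℕ) :
    ∑ s ∈ Finset.range (N + 1), Set.indicator S (fun s : ℕ => (s : ℝ) ^ (-(1 / α))) s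
      ≤ ∏ p ∈ Finset.range (N + 1),
          Set.mulIndicator (PrimeFactors S)
            (fun p : ℕ => 1 / (1 - (p : ℝ) ^ (-(1 / α)))) p := by
  classical
  have hc : -(1 / α) < 0 := neg_neg_of_pos (one_div_pos.mpr (zero_lt_one.trans_le hα))
  have hprime : ∀ p ∈ {p ∈ Finset.range (N + 1) | p ∈ PrimeFactors S}, p.Prime :=
    fun p hp ↦ (Finset.mem_filter.mp hp).2.1
  rw [Finset.sum_indicator_eq_sum_filter, Finset.prod_mulIndicator_eq_prod_filter]
  calc ∑ s ∈ Finset.range (N + 1) with s ∈ S, (s : ℝ) ^ (-(1 / α))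
      ≤ ∏ p ∈ {p ∈ Finset.range (N + 1) | p ∈ PrimeFactors S} with p.Prime,
          (1 - Nat.rpowMonoidHom (-(1 / α)) p)⁻¹ :=
        sum_le_prod_one_sub_inv_of_subset_factoredNumbers (f := Nat.rpowMonoidHom (-(1 / α)))
          (fun n ↦ Real.rpow_nonneg n.cast_nonneg _)
          (fun p hp ↦ Real.rpow_lt_one_of_one_lt_of_neg (by exact_mod_cast hp.one_lt) hc)
          (coe_filter_mem_subset_factoredNumbers hS N)
    _ = _ := by
        rw [Finset.filter_true_of_mem hprime]
        simp only [one_div]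
        rfl

theorem partialProd_ge_partialSum (α : ℝ) (hα : 1 ≤ α) (S : Set ℕ) (hS : 0 ∉ S)
    (N : ℕ) (hN : 0 < N) :
    ∑ s ∈ Finset.range (N + 1), Set.indicator S (fun s : ℕ => (s : ℝ) ^ (-(1 / α))) s
      ≤ ∏ p ∈ Finset.range (N + 1),
          Set.mulIndicator (PrimeFactors S)
            (fun p : ℕ => 1 / (1 - (p : ℝ) ^ (-(1 / α)))) p :=
  partialProd_ge_partialSum_general α hα S hS N
end

section
/- Let α ≥ 1 be a real number and let S be a set of positive integers of polynomial density α. Then the series ∑_{p ∈ P(S)} (1/(1 - p^{-1/α}) - 1) diverges to infinity. -/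
private lemma tele_sum (f : ℕ → ℝ) (s : ℕ) :
    ∀ n, s ≤ n + 1 → ∑ m ∈ Finset.Icc s n, (f m - f (m + 1)) = f s - f (n + 1) := by
  intro n
  induction n with
  | zero =>
    intro hs
    interval_cases s
    · simp
    · simp
  | succ n ih =>
    intro hs
    rcases Nat.lt_or_ge s (n + 2) with h | h
    · have h' : s ≤ n + 1 := Nat.lt_succ_iff.mp h
      rw [Finset.sum_Icc_succ_top h', ih h']
      ring
    · have hs2 : s = n + 2 := le_antisymm hs h
      subst hs2
      rw [Finset.Icc_eq_empty (by omega)]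
      simp

theorem sum_euler_terms_diverges (α : ℝ) (hα : 1 ≤ α) (S : Set ℕ)
    (hS : HasPolyDensity S α) :
    Filter.Tendsto
      (fun N : ℕ => ∑ p ∈ Finset.range (N + 1),
        Set.indicator (PrimeFactors S)
          (fun p : ℕ => 1 / (1 - (p : ℝ) ^ (-(1 / α))) - 1) p)
      Filter.atTop Filter.atTop := by
  classical
  obtain ⟨h0S, K, hK, hcard⟩ := hS
  have hα0 : (0:ℝ) < α := lt_of_lt_of_le one_pos hα
  set t : ℝ := 1 / α with ht
  have ht0 : 0 < t := by positivity
  have ht1 : t ≤ 1 := by rw [ht, div_le_one hα0]; exact hα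
  set f : ℕ → ℝ := fun m => (m : ℝ) ^ (-t) with hf
  set a : ℕ → ℝ := fun p => 1 / (1 - (p : ℝ) ^ (-t)) - 1 with ha
  have hfnonneg : ∀ m, 0 ≤ f m := fun m => Real.rpow_nonneg (Nat.cast_nonneg m) _
  have hplt : ∀ p : ℕ, p.Prime → (p:ℝ) ^ (-t) < 1 := fun p hp =>
    Real.rpow_lt_one_of_one_lt_of_neg (by exact_mod_cast hp.one_lt) (by linarith)
  have hppos : ∀ p : ℕ, p.Prime → 0 < (p:ℝ) ^ (-t) := fun p hp =>
    Real.rpow_pos_of_pos (by exact_mod_cast hp.pos) _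
  have hanonneg : ∀ p ∈ PrimeFactors S, 0 ≤ a p := by
    intro p hp
    have h1 := hplt p hp.1
    have h2 := hppos p hp.1
    have h3 : 1 ≤ 1 / (1 - (p:ℝ) ^ (-t)) := by
      rw [le_div_iff₀ (by linarith)]; linarith
    simp only [ha]; linarith
  set P : ℕ → ℝ := fun N => ∑ p ∈ Finset.range (N + 1),
      Set.indicator (PrimeFactors S) a p with hP
  have hPmono : Monotone P := by
    intro N M h
    apply Finset.sum_le_sum_of_subset_of_nonneg
      (Finset.range_subset_range.mpr (by omega))
    intro p _ _
    exact Set.indicator_nonneg hanonneg p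
  set F : ℕ → Finset ℕ := fun N => (Finset.range (N + 1)).filter (· ∈ PrimeFactors S) with hF
  set T : ℕ → Finset ℕ := fun N => (Finset.range (N + 1)).filter (· ∈ S) with hT
  have hPsum : ∀ N, P N = ∑ p ∈ F N, a p := by
    intro N
    simp only [hP, hF]
    rw [Finset.sum_filter]
    exact Finset.sum_congr rfl fun p _ => Set.indicator_apply _ _ _
  -- exp bound
  have hexp : ∀ N, ∏ p ∈ F N, (1 - (p:ℝ) ^ (-t))⁻¹ ≤ Real.exp (P N) := by
    intro N
    rw [hPsum N, Real.exp_sum]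
    apply Finset.prod_le_prod
    · intro p hp
      have hp' := (Finset.mem_filter.mp hp).2
      have h1 := hplt p hp'.1
      exact inv_nonneg.mpr (by linarith)
    · intro p hp
      have hp' := (Finset.mem_filter.mp hp).2
      have h1 := hplt p hp'.1
      have h2 := hppos p hp'.1
      have he : (1 - (p:ℝ) ^ (-t))⁻¹ = 1 + a p := by
        simp only [ha, one_div]
        ring
      rw [he]
      linarith [Real.add_one_le_exp (a p)]
  -- Euler product
  have hf1 : f 1 = 1 := by simp [hf]
  have hmul : ∀ {m n : ℕ}, Nat.Coprime m n → f (m * n) = f m * f n := by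
    intro m n _
    simp only [hf, Nat.cast_mul]
    exact Real.mul_rpow (Nat.cast_nonneg m) (Nat.cast_nonneg n)
  have hpowf : ∀ p e : ℕ, f (p ^ e) = ((p:ℝ) ^ (-t)) ^ e := by
    intro p e
    simp only [hf, Nat.cast_pow]
    rw [← Real.rpow_natCast ((p:ℝ)) e, ← Real.rpow_mul (Nat.cast_nonneg p),
      mul_comm, Real.rpow_mul (Nat.cast_nonneg p), Real.rpow_natCast]
  have hsum : ∀ {p : ℕ}, p.Prime → Summable (fun e : ℕ => ‖f (p ^ e)‖) := by
    intro p hp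
    have hg := summable_geometric_of_lt_one (hppos p hp).le (hplt p hp)
    refine hg.congr fun e => ?_
    rw [hpowf, Real.norm_of_nonneg (by positivity)]
  -- key: finite sum of f over T N is at most exp (P N)
  have hstep1 : ∀ N, ∑ s ∈ T N, f s ≤ Real.exp (P N) := by
    intro N
    obtain ⟨hsummable, hhs⟩ :=
      EulerProduct.summable_and_hasSum_factoredNumbers_prod_filter_prime_tsum
        (f := f) hf1 hmul hsum (F N)
    have hFprime : (F N).filter Nat.Prime = F N := by
      apply Finset.filter_true_of_mem
      intro p hp
      exact ((Finset.mem_filter.mp hp).2).1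
    have hTsub : ∀ s ∈ T N, s ∈ Nat.factoredNumbers (F N) := by
      intro s hs
      obtain ⟨hslt, hsS⟩ := Finset.mem_filter.mp hs
      refine Nat.mem_factoredNumbers.mpr ⟨fun h => h0S (h ▸ hsS), fun p hpl => ?_⟩
      have hp := Nat.prime_of_mem_primeFactorsList hpl
      have hdvd := Nat.dvd_of_mem_primeFactorsList hpl
      have hspos : 0 < s := Nat.pos_of_ne_zero fun h => h0S (h ▸ hsS)
      refine Finset.mem_filter.mpr ⟨Finset.mem_range.mpr ?_, hp, s, hsS, hdvd⟩
      have hle := Nat.le_of_dvd hspos hdvd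
      rw [Finset.mem_range] at hslt
      omega
    have hsum_sub : Summable ((Nat.factoredNumbers (F N)).indicator f) :=
      summable_subtype_iff_indicator.mp hhs.summable
    have h1 : ∑ s ∈ T N, f s ≤ ∑' m : ℕ, (Nat.factoredNumbers (F N)).indicator f m := by
      calc ∑ s ∈ T N, f s = ∑ s ∈ T N, (Nat.factoredNumbers (F N)).indicator f s := by
            refine Finset.sum_congr rfl fun s hs => ?_
            rw [Set.indicator_of_mem (hTsub s hs)]
        _ ≤ ∑' m : ℕ, (Nat.factoredNumbers (F N)).indicator f m :=
            Summable.sum_le_tsum _ (fun i _ => Set.indicator_nonneg (fun m _ => hfnonneg m) i)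
              hsum_sub
    have h2 : ∑' m : ℕ, (Nat.factoredNumbers (F N)).indicator f m
        = ∏ p ∈ (F N).filter Nat.Prime, ∑' e : ℕ, f (p ^ e) := by
      rw [← tsum_subtype]
      exact hhs.tsum_eq
    have h3 : ∏ p ∈ (F N).filter Nat.Prime, ∑' e : ℕ, f (p ^ e)
        = ∏ p ∈ F N, (1 - (p:ℝ) ^ (-t))⁻¹ := by
      rw [hFprime]
      refine Finset.prod_congr rfl fun p hp => ?_
      have hp' := ((Finset.mem_filter.mp hp).2).1
      calc ∑' e : ℕ, f (p ^ e) = ∑' e : ℕ, ((p:ℝ) ^ (-t)) ^ e :=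
            tsum_congr fun e => hpowf p e
        _ = (1 - (p:ℝ) ^ (-t))⁻¹ := tsum_geometric_of_lt_one (hppos p hp').le (hplt p hp')
    calc ∑ s ∈ T N, f s ≤ _ := h1
      _ = _ := h2
      _ = _ := h3
      _ ≤ Real.exp (P N) := hexp N
  -- Abel-summation lower bound for the finite sum
  have hTm : ∀ m : ℕ, 0 < m → K * (m:ℝ) ^ t ≤ ((T m).card : ℝ) := by
    intro m hm
    have hc := hcard m hm
    have hset : {s ∈ S | s ≤ m} = ↑(T m) := by
      ext s
      simp only [Set.mem_setOf_eq, hT, Finset.coe_filter, Finset.mem_range,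
        Set.mem_setOf_eq]
      constructor
      · rintro ⟨h1, h2⟩; exact ⟨by omega, h1⟩
      · rintro ⟨h1, h2⟩; exact ⟨h2, by omega⟩
    rw [hset, Set.ncard_coe_finset] at hc
    exact hc
  have hdelta : ∀ m : ℕ, 0 < m →
      K * (t * (1 / ((m:ℝ) + 1))) ≤ ((T m).card : ℝ) * (f m - f (m + 1)) := by
    intro m hm
    have hm0 : (0:ℝ) < m := by exact_mod_cast hm
    have hfm : 0 ≤ f m - f (m + 1) := by
      simp only [hf]
      have hle : ((m + 1 : ℕ):ℝ) ^ (-t) ≤ (m:ℝ) ^ (-t) :=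
        Real.rpow_le_rpow_of_nonpos hm0 (by push_cast; linarith) (by linarith)
      linarith
    have key : t * (1 / ((m:ℝ) + 1)) ≤ (m:ℝ) ^ t * (f m - f (m + 1)) := by
      have hx : (0:ℝ) ≤ (m:ℝ) / ((m:ℝ) + 1) := by positivity
      have hgm := Real.geom_mean_le_arith_mean2_weighted
        (by linarith : (0:ℝ) ≤ 1 - t) ht0.le zero_le_one hx (by ring)
      rw [Real.one_rpow, one_mul, mul_one] at hgm
      have hprod : (m:ℝ) ^ t * (f m - f (m + 1)) = 1 - ((m:ℝ) / ((m:ℝ) + 1)) ^ t := by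
        simp only [hf]
        push_cast
        rw [mul_sub, Real.rpow_neg hm0.le, Real.rpow_neg (by linarith),
          Real.div_rpow hm0.le (by linarith),
          mul_inv_cancel₀ (by positivity), div_eq_mul_inv]
      rw [hprod]
      have h1x : (m:ℝ) / ((m:ℝ) + 1) = 1 - 1 / ((m:ℝ) + 1) := by
        field_simp
        ring
      rw [h1x] at hgm ⊢
      nlinarith [hgm]
    calc K * (t * (1 / ((m:ℝ) + 1))) ≤ K * ((m:ℝ) ^ t * (f m - f (m + 1))) :=
          mul_le_mul_of_nonneg_left key hK.le
      _ = (K * (m:ℝ) ^ t) * (f m - f (m + 1)) := by ring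
      _ ≤ ((T m).card : ℝ) * (f m - f (m + 1)) :=
          mul_le_mul_of_nonneg_right (hTm m hm) hfm
  have hstep2 : ∀ N : ℕ,
      K * t * (∑ m ∈ Finset.Icc 1 N, 1 / ((m:ℝ) + 1)) ≤ ∑ s ∈ T N, f s := by
    intro N
    have hs1 : ∀ s ∈ T N, 1 ≤ s ∧ s ≤ N := by
      intro s hs
      obtain ⟨h1, h2⟩ := Finset.mem_filter.mp hs
      rw [Finset.mem_range] at h1
      have hs0 : s ≠ 0 := fun h => h0S (h ▸ h2)
      omega
    have step_a : ∀ s ∈ T N, ∑ m ∈ Finset.Icc s N, (f m - f (m + 1)) =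
        ∑ m ∈ Finset.Icc 1 N, (if s ≤ m then f m - f (m + 1) else 0) := by
      intro s hs
      rw [← Finset.sum_filter]
      congr 1
      ext m
      simp only [Finset.mem_filter, Finset.mem_Icc]
      have := hs1 s hs
      omega
    have e1 : ∀ m ∈ Finset.Icc 1 N, (T N).filter (fun s => s ≤ m) = T m := by
      intro m hm
      rw [Finset.mem_Icc] at hm
      ext s
      simp only [hT, Finset.mem_filter, Finset.mem_range]
      constructor
      · rintro ⟨⟨h1, h2⟩, h3⟩; exact ⟨by omega, h2⟩
      · rintro ⟨h1, h2⟩; exact ⟨⟨by omega, h2⟩, by omega⟩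
    calc K * t * (∑ m ∈ Finset.Icc 1 N, 1 / ((m:ℝ) + 1))
        = ∑ m ∈ Finset.Icc 1 N, K * (t * (1 / ((m:ℝ) + 1))) := by
          rw [Finset.mul_sum]; exact Finset.sum_congr rfl fun m _ => by ring
      _ ≤ ∑ m ∈ Finset.Icc 1 N, ((T m).card : ℝ) * (f m - f (m + 1)) := by
          refine Finset.sum_le_sum fun m hm => ?_
          exact hdelta m (by rw [Finset.mem_Icc] at hm; omega)
      _ = ∑ m ∈ Finset.Icc 1 N, ∑ s ∈ T N, (if s ≤ m then f m - f (m + 1) else 0) := by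
          refine Finset.sum_congr rfl fun m hm => ?_
          rw [← Finset.sum_filter, e1 m hm, Finset.sum_const, nsmul_eq_mul]
      _ = ∑ s ∈ T N, ∑ m ∈ Finset.Icc 1 N, (if s ≤ m then f m - f (m + 1) else 0) :=
          Finset.sum_comm
      _ = ∑ s ∈ T N, ∑ m ∈ Finset.Icc s N, (f m - f (m + 1)) :=
          Finset.sum_congr rfl fun s hs => (step_a s hs).symm
      _ = ∑ s ∈ T N, (f s - f (N + 1)) :=
          Finset.sum_congr rfl fun s hs => tele_sum f s N (by have := hs1 s hs; omega)
      _ ≤ ∑ s ∈ T N, f s := by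
          refine Finset.sum_le_sum fun s _ => ?_
          have := hfnonneg (N + 1); linarith
  -- harmonic divergence
  have hH : Filter.Tendsto
      (fun N : ℕ => K * t * (∑ m ∈ Finset.Icc 1 N, 1 / ((m:ℝ) + 1)))
      Filter.atTop Filter.atTop := by
    apply Filter.Tendsto.const_mul_atTop (by positivity : (0:ℝ) < K * t)
    have h0 : ∀ N : ℕ, ∑ m ∈ Finset.Icc 1 N, 1 / ((m:ℝ) + 1)
        = (∑ i ∈ Finset.range (N + 1), 1 / ((i:ℝ) + 1)) - 1 := by
      intro N
      have hr : Finset.range (N + 1) = insert 0 (Finset.Icc 1 N) := by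
        ext m; simp only [Finset.mem_range, Finset.mem_insert, Finset.mem_Icc]; omega
      rw [hr, Finset.sum_insert (by simp)]
      push_cast
      ring
    simp only [h0]
    have htend : Filter.Tendsto
        (fun N : ℕ => ∑ i ∈ Finset.range (N + 1), 1 / ((i:ℝ) + 1))
        Filter.atTop Filter.atTop :=
      Real.tendsto_sum_range_one_div_nat_succ_atTop.comp (Filter.tendsto_add_atTop_nat 1)
    exact Filter.tendsto_atTop_add_const_right _ (-1) htend
  -- conclusion
  apply Filter.tendsto_atTop_atTop_of_monotone hPmono
  intro C
  obtain ⟨N, hN⟩ := (hH.eventually_ge_atTop (Real.exp C)).exists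
  refine ⟨N, ?_⟩
  have h1 : Real.exp C ≤ Real.exp (P N) := le_trans hN (le_trans (hstep2 N) (hstep1 N))
  exact Real.exp_le_exp.mp h1
end

section
/- Let Q be a nonconstant polynomial with integer coefficients. Then the set of primes p such that p divides Q(n) for some positive integer n with Q(n) ≠ 0 is infinite. -/
/-!
Euclid's argument (Schur). Given finitely many primes with product `P`, pick `n₀ > 0` with
`c = Q(n₀) ≠ 0`. Since `x - y ∣ Q(x) - Q(y)`, at `x = n₀ + c²Pm` we get `Q(x) = c · w` with
`w ≡ 1 mod P`, so no prime of the list divides `w`. For `m` large `|Q(x)| > |c|`, so `|w| > 1` and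
any prime factor of `w` is a new prime dividing a nonzero value of `Q` at a positive integer.
-/

open Polynomial

namespace Polynomial

theorem exists_pos_natCast_eval_ne_zero {R : Type*} [CommRing R] [IsDomain R] [CharZero R]
    {Q : R[X]} (hQ : Q ≠ 0) : ∃ n : ℕ, 0 < n ∧ Q.eval (n : R) ≠ 0 := by
  have hroots : {n : ℕ | Q.eval (n : R) = 0}.Finite :=
    (finite_setOfPred_isRoot hQ).preimage Nat.cast_injective.injOn
  obtain ⟨n, hn, hpos⟩ := hroots.infinite_compl.exists_gt 0
  exact ⟨n, hpos, hn⟩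

theorem exists_eval_add_eval_mul_eq {R : Type*} [CommRing R] (Q : R[X]) (a d : R) :
    ∃ k, Q.eval (a + Q.eval a * d) = Q.eval a * (1 + d * k) := by
  obtain ⟨k, hk⟩ := sub_dvd_eval_sub (a + Q.eval a * d) a Q
  exact ⟨k, by linear_combination hk⟩

theorem exists_lt_abs_eval_of_injective {Q : ℤ[X]} (hQ : 0 < Q.degree) {z : ℕ → ℤ}
    (hz : z.Injective) (B : ℤ) : ∃ m, B < |Q.eval (z m)| := by
  have hsmall : {x : ℤ | |Q.eval x| ≤ |(C B).eval x|}.Finite :=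
    finite_abs_eval_le_of_degree_lt (degree_C_le.trans_lt hQ)
  obtain ⟨m, hm⟩ := (hsmall.preimage hz.injOn).infinite_compl.nonempty
  replace hm : |B| < |Q.eval (z m)| := by simpa using hm
  exact ⟨m, (le_abs_self B).trans_lt hm⟩

end Polynomial

theorem Int.exists_prime_dvd_one_add_prod_mul {S : Finset ℕ} {t : ℤ}
    (ht : (1 + (∏ p ∈ S, (p : ℤ)) * t).natAbs ≠ 1) :
    ∃ p ∉ S, p.Prime ∧ (p : ℤ) ∣ 1 + (∏ p ∈ S, (p : ℤ)) * t := by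
  set p := (1 + (∏ p ∈ S, (p : ℤ)) * t).natAbs.minFac
  have hp : p.Prime := Nat.minFac_prime ht
  have hpw : (p : ℤ) ∣ 1 + (∏ p ∈ S, (p : ℤ)) * t := Int.natCast_dvd.mpr (Nat.minFac_dvd _)
  refine ⟨p, fun hpS => hp.not_dvd_one ?_, hp, hpw⟩
  have hpP : (p : ℤ) ∣ (∏ p ∈ S, (p : ℤ)) * t :=
    (Finset.dvd_prod_of_mem (fun p : ℕ => (p : ℤ)) hpS).mul_right t
  exact Int.natCast_dvd_natCast.mp ((dvd_add_left hpP).mp hpw)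

theorem Polynomial.exists_prime_notMem_dvd_eval {Q : ℤ[X]} (hQ : 0 < Q.degree) {S : Finset ℕ}
    (hS : ∀ p ∈ S, p.Prime) :
    ∃ p ∉ S, p.Prime ∧ ∃ n : ℕ, 0 < n ∧ Q.eval (n : ℤ) ≠ 0 ∧ (p : ℤ) ∣ Q.eval (n : ℤ) := by
  obtain ⟨n₀, hn₀, hc⟩ := exists_pos_natCast_eval_ne_zero (ne_zero_of_degree_gt hQ)
  set c := Q.eval (n₀ : ℤ)
  set P := ∏ p ∈ S, (p : ℤ)
  have hP : P ≠ 0 := Finset.prod_ne_zero_iff.mpr fun p hp => by exact_mod_cast (hS p hp).ne_zero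
  set z : ℕ → ℕ := fun m => n₀ + c.natAbs * c.natAbs * (∏ p ∈ S, p) * m
  have hz (m : ℕ) : (z m : ℤ) = n₀ + c * (c * P * m) := by
    simp only [z, P]; push_cast; rw [abs_mul_abs_self]; ring
  have hz_inj : (fun m => (z m : ℤ)).Injective := fun a b h => by
    have h' : c * c * P * a = c * c * P * b := by simp only [hz] at h; linear_combination h
    exact_mod_cast mul_left_cancel₀ (mul_ne_zero (mul_ne_zero hc hc) hP) h'
  obtain ⟨m, hm⟩ := exists_lt_abs_eval_of_injective hQ hz_inj |c|
  obtain ⟨k, hk⟩ := exists_eval_add_eval_mul_eq Q n₀ (c * P * m)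
  have hQz : Q.eval (z m : ℤ) = c * (1 + P * (c * m * k)) := by rw [hz, hk]; ring
  have hw : (1 + P * (c * m * k)).natAbs ≠ 1 := fun h => by
    rw [hQz, abs_mul, Int.abs_eq_natAbs (1 + _), h] at hm
    simp at hm
  obtain ⟨p, hpS, hp, hpw⟩ := Int.exists_prime_dvd_one_add_prod_mul hw
  refine ⟨p, hpS, hp, z m, hn₀.trans_le (Nat.le_add_right _ _), ?_, ?_⟩
  · exact abs_pos.mp ((abs_nonneg c).trans_lt hm)
  · rw [hQz]
    exact hpw.mul_left c

theorem gotchev (Q : Polynomial ℤ) (hQ : 1 ≤ Q.degree) :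
    {p : ℕ | p.Prime ∧ ∃ n : ℕ, 0 < n ∧ Q.eval (n : ℤ) ≠ 0 ∧
      (p : ℤ) ∣ Q.eval (n : ℤ)}.Infinite := by
  intro hfin
  obtain ⟨p, hpS, hp⟩ := exists_prime_notMem_dvd_eval (zero_lt_one.trans_le hQ)
    (S := hfin.toFinset) fun p hp => (hfin.mem_toFinset.mp hp).1
  exact hpS (hfin.mem_toFinset.mpr hp)
end
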